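/- arXiv:0909.5253 — 11 statements merged into one kernel-verified Lean document; each statement's English description precedes it below -/
import Mathlib

section
/- Let p(x) be a monic irreducible polynomial with integer coefficients of degree n all of whose roots are real and lie in the interval [-κ, κ], where κ ≥ 2. If p has at least two roots, and t ≥ 2 of its roots lie in a closed interval of length ζ with 0 < ζ < 1, then setting τ = t/n we have τ² ≤ -2·ln(2κ)/ln(ζ). -/
/-!
For distinct roots `α₁, …, αₙ` of the monic polynomial `p`, the product `∏_{i ≠ j} (αᵢ - αⱼ)`
equals `∏ᵢ p'(αᵢ) = Res(p, p')`, an integer; it is nonzero because `p` is separable, so its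
absolute value is at least `1`. Bounding the `t(t-1)` factors from pairs inside the cluster by `ζ`
and all the others by `2κ` gives `1 ≤ ζ^(t(t-1)) (2κ)^(n(n-1))`; taking logarithms and using
`t² ≤ 2t(t-1)` yields the bound.
-/

open Polynomial

namespace Polynomial

variable {R K : Type*} [CommRing R] [Field K]

theorem prod_roots_eval_derivative_eq_resultant {p : R[X]} (hp : p.Monic) (φ : R →+* K)
    (hs : (p.map φ).Splits) :
    ((p.map φ).roots.map (p.map φ).derivative.eval).prod = φ (p.resultant p.derivative) := by
  rw [← resultant_map_map, derivative_map, ← hp.natDegree_map φ,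
    resultant_eq_prod_eval _ _ _ natDegree_map_le hs, (hp.map φ).leadingCoeff, one_pow, one_mul]

theorem prod_roots_eval_derivative_eq_prod_offDiag [DecidableEq K] {q : K[X]} (hm : q.Monic)
    (hs : q.Splits) (hnd : q.roots.Nodup) :
    (q.roots.map q.derivative.eval).prod = ∏ z ∈ q.roots.toFinset.offDiag, (z.1 - z.2) := by
  have hval : q.roots.toFinset.val = q.roots := hnd.dedup
  rw [Finset.prod_finset_product _ q.roots.toFinset (fun x => q.roots.toFinset.erase x)
    (fun z => by simp only [Finset.mem_offDiag, Finset.mem_erase]; tauto),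
    Finset.prod_eq_multiset_prod, hval]
  refine congrArg Multiset.prod (Multiset.map_congr rfl fun x hx => ?_)
  rw [hs.eval_root_derivative hm hx, Finset.prod_eq_multiset_prod, Finset.erase_val, hval]

theorem one_le_abs_prod_roots_eval_derivative [LinearOrder K] [IsStrictOrderedRing K]
    {p : ℤ[X]} (hp : p.Monic) (hs : (p.map (Int.castRingHom K)).Splits)
    (hsep : (p.map (Int.castRingHom K)).Separable) :
    1 ≤ |((p.map (Int.castRingHom K)).roots.map
      (p.map (Int.castRingHom K)).derivative.eval).prod| := by
  rw [prod_roots_eval_derivative_eq_resultant hp _ hs, eq_intCast, ← Int.cast_abs]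
  refine Int.cast_one_le_of_pos (Int.one_le_abs fun h0 => ?_)
  have hzero : (0 : K) ∈ (p.map (Int.castRingHom K)).roots.map
      (p.map (Int.castRingHom K)).derivative.eval := by
    rw [← Multiset.prod_eq_zero_iff, prod_roots_eval_derivative_eq_resultant hp _ hs, h0, map_zero]
  obtain ⟨x, hx, hx0⟩ := Multiset.mem_map.mp hzero
  exact hsep.eval₂_derivative_ne_zero (RingHom.id K) (isRoot_of_mem_roots hx) hx0

variable (K) in
theorem separable_map_intCast_of_irreducible [CharZero K] {p : ℤ[X]}
    (hp : p.IsPrimitive) (hirr : Irreducible p) : (p.map (Int.castRingHom K)).Separable := by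
  have hQ := ((IsPrimitive.Int.irreducible_iff_irreducible_map_cast hp).mp hirr).separable.map
    (f := algebraMap ℚ K)
  rwa [map_map, RingHom.ext_int ((algebraMap ℚ K).comp (Int.castRingHom ℚ))] at hQ

end Polynomial

open Finset

theorem Finset.prod_le_pow_card_mul_pow_card {ι R : Type*} [CommSemiring R] [PartialOrder R]
    [IsOrderedRing R] {s t : Finset ι} (hts : t ⊆ s) {f : ι → R} {c M : R}
    (hf : ∀ i ∈ s, 0 ≤ f i) (hc : ∀ i ∈ t, f i ≤ c) (hM : ∀ i ∈ s, f i ≤ M) (hM1 : 1 ≤ M) :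
    ∏ i ∈ s, f i ≤ c ^ #t * M ^ #s := by
  classical
  rw [← prod_sdiff hts, mul_comm (c ^ _)]
  refine mul_le_mul ?_ ?_ (prod_nonneg fun i hi => hf i (hts hi))
    (pow_nonneg (zero_le_one.trans hM1) _)
  · calc ∏ i ∈ s \ t, f i ≤ ∏ _i ∈ s \ t, M :=
          prod_le_prod (fun i hi => hf i (sdiff_subset hi)) fun i hi => hM i (sdiff_subset hi)
      _ = M ^ #(s \ t) := prod_const M
      _ ≤ M ^ #s := pow_le_pow_right₀ hM1 (card_le_card sdiff_subset)
  · calc ∏ i ∈ t, f i ≤ ∏ _i ∈ t, c := prod_le_prod (fun i hi => hf i (hts hi)) hc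
      _ = c ^ #t := prod_const c

theorem sq_div_le_of_one_le_pow_mul_pow {n t : ℕ} {M ζ : ℝ} (hn : 0 < n) (ht : 2 ≤ t)
    (hM : 1 < M) (hζ0 : 0 < ζ) (hζ1 : ζ < 1) (h : 1 ≤ ζ ^ (t * t - t) * M ^ (n * n - n)) :
    ((t : ℝ) / n) ^ 2 ≤ -2 * Real.log M / Real.log ζ := by
  have hlogζ : Real.log ζ < 0 := Real.log_neg hζ0 hζ1
  have hlogM : 0 < Real.log M := Real.log_pos hM
  have hlog : 0 ≤ ((t * t - t : ℕ) : ℝ) * Real.log ζ + ((n * n - n : ℕ) : ℝ) * Real.log M := by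
    have := Real.log_nonneg h
    rwa [Real.log_mul (by positivity) (by positivity), Real.log_pow, Real.log_pow] at this
  push_cast [Nat.le_mul_self] at hlog
  have htR : (2 : ℝ) ≤ t := by exact_mod_cast ht
  rw [div_pow, neg_mul, neg_div, ← div_neg, div_le_div_iff₀ (by positivity) (by linarith)]
  nlinarith [mul_nonneg (mul_nonneg (sub_nonneg.mpr htR) (Nat.cast_nonneg t))
      (neg_nonneg.mpr hlogζ.le), mul_nonneg (Nat.cast_nonneg n) hlogM.le]

theorem stmt_0 (κ ζ a : ℝ) (hκ : 2 ≤ κ) (hζ0 : 0 < ζ) (hζ1 : ζ < 1)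
    (p : Polynomial ℤ) (hmonic : p.Monic) (hirr : Irreducible p)
    (n : ℕ) (hn : p.natDegree = n) (hn2 : 2 ≤ n)
    (hsplit : ((p.map (Int.castRingHom ℝ)).roots).card = n)
    (hroots : ∀ x ∈ (p.map (Int.castRingHom ℝ)).roots, -κ ≤ x ∧ x ≤ κ)
    (t : ℕ)
    (ht : t = ((p.map (Int.castRingHom ℝ)).roots.filter
        (fun x => a ≤ x ∧ x ≤ a + ζ)).card)
    (ht2 : 2 ≤ t) :
    ((t : ℝ) / n) ^ 2 ≤ -2 * Real.log (2 * κ) / Real.log ζ := by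
  set q := p.map (Int.castRingHom ℝ)
  have hsep : q.Separable := separable_map_intCast_of_irreducible ℝ hmonic.isPrimitive hirr
  have hsplits : q.Splits := splits_iff_card_roots.mpr (by rw [hsplit, hmonic.natDegree_map, hn])
  have hnd : q.roots.Nodup := nodup_roots hsep
  set S := q.roots.toFinset
  set T := S.filter fun x => a ≤ x ∧ x ≤ a + ζ
  have hS : S.val = q.roots := hnd.dedup
  have hdisc : 1 ≤ ∏ z ∈ S.offDiag, dist z.1 z.2 := by
    simp only [Real.dist_eq]
    rw [← abs_prod, ← prod_roots_eval_derivative_eq_prod_offDiag (hmonic.map _) hsplits hnd]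
    exact one_le_abs_prod_roots_eval_derivative hmonic hsplits hsep
  have hbound := prod_le_pow_card_mul_pow_card (offDiag_mono (filter_subset _ S : T ⊆ S))
    (fun z _ => dist_nonneg) (c := ζ) (M := 2 * κ)
    (fun z hz => by
      obtain ⟨hx, hy, -⟩ := mem_offDiag.mp hz
      exact (Real.dist_le_of_mem_Icc (mem_filter.mp hx).2 (mem_filter.mp hy).2).trans_eq
        (add_sub_cancel_left a ζ))
    (fun z hz => by
      obtain ⟨hx, hy, -⟩ := mem_offDiag.mp hz
      exact (Real.dist_le_of_mem_Icc (hroots _ (Multiset.mem_toFinset.mp hx))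
        (hroots _ (Multiset.mem_toFinset.mp hy))).trans_eq (by ring))
    (by linarith)
  have hScard : #S = n := by rw [← hsplit, ← hS]; rfl
  have hTcard : #T = t := by rw [ht, ← hS]; rfl
  rw [offDiag_card, offDiag_card, hScard, hTcard] at hbound
  exact sq_div_le_of_one_le_pow_mul_pow (by omega) ht2 (by linarith) hζ0 hζ1 (hdisc.trans hbound)
end

section
/- Let q₁(x), q₂(x) ∈ ℝ[x] be monic quadratic polynomials that are not squares of linear polynomials, and let I ⊆ ℝ be the largest interval on which both q₁ and q₂ are nonnegative. Let P₁, P₂, P₃, P₄ ∈ ℝ[x] with C := max deg(P_j) ≥ 0, and define P(x) := P₁(x) + P₂(x)√(q₁(x)) + P₃(x)√(q₂(x)) + P₄(x)√(q₁(x)q₂(x)) for x ∈ I. Then either P(x) = 0 has at most 4(C+2) solutions in I, or q₁ = q₂ identically and both P₂ + P₃ and P₁ + q₁·P₄ are the zero polynomial, in which case P vanishes identically on I. -/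
open Polynomial

/-- If `r` is not a square in `ℝ[X]` and `u ^ 2 = r * v ^ 2`, then `v = 0`. -/
private lemma nonsq_aux {r u v : Polynomial ℝ} (hr0 : r ≠ 0) (hrs : ¬ IsSquare r)
    (h : u ^ 2 = r * v ^ 2) : v = 0 := by
  by_contra hv
  have hu : u ≠ 0 := by
    rintro rfl
    have h0 : r * v ^ 2 = 0 := by linear_combination -h
    rcases mul_eq_zero.1 h0 with h' | h'
    · exact hr0 h'
    · exact hv ((pow_eq_zero_iff two_ne_zero).1 h')
  obtain ⟨u₀, v₀, d, hcop, hu₀, hv₀⟩ :=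
    UniqueFactorizationMonoid.exists_reduced_factors u hu v
  have hd : d ≠ 0 := by
    rintro rfl
    rw [zero_mul] at hu₀
    exact hu hu₀.symm
  have key : u₀ ^ 2 = r * v₀ ^ 2 := by
    have h2 : d ^ 2 * u₀ ^ 2 = d ^ 2 * (r * v₀ ^ 2) := by
      rw [← hu₀, ← hv₀] at h
      linear_combination h
    exact mul_left_cancel₀ (pow_ne_zero 2 hd) h2
  have hdvd : v₀ ∣ u₀ ^ 2 := ⟨r * v₀, by rw [key]; ring⟩
  have hunit : IsUnit v₀ :=
    ((hcop.isCoprime.symm).pow_right (n := 2)).isUnit_of_dvd hdvd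
  obtain ⟨c, hc⟩ := isUnit_iff_exists_inv.1 hunit
  refine hrs ⟨u₀ * c, ?_⟩
  have : r * (v₀ * c) ^ 2 = (u₀ * c) * (u₀ * c) := by
    linear_combination c ^ 2 * key.symm
  rw [hc] at this
  linear_combination this

/-- A monic quadratic that is not a square of a linear polynomial is not a square. -/
private lemma nonsq_of (q : Polynomial ℝ) (hm : q.Monic) (hd : q.natDegree = 2)
    (hsq : ¬ ∃ l : Polynomial ℝ, l.natDegree = 1 ∧ q = l ^ 2) : ¬ IsSquare q := by
  rintro ⟨s, rfl⟩
  have hs0 : s ≠ 0 := by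
    rintro rfl
    simp at hd
  have hds : s.natDegree = 1 := by
    have := natDegree_mul hs0 hs0
    omega
  exact hsq ⟨s, hds, (sq s).symm⟩

/-- A monic quadratic that is not a square of a linear polynomial is squarefree. -/
private lemma sqfree_of (q : Polynomial ℝ) (hm : q.Monic) (hd : q.natDegree = 2)
    (hsq : ¬ ∃ l : Polynomial ℝ, l.natDegree = 1 ∧ q = l ^ 2) : Squarefree q := by
  by_contra h
  rw [Squarefree] at h
  push_neg at h
  obtain ⟨x, hdvd, hxu⟩ := h
  have hq0 : q ≠ 0 := hm.ne_zero
  have hx0 : x ≠ 0 := by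
    rintro rfl
    rw [mul_zero] at hdvd
    exact hq0 (zero_dvd_iff.1 hdvd)
  obtain ⟨c, hc⟩ := hdvd
  have hc0 : c ≠ 0 := by
    rintro rfl
    rw [mul_zero] at hc
    exact hq0 hc
  have hdegs : 2 = x.natDegree + x.natDegree + c.natDegree := by
    have h1 : q.natDegree = (x * x * c).natDegree := by rw [← hc]
    rw [natDegree_mul (mul_ne_zero hx0 hx0) hc0, natDegree_mul hx0 hx0] at h1
    omega
  have hxd0 : x.natDegree ≠ 0 := by
    intro h0
    have hxC : x = C (x.coeff 0) := eq_C_of_natDegree_eq_zero h0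
    have hcoeff : x.coeff 0 ≠ 0 := fun hco => hx0 (by rw [hxC, hco, map_zero])
    exact hxu (hxC ▸ isUnit_C.2 (isUnit_iff_ne_zero.2 hcoeff))
  have hxd : x.natDegree = 1 := by omega
  have hcd : c.natDegree = 0 := by omega
  obtain ⟨γ, hγc⟩ : ∃ a : ℝ, c = C a := ⟨c.coeff 0, eq_C_of_natDegree_eq_zero hcd⟩
  subst hγc
  have hγ0 : γ ≠ 0 := by simpa using hc0
  have hlc : 1 = x.leadingCoeff * x.leadingCoeff * γ := by
    have := congrArg leadingCoeff hc
    rw [hm.leadingCoeff, leadingCoeff_mul, leadingCoeff_mul, leadingCoeff_C] at this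
    exact this
  have hγpos : 0 < γ := by nlinarith [sq_nonneg x.leadingCoeff]
  refine hsq ⟨C (Real.sqrt γ) * x, ?_, ?_⟩
  · rw [natDegree_C_mul (by positivity : Real.sqrt γ ≠ 0), hxd]
  · rw [hc]
    have : (C (Real.sqrt γ)) ^ 2 = C γ := by
      rw [← C_pow]
      congr 1
      rw [sq]
      exact Real.mul_self_sqrt hγpos.le
    rw [mul_pow, this]
    ring

/-- If `q₁ ≠ q₂` are distinct monic non-square quadratics, `q₁ * q₂` is not a square. -/
private lemma nonsq_mul (q₁ q₂ : Polynomial ℝ) (hq₁m : q₁.Monic) (hq₂m : q₂.Monic)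
    (hq₁d : q₁.natDegree = 2) (hq₂d : q₂.natDegree = 2)
    (hq₁sq : ¬ ∃ l : Polynomial ℝ, l.natDegree = 1 ∧ q₁ = l ^ 2)
    (hne : q₁ ≠ q₂) : ¬ IsSquare (q₁ * q₂) := by
  rintro ⟨s, hs⟩
  have hq10 : q₁ ≠ 0 := hq₁m.ne_zero
  have hq20 : q₂ ≠ 0 := hq₂m.ne_zero
  have hs0 : s ≠ 0 := by
    rintro rfl
    rw [mul_zero] at hs
    exact mul_ne_zero hq10 hq20 hs
  have hsf : Squarefree q₁ := sqfree_of q₁ hq₁m hq₁d hq₁sq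
  have hdvd : q₁ ∣ s := by
    rw [← hsf.dvd_pow_iff_dvd (two_ne_zero)]
    exact ⟨q₂, by rw [sq, ← hs]⟩
  obtain ⟨c, hc⟩ := hdvd
  have hc0 : c ≠ 0 := by
    rintro rfl
    rw [mul_zero] at hc
    exact hs0 hc
  have hcd : c.natDegree = 0 := by
    have h1 : (q₁ * q₂).natDegree = (s * s).natDegree := by rw [hs]
    rw [natDegree_mul hq10 hq20, natDegree_mul hs0 hs0, hc,
      natDegree_mul hq10 hc0] at h1
    omega
  obtain ⟨γ, hγc⟩ : ∃ a : ℝ, c = C a := ⟨c.coeff 0, eq_C_of_natDegree_eq_zero hcd⟩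
  subst hγc
  have hq2 : q₂ = q₁ * C (γ * γ) := by
    apply mul_left_cancel₀ hq10
    rw [hs, hc, C_mul]
    ring
  have hγ1 : γ * γ = 1 := by
    have := congrArg leadingCoeff hq2
    rw [hq₂m.leadingCoeff, leadingCoeff_mul, hq₁m.leadingCoeff, leadingCoeff_C] at this
    linarith
  rw [hγ1, C_1, mul_one] at hq2
  exact hne hq2.symm

/-- Counting lemma: a set contained in the zeros of a nonzero polynomial is finite
with cardinality at most the degree. -/
private lemma count_aux (W : Polynomial ℝ) (hW : W ≠ 0) (S : Set ℝ)
    (hS : ∀ x ∈ S, W.eval x = 0) {n : ℕ} (hn : W.natDegree ≤ n) :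
    S.Finite ∧ S.ncard ≤ n := by
  have hsub : S ⊆ ↑W.roots.toFinset := by
    intro x hx
    simp only [Finset.coe_sort_coe, Multiset.mem_toFinset, Finset.mem_coe]
    rw [mem_roots hW]
    exact hS x hx
  have hfin : S.Finite := Set.Finite.subset (W.roots.toFinset.finite_toSet) hsub
  refine ⟨hfin, ?_⟩
  calc S.ncard ≤ (↑W.roots.toFinset : Set ℝ).ncard :=
        Set.ncard_le_ncard hsub (W.roots.toFinset.finite_toSet)
    _ = W.roots.toFinset.card := Set.ncard_coe_finset _
    _ ≤ Multiset.card W.roots := Multiset.toFinset_card_le _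
    _ ≤ W.natDegree := W.card_roots'
    _ ≤ n := hn

theorem stmt_3 (q₁ q₂ : Polynomial ℝ)
    (hq₁m : q₁.Monic) (hq₂m : q₂.Monic)
    (hq₁d : q₁.natDegree = 2) (hq₂d : q₂.natDegree = 2)
    (hq₁sq : ¬ ∃ l : Polynomial ℝ, l.natDegree = 1 ∧ q₁ = l ^ 2)
    (hq₂sq : ¬ ∃ l : Polynomial ℝ, l.natDegree = 1 ∧ q₂ = l ^ 2)
    (I : Set ℝ)
    -- I is an interval on which both q₁ and q₂ are nonnegative ...
    (hI : I.OrdConnected)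
    (hInn : ∀ x ∈ I, 0 ≤ q₁.eval x ∧ 0 ≤ q₂.eval x)
    -- ... and it is the largest such interval
    (hImax : ∀ J : Set ℝ, J.OrdConnected → (∀ x ∈ J, 0 ≤ q₁.eval x ∧ 0 ≤ q₂.eval x) →
        I ⊆ J → J = I)
    (P₁ P₂ P₃ P₄ : Polynomial ℝ) (C : ℕ)
    (hC : (C : WithBot ℕ) = max (max P₁.degree P₂.degree) (max P₃.degree P₄.degree))
    (P : ℝ → ℝ)
    (hP : ∀ x, P x = P₁.eval x + P₂.eval x * Real.sqrt (q₁.eval x)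
        + P₃.eval x * Real.sqrt (q₂.eval x)
        + P₄.eval x * Real.sqrt (q₁.eval x * q₂.eval x)) :
    ({x ∈ I | P x = 0}.Finite ∧ {x ∈ I | P x = 0}.ncard ≤ 4 * (C + 2)) ∨
      (q₁ = q₂ ∧ P₂ + P₃ = 0 ∧ P₁ + q₁ * P₄ = 0 ∧ ∀ x ∈ I, P x = 0) := by
  -- degree bounds for the Pᵢ
  have hd1 : P₁.natDegree ≤ C := natDegree_le_iff_degree_le.mpr
    (by rw [hC]; exact le_trans (le_max_left _ _) (le_max_left _ _))
  have hd2 : P₂.natDegree ≤ C := natDegree_le_iff_degree_le.mpr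
    (by rw [hC]; exact le_trans (le_max_right _ _) (le_max_left _ _))
  have hd3 : P₃.natDegree ≤ C := natDegree_le_iff_degree_le.mpr
    (by rw [hC]; exact le_trans (le_max_left _ _) (le_max_right _ _))
  have hd4 : P₄.natDegree ≤ C := natDegree_le_iff_degree_le.mpr
    (by rw [hC]; exact le_trans (le_max_right _ _) (le_max_right _ _))
  have hq1ns : ¬ IsSquare q₁ := nonsq_of q₁ hq₁m hq₁d hq₁sq
  by_cases hq : q₁ = q₂
  · -- the case q₁ = q₂
    subst hq
    by_cases hW : (P₁ + q₁ * P₄) ^ 2 - q₁ * (P₂ + P₃) ^ 2 = 0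
    · right
      have hB : P₂ + P₃ = 0 := nonsq_aux (u := P₁ + q₁ * P₄) hq₁m.ne_zero hq1ns (by linear_combination hW)
      have hA : P₁ + q₁ * P₄ = 0 := by
        have h2 : (P₁ + q₁ * P₄) ^ 2 = 0 := by
          rw [hB] at hW
          linear_combination hW
        exact (pow_eq_zero_iff two_ne_zero).1 h2
      refine ⟨rfl, hB, hA, fun x hx => ?_⟩
      have h1 : 0 ≤ q₁.eval x := (hInn x hx).1
      have hA' : P₁.eval x + q₁.eval x * P₄.eval x = 0 := by
        have := congrArg (eval x) hA
        simpa using this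
      have hB' : P₂.eval x + P₃.eval x = 0 := by
        have := congrArg (eval x) hB
        simpa using this
      rw [hP x, Real.sqrt_mul_self h1]
      linear_combination hA' + Real.sqrt (q₁.eval x) * hB'
    · left
      refine count_aux _ hW _ ?_ ?_
      · rintro x ⟨hxI, hPx⟩
        have h1 : 0 ≤ q₁.eval x := (hInn x hxI).1
        rw [hP x, Real.sqrt_mul_self h1] at hPx
        simp only [eval_sub, eval_add, eval_mul, eval_pow]
        set s := Real.sqrt (q₁.eval x) with hs_def
        have hs2 : q₁.eval x = s ^ 2 := (Real.sq_sqrt h1).symm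
        rw [hs2] at hPx ⊢
        linear_combination (P₁.eval x + s ^ 2 * P₄.eval x -
          s * (P₂.eval x + P₃.eval x)) * hPx
      · refine le_trans (natDegree_sub_le _ _) (max_le ?_ ?_)
        · refine le_trans natDegree_pow_le ?_
          have : (P₁ + q₁ * P₄).natDegree ≤ C + 2 := by
            refine le_trans (natDegree_add_le _ _) (max_le (by omega) ?_)
            refine le_trans natDegree_mul_le ?_
            omega
          omega
        · refine le_trans natDegree_mul_le ?_
          have : ((P₂ + P₃) ^ 2).natDegree ≤ 2 * C := by
            refine le_trans natDegree_pow_le ?_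
            have : (P₂ + P₃).natDegree ≤ C := le_trans (natDegree_add_le _ _) (by omega)
            omega
          omega
  · -- the case q₁ ≠ q₂ : the full norm-form polynomial G is nonzero
    left
    have hq2ns : ¬ IsSquare q₂ := nonsq_of q₂ hq₂m hq₂d hq₂sq
    have hq12ns : ¬ IsSquare (q₁ * q₂) := nonsq_mul q₁ q₂ hq₁m hq₂m hq₁d hq₂d hq₁sq hq
    have hG : (P₁ ^ 2 + q₁ * P₂ ^ 2 - q₂ * P₃ ^ 2 - q₁ * q₂ * P₄ ^ 2) ^ 2
        - q₁ * (2 * (P₁ * P₂ - q₂ * P₃ * P₄)) ^ 2 ≠ 0 := by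
      intro hG0
      have h1 : (P₁ ^ 2 + q₁ * P₂ ^ 2 - q₂ * P₃ ^ 2 - q₁ * q₂ * P₄ ^ 2) ^ 2
          = q₁ * (2 * (P₁ * P₂ - q₂ * P₃ * P₄)) ^ 2 := by linear_combination hG0
      have h2 : (P₁ ^ 2 + q₂ * P₃ ^ 2 - q₁ * P₂ ^ 2 - q₁ * q₂ * P₄ ^ 2) ^ 2
          = q₂ * (2 * (P₁ * P₃ - q₁ * P₂ * P₄)) ^ 2 := by linear_combination hG0
      have hv1 : (2 : Polynomial ℝ) * (P₁ * P₂ - q₂ * P₃ * P₄) = 0 :=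
        nonsq_aux hq₁m.ne_zero hq1ns h1
      have hu1 : P₁ ^ 2 + q₁ * P₂ ^ 2 - q₂ * P₃ ^ 2 - q₁ * q₂ * P₄ ^ 2 = 0 := by
        have : (P₁ ^ 2 + q₁ * P₂ ^ 2 - q₂ * P₃ ^ 2 - q₁ * q₂ * P₄ ^ 2) ^ 2 = 0 := by
          rw [h1, hv1]; ring
        exact (pow_eq_zero_iff two_ne_zero).1 this
      have hv2 : (2 : Polynomial ℝ) * (P₁ * P₃ - q₁ * P₂ * P₄) = 0 :=
        nonsq_aux hq₂m.ne_zero hq2ns h2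
      have hu2 : P₁ ^ 2 + q₂ * P₃ ^ 2 - q₁ * P₂ ^ 2 - q₁ * q₂ * P₄ ^ 2 = 0 := by
        have : (P₁ ^ 2 + q₂ * P₃ ^ 2 - q₁ * P₂ ^ 2 - q₁ * q₂ * P₄ ^ 2) ^ 2 = 0 := by
          rw [h2, hv2]; ring
        exact (pow_eq_zero_iff two_ne_zero).1 this
      -- combine to get P₁² = q₁q₂ P₄² and q₁ P₂² = q₂ P₃²
      have hA : P₁ ^ 2 = (q₁ * q₂) * P₄ ^ 2 := by
        have h3 : (2 : Polynomial ℝ) * (P₁ ^ 2 - q₁ * q₂ * P₄ ^ 2) = 0 := by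
          linear_combination hu1 + hu2
        have h4 : P₁ ^ 2 - q₁ * q₂ * P₄ ^ 2 = 0 :=
          (mul_eq_zero.1 h3).resolve_left (by norm_num)
        linear_combination h4
      have hB : q₁ * P₂ ^ 2 = q₂ * P₃ ^ 2 := by
        have h3 : (2 : Polynomial ℝ) * (q₁ * P₂ ^ 2 - q₂ * P₃ ^ 2) = 0 := by
          linear_combination hu1 - hu2
        have h4 : q₁ * P₂ ^ 2 - q₂ * P₃ ^ 2 = 0 :=
          (mul_eq_zero.1 h3).resolve_left (by norm_num)
        linear_combination h4
      have hq120 : q₁ * q₂ ≠ 0 := mul_ne_zero hq₁m.ne_zero hq₂m.ne_zero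
      have hP4 : P₄ = 0 := nonsq_aux hq120 hq12ns hA
      have hP1 : P₁ = 0 := by
        have : P₁ ^ 2 = 0 := by rw [hA, hP4]; ring
        exact (pow_eq_zero_iff two_ne_zero).1 this
      have hP2 : P₂ = 0 := by
        refine nonsq_aux hq120 hq12ns (u := q₂ * P₃) ?_
        linear_combination q₂ * hB.symm
      have hP3 : P₃ = 0 := by
        have h5 : q₂ * P₃ ^ 2 = 0 := by rw [← hB, hP2]; ring
        have h6 : P₃ ^ 2 = 0 := (mul_eq_zero.1 h5).resolve_left hq₂m.ne_zero
        exact (pow_eq_zero_iff two_ne_zero).1 h6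
      rw [hP1, hP2, hP3, hP4] at hC
      simp [degree_zero] at hC
    refine count_aux _ hG _ ?_ ?_
    · rintro x ⟨hxI, hPx⟩
      have h1 : 0 ≤ q₁.eval x := (hInn x hxI).1
      have h2 : 0 ≤ q₂.eval x := (hInn x hxI).2
      rw [hP x, Real.sqrt_mul h1] at hPx
      simp only [eval_sub, eval_add, eval_mul, eval_pow, eval_ofNat]
      set s := Real.sqrt (q₁.eval x) with hs_def
      set t := Real.sqrt (q₂.eval x) with ht_def
      have hs2 : q₁.eval x = s ^ 2 := (Real.sq_sqrt h1).symm
      have ht2 : q₂.eval x = t ^ 2 := (Real.sq_sqrt h2).symm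
      rw [hs2, ht2]
      linear_combination ((P₁.eval x + P₂.eval x * s - P₃.eval x * t
          - P₄.eval x * (s * t))
        * ((P₁.eval x - P₂.eval x * s + P₃.eval x * t - P₄.eval x * (s * t))
          * (P₁.eval x - P₂.eval x * s - P₃.eval x * t
            + P₄.eval x * (s * t)))) * hPx
    · -- degree bound
      have hu_deg : (P₁ ^ 2 + q₁ * P₂ ^ 2 - q₂ * P₃ ^ 2 - q₁ * q₂ * P₄ ^ 2).natDegree
          ≤ 2 * C + 4 := by
        refine le_trans (natDegree_sub_le _ _) (max_le ?_ ?_)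
        · refine le_trans (natDegree_sub_le _ _) (max_le ?_ ?_)
          · refine le_trans (natDegree_add_le _ _) (max_le ?_ ?_)
            · exact le_trans natDegree_pow_le (by omega)
            · refine le_trans natDegree_mul_le ?_
              have := natDegree_pow_le (p := P₂) (n := 2)
              omega
          · refine le_trans natDegree_mul_le ?_
            have := natDegree_pow_le (p := P₃) (n := 2)
            omega
        · refine le_trans natDegree_mul_le ?_
          have h5 := natDegree_pow_le (p := P₄) (n := 2)
          have h6 := natDegree_mul_le (p := q₁) (q := q₂)
          omega
      have hv_deg : ((2 : Polynomial ℝ) * (P₁ * P₂ - q₂ * P₃ * P₄)).natDegree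
          ≤ 2 * C + 2 := by
        refine le_trans natDegree_mul_le ?_
        have h7 : (P₁ * P₂ - q₂ * P₃ * P₄).natDegree ≤ 2 * C + 2 := by
          refine le_trans (natDegree_sub_le _ _) (max_le ?_ ?_)
          · exact le_trans natDegree_mul_le (by omega)
          · refine le_trans natDegree_mul_le ?_
            have := natDegree_mul_le (p := q₂) (q := P₃)
            omega
        have h8 : (2 : Polynomial ℝ).natDegree = 0 := by norm_num
        omega
      refine le_trans (natDegree_sub_le _ _) (max_le ?_ ?_)
      · refine le_trans natDegree_pow_le ?_
        omega
      · refine le_trans natDegree_mul_le ?_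
        have := natDegree_pow_le
          (p := (2 : Polynomial ℝ) * (P₁ * P₂ - q₂ * P₃ * P₄)) (n := 2)
        omega
end

section
/- Let κ ≥ 3 and 0 ≤ λ ≤ κ-2 be integers, and let ((γᵢ, αᵢ, βᵢ))_{i=1}^{g+1} be a (κ,λ)-graphical sequence with right guide points 𝔯ᵢ := αᵢ + 2√(βᵢγᵢ). Then: (i) 𝔯ᵢ ≥ 𝔯₁ for all 1 ≤ i ≤ g, with equality iff (γᵢ,αᵢ,βᵢ) ∈ {(1,λ,κ-λ-1), (κ-λ-1,λ,1)}; (ii) for 2 ≤ i ≤ g, if βᵢ ≥ γᵢ then 𝔯_{i-1} < 𝔯ᵢ; (iii) for 2 ≤ i ≤ g-1, if βᵢ ≤ γᵢ then 𝔯_{i+1} < 𝔯ᵢ. In particular, the sequence (𝔯ᵢ)_{i=1}^g is unimodal. -/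
private lemma aux_sq (b c : ℝ) (hb : 0 ≤ b) (hc : 0 ≤ c) :
    b + c - 2 * Real.sqrt (b * c) = (Real.sqrt b - Real.sqrt c) ^ 2 := by
  have hb' := Real.sq_sqrt hb
  have hc' := Real.sq_sqrt hc
  rw [Real.sqrt_mul hb]
  linear_combination -hb' - hc'

private lemma sq_sub_le {b c b' c' : ℝ} (hc' : 0 ≤ c') (h1 : c' ≤ c) (hcb : c ≤ b)
    (h2 : b ≤ b') : (Real.sqrt b - Real.sqrt c) ^ 2 ≤ (Real.sqrt b' - Real.sqrt c') ^ 2 := by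
  have s1 : Real.sqrt c' ≤ Real.sqrt c := Real.sqrt_le_sqrt h1
  have s2 : Real.sqrt c ≤ Real.sqrt b := Real.sqrt_le_sqrt hcb
  have s3 : Real.sqrt b ≤ Real.sqrt b' := Real.sqrt_le_sqrt h2
  have h0 : 0 ≤ Real.sqrt b - Real.sqrt c := by linarith
  have h : Real.sqrt b - Real.sqrt c ≤ Real.sqrt b' - Real.sqrt c' := by linarith
  exact pow_le_pow_left₀ h0 h 2

private lemma sq_sub_lt {b c b' c' : ℝ} (hc' : 0 ≤ c') (h1 : c' ≤ c) (hcb : c ≤ b)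
    (h2 : b ≤ b') (hne : c' < c ∨ b < b') :
    (Real.sqrt b - Real.sqrt c) ^ 2 < (Real.sqrt b' - Real.sqrt c') ^ 2 := by
  have s2 : Real.sqrt c ≤ Real.sqrt b := Real.sqrt_le_sqrt hcb
  have h0 : 0 ≤ Real.sqrt b - Real.sqrt c := by linarith
  have h : Real.sqrt b - Real.sqrt c < Real.sqrt b' - Real.sqrt c' := by
    rcases hne with h | h
    · have s1 : Real.sqrt c' < Real.sqrt c := Real.sqrt_lt_sqrt hc' h
      have s3 : Real.sqrt b ≤ Real.sqrt b' := Real.sqrt_le_sqrt h2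
      linarith
    · have s1 : Real.sqrt c' ≤ Real.sqrt c := Real.sqrt_le_sqrt h1
      have s3 : Real.sqrt b < Real.sqrt b' :=
        Real.sqrt_lt_sqrt (le_trans hc' (le_trans h1 hcb)) h
      linarith
  nlinarith

/-- unimodality of the right guide points of a (κ,λ)-graphical sequence. -/
theorem stmt_6 (κ lam g : ℕ) (hκ : 3 ≤ κ) (hlam : lam ≤ κ - 2) (hg : 1 ≤ g)
    (γ α β : ℕ → ℕ)
    -- the terms of the sequence are pairwise distinct
    (hdist : ∀ i j, 1 ≤ i → i < j → j ≤ g + 1 → (γ i, α i, β i) ≠ (γ j, α j, β j))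
    -- (G0)
    (hG0 : ∀ i, 1 ≤ i → i ≤ g →
      1 ≤ β i ∧ 1 ≤ γ i ∧ γ i + α i + β i = κ ∧
        lam + 1 ≤ α i + β i ∧ lam + 1 ≤ α i + γ i)
    -- (G1)
    (hG1 : γ 1 = 1 ∧ α 1 = lam ∧ β 1 = κ - lam - 1)
    -- (G2)
    (hG2 : (∀ i, 1 ≤ i → i ≤ g - 1 → β (i + 1) ≤ β i) ∧
           (∀ i, 1 ≤ i → i ≤ g → γ i ≤ γ (i + 1)))
    -- (G3)
    (hG3 : β (g + 1) = 0 ∧ γ (g + 1) + α (g + 1) = κ)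
    -- the right guide points
    (R : ℕ → ℝ)
    (hR : ∀ i, R i = (α i : ℝ) + 2 * Real.sqrt ((β i : ℝ) * (γ i : ℝ))) :
    -- (i)
    (∀ i, 1 ≤ i → i ≤ g → R 1 ≤ R i ∧
      (R i = R 1 ↔ (γ i, α i, β i) = (1, lam, κ - lam - 1) ∨
                   (γ i, α i, β i) = (κ - lam - 1, lam, 1))) ∧
    -- (ii)
    (∀ i, 2 ≤ i → i ≤ g → γ i ≤ β i → R (i - 1) < R i) ∧
    -- (iii)
    (∀ i, 2 ≤ i → i ≤ g - 1 → β i ≤ γ i → R (i + 1) < R i) ∧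
    -- unimodality
    (∃ t, 1 ≤ t ∧ t ≤ g ∧
      (∀ i j, 1 ≤ i → i ≤ j → j ≤ t → R i ≤ R j) ∧
      (∀ i j, t ≤ i → i ≤ j → j ≤ g → R j ≤ R i)) := by
  have hM1 : 1 ≤ κ - lam - 1 := by omega
  -- R i = κ - (√β - √γ)² on [1,g]
  have hRD : ∀ i, 1 ≤ i → i ≤ g →
      R i = (κ : ℝ) - (Real.sqrt (β i) - Real.sqrt (γ i)) ^ 2 := by
    intro i h1 h2
    obtain ⟨hβ, hγ, hsum, -, -⟩ := hG0 i h1 h2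
    have hsum' : (γ i : ℝ) + α i + β i = κ := by exact_mod_cast congrArg (Nat.cast : ℕ → ℝ) hsum
    rw [hR i, ← aux_sq _ _ (by positivity) (by positivity)]
    linarith
  -- bounds 1 ≤ γ i, β i ≤ κ - lam - 1
  have hbound : ∀ i, 1 ≤ i → i ≤ g →
      1 ≤ γ i ∧ γ i ≤ κ - lam - 1 ∧ 1 ≤ β i ∧ β i ≤ κ - lam - 1 := by
    intro i h1 h2
    obtain ⟨hβ, hγ, hsum, hab, hag⟩ := hG0 i h1 h2
    omega
  -- the value D 1
  have hD1 : (Real.sqrt (β 1) - Real.sqrt (γ 1)) ^ 2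
      = (Real.sqrt ((κ - lam - 1 : ℕ) : ℝ) - Real.sqrt 1) ^ 2 := by
    rw [hG1.1, hG1.2.2]; norm_num
  -- part (i)
  have parti : ∀ i, 1 ≤ i → i ≤ g → R 1 ≤ R i ∧
      (R i = R 1 ↔ (γ i, α i, β i) = (1, lam, κ - lam - 1) ∨
                   (γ i, α i, β i) = (κ - lam - 1, lam, 1)) := by
    intro i h1 h2
    obtain ⟨hγ1, hγM, hβ1, hβM⟩ := hbound i h1 h2
    obtain ⟨-, -, hsum, -, -⟩ := hG0 i h1 h2
    have hγ1' : (1 : ℝ) ≤ (γ i : ℝ) := by exact_mod_cast hγ1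
    have hγM' : (γ i : ℝ) ≤ ((κ - lam - 1 : ℕ) : ℝ) := by exact_mod_cast hγM
    have hβ1' : (1 : ℝ) ≤ (β i : ℝ) := by exact_mod_cast hβ1
    have hβM' : (β i : ℝ) ≤ ((κ - lam - 1 : ℕ) : ℝ) := by exact_mod_cast hβM
    have hswap : (Real.sqrt (β i) - Real.sqrt (γ i)) ^ 2
        = (Real.sqrt (γ i) - Real.sqrt (β i)) ^ 2 := by ring
    have hle : (Real.sqrt (β i) - Real.sqrt (γ i)) ^ 2
        ≤ (Real.sqrt ((κ - lam - 1 : ℕ) : ℝ) - Real.sqrt 1) ^ 2 := by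
      rcases le_total (γ i : ℝ) (β i : ℝ) with h | h
      · exact sq_sub_le zero_le_one hγ1' h hβM'
      · rw [hswap]; exact sq_sub_le zero_le_one hβ1' h hγM'
    rw [hRD i h1 h2, hRD 1 le_rfl hg, hD1]
    constructor
    · linarith
    constructor
    · intro heq
      have heqD : (Real.sqrt (β i) - Real.sqrt (γ i)) ^ 2
          = (Real.sqrt ((κ - lam - 1 : ℕ) : ℝ) - Real.sqrt 1) ^ 2 := by linarith
      rcases le_total (γ i) (β i) with h | h
      · left
        have hgb : γ i = 1 ∧ β i = κ - lam - 1 := by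
          by_contra hcon
          have hne : (1 : ℝ) < (γ i : ℝ) ∨ (β i : ℝ) < ((κ - lam - 1 : ℕ) : ℝ) := by
            have : 1 < γ i ∨ β i < κ - lam - 1 := by omega
            rcases this with h' | h'
            · left; exact_mod_cast h'
            · right; exact_mod_cast h'
          have h' : (γ i : ℝ) ≤ (β i : ℝ) := by exact_mod_cast h
          have := sq_sub_lt zero_le_one hγ1' h' hβM' hne
          linarith
        have hα : α i = lam := by omega
        simp [Prod.ext_iff, hgb.1, hgb.2, hα]
      · right
        have hgb : β i = 1 ∧ γ i = κ - lam - 1 := by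
          by_contra hcon
          have hne : (1 : ℝ) < (β i : ℝ) ∨ (γ i : ℝ) < ((κ - lam - 1 : ℕ) : ℝ) := by
            have : 1 < β i ∨ γ i < κ - lam - 1 := by omega
            rcases this with h' | h'
            · left; exact_mod_cast h'
            · right; exact_mod_cast h'
          have h' : (β i : ℝ) ≤ (γ i : ℝ) := by exact_mod_cast h
          have := sq_sub_lt zero_le_one hβ1' h' hγM' hne
          rw [hswap] at heqD
          linarith
        have hα : α i = lam := by omega
        simp [Prod.ext_iff, hgb.1, hgb.2, hα]
    · intro hcase
      rcases hcase with h | h <;> simp only [Prod.mk.injEq] at h <;>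
        obtain ⟨e1, e2, e3⟩ := h
      · rw [e1, e3]; norm_num
      · rw [e1, e3, Nat.cast_one, Real.sqrt_one]; ring
  -- part (ii)
  have partii : ∀ i, 2 ≤ i → i ≤ g → γ i ≤ β i → R (i - 1) < R i := by
    intro i h2 hgle hcb
    obtain ⟨j, rfl⟩ : ∃ j, i = j + 1 := ⟨i - 1, by omega⟩
    simp only [Nat.add_sub_cancel]
    have hβm := hG2.1 j (by omega) (by omega)
    have hγm := hG2.2 j (by omega) (by omega)
    have hne : γ j < γ (j + 1) ∨ β (j + 1) < β j := by
      by_contra hcon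
      push_neg at hcon
      obtain ⟨-, -, hs1, -, -⟩ := hG0 j (by omega) (by omega)
      obtain ⟨-, -, hs2, -, -⟩ := hG0 (j + 1) (by omega) (by omega)
      exact hdist j (j + 1) (by omega) (by omega) (by omega)
        (by simp only [Prod.mk.injEq]; omega)
    have hγm' : (γ j : ℝ) ≤ (γ (j + 1) : ℝ) := by exact_mod_cast hγm
    have hβm' : (β (j + 1) : ℝ) ≤ (β j : ℝ) := by exact_mod_cast hβm
    have hcb' : (γ (j + 1) : ℝ) ≤ (β (j + 1) : ℝ) := by exact_mod_cast hcb
    have hne' : (γ j : ℝ) < (γ (j + 1) : ℝ) ∨ (β (j + 1) : ℝ) < (β j : ℝ) := by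
      rcases hne with h | h
      · left; exact_mod_cast h
      · right; exact_mod_cast h
    have hkey := sq_sub_lt (c' := (γ j : ℝ)) (by positivity) hγm' hcb' hβm' hne'
    rw [hRD j (by omega) (by omega), hRD (j + 1) (by omega) (by omega)]
    linarith
  -- part (iii)
  have partiii : ∀ i, 2 ≤ i → i ≤ g - 1 → β i ≤ γ i → R (i + 1) < R i := by
    intro i h2 hgle hbc
    have hβm := hG2.1 i (by omega) (by omega)
    have hγm := hG2.2 i (by omega) (by omega)
    have hne : β (i + 1) < β i ∨ γ i < γ (i + 1) := by
      by_contra hcon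
      push_neg at hcon
      obtain ⟨-, -, hs1, -, -⟩ := hG0 i (by omega) (by omega)
      obtain ⟨-, -, hs2, -, -⟩ := hG0 (i + 1) (by omega) (by omega)
      exact hdist i (i + 1) (by omega) (by omega) (by omega)
        (by simp only [Prod.mk.injEq]; omega)
    have hγm' : (γ i : ℝ) ≤ (γ (i + 1) : ℝ) := by exact_mod_cast hγm
    have hβm' : (β (i + 1) : ℝ) ≤ (β i : ℝ) := by exact_mod_cast hβm
    have hbc' : (β i : ℝ) ≤ (γ i : ℝ) := by exact_mod_cast hbc
    have hne' : (β (i + 1) : ℝ) < (β i : ℝ) ∨ (γ i : ℝ) < (γ (i + 1) : ℝ) := by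
      rcases hne with h | h
      · left; exact_mod_cast h
      · right; exact_mod_cast h
    have hkey := sq_sub_lt (c' := (β (i + 1) : ℝ)) (by positivity) hβm' hbc' hγm' hne'
    have hswap1 : (Real.sqrt (β i) - Real.sqrt (γ i)) ^ 2
        = (Real.sqrt (γ i) - Real.sqrt (β i)) ^ 2 := by ring
    have hswap2 : (Real.sqrt (β (i + 1)) - Real.sqrt (γ (i + 1))) ^ 2
        = (Real.sqrt (γ (i + 1)) - Real.sqrt (β (i + 1))) ^ 2 := by ring
    rw [hRD i (by omega) (by omega), hRD (i + 1) (by omega) (by omega), hswap1, hswap2]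
    linarith
  refine ⟨parti, partii, partiii, ?_⟩
  -- monotonicity of β and γ over the whole range
  have hβmono : ∀ i j, 1 ≤ i → i ≤ j → j ≤ g → β j ≤ β i := by
    intro i j h1 hij hjg
    induction j with
    | zero => omega
    | succ n ih =>
      rcases Nat.lt_or_ge i (n + 1) with h | h
      · have h1' : β (n + 1) ≤ β n := hG2.1 n (by omega) (by omega)
        have h2' := ih (by omega) (by omega)
        omega
      · obtain rfl : i = n + 1 := by omega
        exact le_rfl
  have hγmono : ∀ i j, 1 ≤ i → i ≤ j → j ≤ g → γ i ≤ γ j := by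
    intro i j h1 hij hjg
    induction j with
    | zero => omega
    | succ n ih =>
      rcases Nat.lt_or_ge i (n + 1) with h | h
      · have h1' : γ n ≤ γ (n + 1) := hG2.2 n (by omega) (by omega)
        have h2' := ih (by omega) (by omega)
        omega
      · obtain rfl : i = n + 1 := by omega
        exact le_rfl
  -- the crossing point
  set t := Nat.findGreatest (fun i => γ i ≤ β i) g with ht_def
  have hP1 : γ 1 ≤ β 1 := by rw [hG1.1, hG1.2.2]; omega
  have ht1 : 1 ≤ t := Nat.le_findGreatest hg hP1
  have htg : t ≤ g := Nat.findGreatest_le g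
  have hPt : γ t ≤ β t := Nat.findGreatest_spec (P := fun i => γ i ≤ β i) hg hP1
  have hPdown : ∀ i, 1 ≤ i → i ≤ t → γ i ≤ β i := by
    intro i h1 h2
    calc γ i ≤ γ t := hγmono i t h1 h2 htg
    _ ≤ β t := hPt
    _ ≤ β i := hβmono i t h1 h2 htg
  have hPup : ∀ i, t < i → i ≤ g → β i < γ i := by
    intro i h1 h2
    have := Nat.findGreatest_is_greatest (P := fun i => γ i ≤ β i) h1 h2
    omega
  -- increasing on [1, t]
  have hinc : ∀ i j, 1 ≤ i → i ≤ j → j ≤ t → R i ≤ R j := by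
    intro i j h1 hij hjt
    induction j with
    | zero => omega
    | succ n ih =>
      rcases Nat.lt_or_ge i (n + 1) with h | h
      · have hstep : R n < R (n + 1) := by
          have := partii (n + 1) (by omega) (by omega) (hPdown (n + 1) (by omega) hjt)
          simpa using this
        exact le_trans (ih (by omega) (by omega)) (le_of_lt hstep)
      · obtain rfl : i = n + 1 := by omega
        exact le_rfl
  -- decreasing on [t+1, g]
  have hdec' : ∀ i j, t + 1 ≤ i → i ≤ j → j ≤ g → R j ≤ R i := by
    intro i j h1 hij hjg
    induction j with
    | zero => omega
    | succ n ih =>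
      rcases Nat.lt_or_ge i (n + 1) with h | h
      · have hstep : R (n + 1) < R n :=
          partiii n (by omega) (by omega) (le_of_lt (hPup n (by omega) (by omega)))
        exact le_trans (le_of_lt hstep) (ih (by omega) (by omega))
      · obtain rfl : i = n + 1 := by omega
        exact le_rfl
  rcases Nat.lt_or_ge t g with htlt | htge
  · rcases le_total (R (t + 1)) (R t) with hcmp | hcmp
    · refine ⟨t, ht1, htg, hinc, ?_⟩
      intro i j hti hij hjg'
      rcases Nat.lt_or_ge t i with h | h
      · exact hdec' i j (by omega) hij hjg'
      · obtain rfl : i = t := by omega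
        rcases Nat.lt_or_ge t j with h' | h' 
        · exact le_trans (hdec' (t + 1) j (by omega) (by omega) hjg') hcmp
        · obtain rfl : j = t := by omega
          exact le_rfl
    · refine ⟨t + 1, by omega, by omega, ?_, hdec'⟩
      intro i j h1 hij hjt
      rcases Nat.lt_or_ge j (t + 1) with h | h
      · exact hinc i j h1 hij (by omega)
      · obtain rfl : j = t + 1 := by omega
        rcases Nat.lt_or_ge i (t + 1) with h' | h'
        · exact le_trans (hinc i t h1 (by omega) le_rfl) hcmp
        · obtain rfl : i = t + 1 := by omega
          exact le_rfl
  · refine ⟨t, ht1, htg, hinc, ?_⟩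
    intro i j hti hij hjg'
    obtain rfl : i = t := by omega
    obtain rfl : j = t := by omega
    exact le_rfl
end

section
/- Let Γ be a distance-regular graph of order (s,t) with diameter D ≥ 2. Then the smallest eigenvalue θ_D of (the adjacency matrix of) Γ satisfies θ_D ≥ -t-1. Moreover, if s > t then θ_D = -t-1. -/
/-- `G` is a distance-regular graph with diameter `D` and intersection numbers
`c i`, `a i`, `b i`. -/
def IsDRG {V : Type*} [Fintype V] (G : SimpleGraph V) (D : ℕ) (c a b : ℕ → ℕ) : Prop :=
  G.Connected ∧ (∀ x y : V, G.dist x y ≤ D) ∧ (∃ x y : V, G.dist x y = D) ∧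
  ∀ (x y : V) (i : ℕ), G.dist x y = i → i ≤ D →
    ({z : V | G.Adj y z ∧ G.dist x z + 1 = i}.ncard = c i ∧
     {z : V | G.Adj y z ∧ G.dist x z = i}.ncard = a i ∧
     {z : V | G.Adj y z ∧ G.dist x z = i + 1}.ncard = b i)

/-- The local graph of every vertex of `G` is a disjoint union of `t+1` cliques of
size `s`, i.e. `G` is of order `(s,t)`. -/
def IsOfOrder {V : Type*} [Fintype V] [DecidableEq V] (G : SimpleGraph V)
    (s t : ℕ) : Prop :=
  ∀ x : V, ∃ P : Finset (Finset V),
    P.card = t + 1 ∧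
    (∀ C ∈ P, C.card = s ∧ ∀ v ∈ C, ∀ w ∈ C, v ≠ w → G.Adj v w) ∧
    (∀ C ∈ P, ∀ C' ∈ P, C ≠ C' → Disjoint C C') ∧
    (∀ v : V, v ∈ P.biUnion id ↔ G.Adj x v) ∧
    (∀ C ∈ P, ∀ C' ∈ P, ∀ v ∈ C, ∀ w ∈ C', G.Adj v w → C = C')

/-!
Let `𝒦` be the set of `(s+1)`-cliques of `Γ`. An `(s+1)`-clique through `x` is `x` together with
one of the `t + 1` cliques of the local graph at `x`, and every edge lies in exactly one of them,
so the vertex–clique incidence matrix `M` satisfies `M Mᵀ = A + (t+1) I`. Hence `A + (t+1) I` is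
positive semidefinite, i.e. every eigenvalue is at least `-t-1`. Double counting incidences gives
`|𝒦| (s+1) = |V| (t+1)`; if `s > t` then `Mᵀ` has fewer rows than columns, and a nonzero vector in
its kernel is a `(-t-1)`-eigenvector of `A`.
-/

open Finset Matrix Module End SimpleGraph

namespace Matrix

variable {n ι : Type*} [Fintype n] [DecidableEq n] [Fintype ι]

theorem hasEigenvalue_toLin'_iff {R : Type*} [CommRing R] {A : Matrix n n R} {μ : R} :
    HasEigenvalue (toLin' A) μ ↔ ∃ v ≠ 0, A *ᵥ v = μ • v := by
  refine ⟨fun h => ?_, fun ⟨v, hv0, hv⟩ => ?_⟩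
  · obtain ⟨v, hv⟩ := h.exists_hasEigenvector
    exact ⟨v, hv.2, by simpa using hv.apply_eq_smul⟩
  · exact hasEigenvalue_of_hasEigenvector ⟨mem_eigenspace_iff.mpr (by simpa using hv), hv0⟩

theorem neg_le_of_hasEigenvalue_of_add_smul_one_eq_mul_transpose {A : Matrix n n ℝ}
    {M : Matrix n ι ℝ} {c θ : ℝ} (hA : A + c • 1 = M * Mᵀ) (hθ : HasEigenvalue (toLin' A) θ) :
    -c ≤ θ := by
  obtain ⟨v, hv0, hv⟩ := hasEigenvalue_toLin'_iff.mp hθ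
  have hpsd : 0 ≤ v ⬝ᵥ ((M * Mᵀ) *ᵥ v) := by
    simpa [conjTranspose_eq_transpose_of_trivial] using
      (posSemidef_self_mul_conjTranspose M).dotProduct_mulVec_nonneg v
  have hquad : v ⬝ᵥ ((M * Mᵀ) *ᵥ v) = (θ + c) * (v ⬝ᵥ v) := by
    rw [← hA, add_mulVec, smul_mulVec, one_mulVec, hv, dotProduct_add, dotProduct_smul,
      dotProduct_smul, smul_eq_mul, smul_eq_mul, add_mul]
  have hvv : 0 < v ⬝ᵥ v :=
    (dotProduct_self_star_nonneg v).lt_of_ne' (fun h => hv0 (dotProduct_self_eq_zero.mp h))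
  nlinarith

theorem hasEigenvalue_neg_of_add_smul_one_eq_mul_transpose {K : Type*} [Field K]
    {A : Matrix n n K} {M : Matrix n ι K} {c : K} (hA : A + c • 1 = M * Mᵀ)
    (hcard : Fintype.card ι < Fintype.card n) : HasEigenvalue (toLin' A) (-c) := by
  have hker : LinearMap.ker Mᵀ.mulVecLin ≠ ⊥ :=
    LinearMap.ker_ne_bot_of_finrank_lt (by simpa using hcard)
  obtain ⟨v, hv, hv0⟩ := Submodule.exists_mem_ne_zero_of_ne_bot hker
  refine hasEigenvalue_toLin'_iff.mpr ⟨v, hv0, ?_⟩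
  have hMv : Mᵀ *ᵥ v = 0 := hv
  rw [← add_sub_cancel_right A (c • 1), hA, sub_mulVec, ← mulVec_mulVec, hMv, mulVec_zero,
    smul_mulVec, one_mulVec, zero_sub, neg_smul]

end Matrix

namespace Finset

variable {V : Type*} [DecidableEq V]

def incidenceMatrix (R : Type*) [Zero R] [One R] (𝒦 : Finset (Finset V)) : Matrix V 𝒦 R :=
  Matrix.of fun x Q => if x ∈ (Q : Finset V) then 1 else 0

theorem incidenceMatrix_mul_transpose_apply {R : Type*} [NonAssocSemiring R]
    (𝒦 : Finset (Finset V)) (x y : V) :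
    (incidenceMatrix R 𝒦 * (incidenceMatrix R 𝒦)ᵀ) x y = #{Q ∈ 𝒦 | {x, y} ⊆ Q} := by
  simp only [Matrix.mul_apply, transpose_apply, incidenceMatrix, of_apply, ite_zero_mul_ite_zero,
    mul_one, insert_subset_iff, singleton_subset_iff, ← sum_boole]
  exact sum_coe_sort 𝒦 fun Q => if x ∈ Q ∧ y ∈ Q then (1 : R) else 0

end Finset

namespace SimpleGraph

variable {V : Type*} [DecidableEq V] {G : SimpleGraph V} {s t : ℕ} {x : V}
  {P : Finset (Finset V)}

structure IsLocalCliquePartition (G : SimpleGraph V) (s t : ℕ) (x : V) (P : Finset (Finset V)) :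
    Prop where
  card_eq : #P = t + 1
  isNClique : ∀ C ∈ P, G.IsNClique s C
  disjoint : ∀ C ∈ P, ∀ C' ∈ P, C ≠ C' → Disjoint C C'
  mem_biUnion_iff : ∀ v, v ∈ P.biUnion id ↔ G.Adj x v
  eq_of_adj : ∀ C ∈ P, ∀ C' ∈ P, ∀ v ∈ C, ∀ w ∈ C', G.Adj v w → C = C'

namespace IsLocalCliquePartition

variable (hP : G.IsLocalCliquePartition s t x P)
include hP

theorem exists_mem_of_adj {v : V} (hv : G.Adj x v) : ∃ C ∈ P, v ∈ C := by
  simpa using (hP.mem_biUnion_iff v).mpr hv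

theorem adj_of_mem {C : Finset V} (hC : C ∈ P) {v : V} (hv : v ∈ C) : G.Adj x v :=
  (hP.mem_biUnion_iff v).mp (mem_biUnion.mpr ⟨C, hC, hv⟩)

theorem exists_subset_of_isClique {S : Finset V} (hS : G.IsClique (S : Set V))
    (hadj : ∀ v ∈ S, G.Adj x v) : ∃ C ∈ P, S ⊆ C := by
  obtain rfl | ⟨y, hy⟩ := S.eq_empty_or_nonempty
  · obtain ⟨C, hC⟩ := card_pos.mp (by rw [hP.card_eq]; exact t.succ_pos)
    exact ⟨C, hC, empty_subset C⟩
  obtain ⟨C, hC, hyC⟩ := hP.exists_mem_of_adj (hadj y hy)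
  refine ⟨C, hC, fun z hz => ?_⟩
  obtain rfl | hzy := eq_or_ne z y
  · exact hyC
  obtain ⟨C', hC', hzC'⟩ := hP.exists_mem_of_adj (hadj z hz)
  rwa [hP.eq_of_adj C' hC' C hC z hzC' y hyC (hS hz hy hzy)] at hzC'

theorem isNClique_insert {C : Finset V} (hC : C ∈ P) : G.IsNClique (s + 1) (insert x C) :=
  (hP.isNClique C hC).insert fun _ => hP.adj_of_mem hC

theorem erase_mem {Q : Finset V} (hQ : G.IsNClique (s + 1) Q) (hx : x ∈ Q) : Q.erase x ∈ P := by
  have hS := hQ.erase_of_mem hx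
  obtain ⟨C, hC, hsub⟩ := hP.exists_subset_of_isClique hS.isClique fun v hv =>
    hQ.isClique hx (mem_of_mem_erase hv) (ne_of_mem_erase hv).symm
  have hcard : #C ≤ #(Q.erase x) := by rw [(hP.isNClique C hC).card_eq, hS.card_eq]; rfl
  rwa [eq_of_subset_of_card_le hsub hcard]

variable [Fintype V] [DecidableRel G.Adj]

/-- Removing `x` is a bijection from the `(s+1)`-cliques through `x` onto `P`. -/
theorem card_filter_insert_subset {S : Finset V} (hxS : x ∉ S) :
    #{Q ∈ G.cliqueFinset (s + 1) | insert x S ⊆ Q} = #{C ∈ P | S ⊆ C} := by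
  refine card_bij' (fun Q _ => Q.erase x) (fun C _ => insert x C) (fun Q hQ => ?_)
    (fun C hC => ?_) (fun Q hQ => ?_) (fun C hC => ?_)
  · obtain ⟨hQ, hSQ⟩ := mem_filter.mp hQ
    have hxQ := hSQ (mem_insert_self x S)
    refine mem_filter.mpr ⟨hP.erase_mem (mem_cliqueFinset_iff.mp hQ) hxQ, ?_⟩
    rw [← erase_insert hxS]
    exact erase_subset_erase x hSQ
  · obtain ⟨hC, hSC⟩ := mem_filter.mp hC
    exact mem_filter.mpr
      ⟨mem_cliqueFinset_iff.mpr (hP.isNClique_insert hC), insert_subset_insert x hSC⟩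
  · exact insert_erase ((mem_filter.mp hQ).2 (mem_insert_self x S))
  · exact erase_insert fun hx => G.irrefl (hP.adj_of_mem (mem_filter.mp hC).1 hx)

end IsLocalCliquePartition

variable [Fintype V] [DecidableRel G.Adj]

theorem card_filter_pair_subset_cliqueFinset_of_not_adj {n : ℕ} {x y : V} (hne : x ≠ y)
    (hxy : ¬ G.Adj x y) : #{Q ∈ G.cliqueFinset n | {x, y} ⊆ Q} = 0 := by
  rw [card_eq_zero, filter_eq_empty_iff]
  intro Q hQ hxyQ
  rw [insert_subset_iff, singleton_subset_iff] at hxyQ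
  exact hxy ((mem_cliqueFinset_iff.mp hQ).isClique hxyQ.1 hxyQ.2 hne)

end SimpleGraph

namespace IsOfOrder

variable {V : Type*} [Fintype V] [DecidableEq V] {G : SimpleGraph V} {s t : ℕ}

theorem exists_isLocalCliquePartition (h : IsOfOrder G s t) (x : V) :
    ∃ P, G.IsLocalCliquePartition s t x P := by
  obtain ⟨P, hcard, hclq, hdisj, hnbr, huniq⟩ := h x
  exact ⟨P, hcard, fun C hC => ⟨fun v hv w hw hvw => (hclq C hC).2 v hv w hw hvw, (hclq C hC).1⟩,
    hdisj, hnbr, huniq⟩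

variable [DecidableRel G.Adj]

theorem card_filter_mem_cliqueFinset (h : IsOfOrder G s t) (x : V) :
    #{Q ∈ G.cliqueFinset (s + 1) | x ∈ Q} = t + 1 := by
  obtain ⟨P, hP⟩ := h.exists_isLocalCliquePartition x
  simpa [hP.card_eq] using hP.card_filter_insert_subset (notMem_empty x)

theorem card_filter_pair_subset_cliqueFinset_of_adj (h : IsOfOrder G s t) {x y : V}
    (hxy : G.Adj x y) : #{Q ∈ G.cliqueFinset (s + 1) | {x, y} ⊆ Q} = 1 := by
  obtain ⟨P, hP⟩ := h.exists_isLocalCliquePartition x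
  rw [hP.card_filter_insert_subset (notMem_singleton.mpr hxy.ne), card_eq_one]
  obtain ⟨C, hC, hyC⟩ := hP.exists_mem_of_adj hxy
  refine ⟨C, eq_singleton_iff_unique_mem.mpr ⟨mem_filter.mpr ⟨hC, by simpa⟩, fun C' hC' => ?_⟩⟩
  obtain ⟨hC', hyC'⟩ := mem_filter.mp hC'
  by_contra hne
  exact Finset.disjoint_left.mp (hP.disjoint C' hC' C hC hne) (singleton_subset_iff.mp hyC') hyC

theorem incidenceMatrix_mul_transpose {R : Type*} [NonAssocSemiring R]
    (h : IsOfOrder G s t) :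
    G.adjMatrix R + ((t : R) + 1) • 1 =
      (G.cliqueFinset (s + 1)).incidenceMatrix R *
        ((G.cliqueFinset (s + 1)).incidenceMatrix R)ᵀ := by
  ext x y
  rw [incidenceMatrix_mul_transpose_apply]
  obtain rfl | hne := eq_or_ne x y
  · simp [h.card_filter_mem_cliqueFinset]
  by_cases hxy : G.Adj x y
  · simp [h.card_filter_pair_subset_cliqueFinset_of_adj hxy, hxy, hne]
  · simp [card_filter_pair_subset_cliqueFinset_of_not_adj hne hxy, hxy, hne]

theorem card_cliqueFinset_mul (h : IsOfOrder G s t) :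
    #(G.cliqueFinset (s + 1)) * (s + 1) = Fintype.card V * (t + 1) := by
  refine (card_mul_eq_card_mul (fun x Q => x ∈ Q) (fun x _ => ?_) (fun Q hQ => ?_)).symm
  · exact h.card_filter_mem_cliqueFinset x
  · simpa [bipartiteBelow] using (mem_cliqueFinset_iff.mp hQ).card_eq

theorem card_cliqueFinset_lt [Nonempty V] (h : IsOfOrder G s t) (hts : t < s) :
    #(G.cliqueFinset (s + 1)) < Fintype.card V := by
  refine Nat.lt_of_mul_lt_mul_right (a := s + 1) ?_
  rw [h.card_cliqueFinset_mul]
  exact Nat.mul_lt_mul_of_pos_left (by omega) Fintype.card_pos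

end IsOfOrder

theorem stmt_8_general {V : Type*} [Fintype V] [DecidableEq V] (G : SimpleGraph V)
    [DecidableRel G.Adj] (s t D : ℕ) (c a b : ℕ → ℕ)
    (hdrg : IsDRG G D c a b) (horder : IsOfOrder G s t) :
    (∀ θ : ℝ, Module.End.HasEigenvalue (Matrix.toLin' (G.adjMatrix ℝ)) θ →
        -(t : ℝ) - 1 ≤ θ) ∧
    (t < s → Module.End.HasEigenvalue (Matrix.toLin' (G.adjMatrix ℝ)) (-(t : ℝ) - 1)) := by
  have hgram := horder.incidenceMatrix_mul_transpose (R := ℝ)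
  rw [← neg_add']
  refine ⟨fun θ hθ => neg_le_of_hasEigenvalue_of_add_smul_one_eq_mul_transpose hgram hθ,
    fun hts => hasEigenvalue_neg_of_add_smul_one_eq_mul_transpose hgram ?_⟩
  have := hdrg.1.nonempty
  rw [Fintype.card_coe]
  exact horder.card_cliqueFinset_lt hts

theorem stmt_8 {V : Type*} [Fintype V] [DecidableEq V] (G : SimpleGraph V)
    [DecidableRel G.Adj] (s t D : ℕ) (c a b : ℕ → ℕ)
    (hs : 1 ≤ s) (ht : 1 ≤ t) (hD : 2 ≤ D)
    (hdrg : IsDRG G D c a b) (horder : IsOfOrder G s t) :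
    (∀ θ : ℝ, Module.End.HasEigenvalue (Matrix.toLin' (G.adjMatrix ℝ)) θ →
        -(t : ℝ) - 1 ≤ θ) ∧
    (t < s → Module.End.HasEigenvalue (Matrix.toLin' (G.adjMatrix ℝ)) (-(t : ℝ) - 1)) :=
  stmt_8_general G s t D c a b hdrg horder
end

section
/- Suppose N ≥ 2 is an integer, α ≥ 0, β > 0, γ > 0 are reals, and x₀, x₁ are reals with (x₀, x₁) ≠ (0,0). Let 0 < ε < 2√(βγ). Then there exist positive constants C₃, C₄ depending only on β, γ, ε such that for every real θ with |θ - α| ≤ 2√(βγ) - ε, and all reals x₂,…,x_N satisfying γ x_{i-1} + (α - θ) xᵢ + β x_{i+1} = 0 for i = 1,…,N-1, one has C₃ · N · max{x₀², (β/γ)x₁²} ≤ Σ_{i=0}^{N} (β/γ)^i xᵢ² ≤ C₄ · N · max{x₀², (β/γ)x₁²}. -/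
theorem stmt_9 (β γ ε : ℝ) (hβ : 0 < β) (hγ : 0 < γ)
    (hε0 : 0 < ε) (hε : ε < 2 * Real.sqrt (β * γ)) :
    ∃ C₃ C₄ : ℝ, 0 < C₃ ∧ 0 < C₄ ∧
      ∀ (N : ℕ), 2 ≤ N → ∀ (α : ℝ), 0 ≤ α →
        ∀ (θ : ℝ), |θ - α| ≤ 2 * Real.sqrt (β * γ) - ε →
          ∀ (x : ℕ → ℝ), ¬ (x 0 = 0 ∧ x 1 = 0) →
            (∀ i, 1 ≤ i → i ≤ N - 1 →
              γ * x (i - 1) + (α - θ) * x i + β * x (i + 1) = 0) →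
            C₃ * N * max ((x 0) ^ 2) ((β / γ) * (x 1) ^ 2) ≤
                ∑ i ∈ Finset.range (N + 1), (β / γ) ^ i * (x i) ^ 2 ∧
              ∑ i ∈ Finset.range (N + 1), (β / γ) ^ i * (x i) ^ 2 ≤
                C₄ * N * max ((x 0) ^ 2) ((β / γ) * (x 1) ^ 2) := by
  have hs : 0 < Real.sqrt (β * γ) := Real.sqrt_pos.mpr (mul_pos hβ hγ)
  set s := Real.sqrt (β * γ) with hs_def
  set δ := ε / (2 * s) with hδ_def
  have hδ0 : 0 < δ := by positivity
  refine ⟨δ / 4, 8 / δ, by positivity, by positivity, ?_⟩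
  intro N hN α hα θ hθ x hx hrec
  have hs0 : s ≠ 0 := ne_of_gt hs
  set r := Real.sqrt (β / γ) with hr_def
  have hr : 0 < r := Real.sqrt_pos.mpr (by positivity)
  have hr2 : r ^ 2 = β / γ := Real.sq_sqrt (by positivity)
  have hgr : γ * r = s := by
    have h1 : γ * r = Real.sqrt (γ ^ 2 * (β / γ)) := by
      rw [Real.sqrt_mul (by positivity), Real.sqrt_sq hγ.le, hr_def]
    rw [h1, hs_def]
    congr 1
    field_simp
  have hbr : β = s * r := by
    rw [hs_def, hr_def, ← Real.sqrt_mul (by positivity : (0:ℝ) ≤ β * γ)]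
    rw [show β * γ * (β / γ) = β ^ 2 by field_simp]
    exact (Real.sqrt_sq hβ.le).symm
  set c := (θ - α) / (2 * s) with hc_def
  have hc2 : θ - α = 2 * s * c := by rw [hc_def]; field_simp
  have hc : |c| ≤ 1 - δ := by
    rw [hc_def, abs_div, abs_of_pos (by positivity : (0:ℝ) < 2 * s),
      div_le_iff₀ (by positivity)]
    calc |θ - α| ≤ 2 * s - ε := hθ
      _ = (1 - δ) * (2 * s) := by rw [hδ_def]; field_simp
  obtain ⟨hcl, hcu⟩ := abs_le.mp hc
  set y : ℕ → ℝ := fun i => r ^ i * x i with hy_def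
  have hy : ∀ j : ℕ, j + 1 ≤ N - 1 → y j + y (j + 2) = 2 * c * y (j + 1) := by
    intro j hj
    have h := hrec (j + 1) (by omega) hj
    simp only [Nat.add_sub_cancel] at h
    apply mul_left_cancel₀ hs0
    simp only [hy_def]
    linear_combination r ^ (j + 1) * h - x j * r ^ j * hgr
      - x (j + 2) * r ^ (j + 1) * hbr + x (j + 1) * r ^ (j + 1) * hc2
  -- conserved quantity
  set Q0 : ℝ := y 0 ^ 2 + y 1 ^ 2 - 2 * c * y 0 * y 1 with hQ0_def
  have hQ : ∀ i : ℕ, i ≤ N - 1 → y i ^ 2 + y (i + 1) ^ 2 - 2 * c * y i * y (i + 1) = Q0 := by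
    intro i
    induction i with
    | zero => intro _; rw [hQ0_def]
    | succ j ih =>
      intro hj
      have h2 := hy j hj
      rw [← ih (by omega)]
      linear_combination (y (j + 2) - y j) * h2
  -- quadratic form bounds
  have hpair_ub : ∀ a b : ℝ, a ^ 2 + b ^ 2 - 2 * c * a * b ≤ 2 * (a ^ 2 + b ^ 2) := by
    intro a b
    nlinarith [mul_nonneg (by linarith : (0:ℝ) ≤ 1 + c) (sq_nonneg (a + b)),
      mul_nonneg (by linarith : (0:ℝ) ≤ 1 - c) (sq_nonneg (a - b))]
  have hpair_lb : ∀ a b : ℝ, δ * (a ^ 2 + b ^ 2) ≤ a ^ 2 + b ^ 2 - 2 * c * a * b := by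
    intro a b
    nlinarith [mul_nonneg (by linarith : (0:ℝ) ≤ 1 - δ - c) (sq_nonneg (a + b)),
      mul_nonneg (by linarith : (0:ℝ) ≤ 1 - δ + c) (sq_nonneg (a - b))]
  -- rewrite goal in terms of y
  have hterm : ∀ i : ℕ, (β / γ) ^ i * x i ^ 2 = y i ^ 2 := by
    intro i
    simp only [hy_def]
    rw [mul_pow, ← pow_mul, mul_comm i 2, pow_mul, hr2]
  have hsum : ∑ i ∈ Finset.range (N + 1), (β / γ) ^ i * x i ^ 2
      = ∑ i ∈ Finset.range (N + 1), y i ^ 2 :=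
    Finset.sum_congr rfl fun i _ => hterm i
  have hmax : max (x 0 ^ 2) (β / γ * x 1 ^ 2) = max (y 0 ^ 2) (y 1 ^ 2) := by
    rw [show x 0 ^ 2 = y 0 ^ 2 by simpa using hterm 0,
      show β / γ * x 1 ^ 2 = y 1 ^ 2 by simpa using hterm 1]
  rw [hsum, hmax]
  set M := max (y 0 ^ 2) (y 1 ^ 2) with hM_def
  have hM0 : 0 ≤ M := le_trans (sq_nonneg _) (le_max_left _ _)
  have h0M : y 0 ^ 2 ≤ M := le_max_left _ _
  have h1M : y 1 ^ 2 ≤ M := le_max_right _ _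
  have hQub : Q0 ≤ 4 * M := by
    have := hpair_ub (y 0) (y 1)
    rw [hQ0_def]; linarith
  have hQlb : δ * M ≤ Q0 := by
    have h := hpair_lb (y 0) (y 1)
    have hMle : M ≤ y 0 ^ 2 + y 1 ^ 2 :=
      max_le (le_add_of_nonneg_right (sq_nonneg _)) (le_add_of_nonneg_left (sq_nonneg _))
    have := mul_le_mul_of_nonneg_left hMle hδ0.le
    rw [hQ0_def]; linarith
  have hmem : ∀ i ∈ Finset.range N, i ≤ N - 1 := by
    intro i hi; have := Finset.mem_range.mp hi; omega
  have hpl : ∀ i ∈ Finset.range N, Q0 ≤ 2 * (y i ^ 2 + y (i + 1) ^ 2) := by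
    intro i hi
    rw [← hQ i (hmem i hi)]
    exact hpair_ub (y i) (y (i + 1))
  have hpu : ∀ i ∈ Finset.range N, δ * (y i ^ 2 + y (i + 1) ^ 2) ≤ Q0 := by
    intro i hi
    rw [← hQ i (hmem i hi)]
    exact hpair_lb (y i) (y (i + 1))
  have hN1 : (1 : ℝ) ≤ (N : ℝ) := by exact_mod_cast Nat.one_le_iff_ne_zero.mpr (by omega)
  have hsplit := Finset.sum_range_succ' (fun i => y i ^ 2) N
  -- hsplit : ∑ i ∈ range (N+1), y i ^2 = (∑ i ∈ range N, y (i+1)^2) + y 0 ^2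
  have e4 : ∑ i ∈ Finset.range N, y i ^ 2 ≤ ∑ i ∈ Finset.range (N + 1), y i ^ 2 :=
    Finset.sum_le_sum_of_subset_of_nonneg (Finset.range_subset_range.mpr (by omega))
      (fun i _ _ => sq_nonneg _)
  have e5 : ∑ i ∈ Finset.range N, y (i + 1) ^ 2 ≤ ∑ i ∈ Finset.range (N + 1), y i ^ 2 := by
    have := sq_nonneg (y 0); linarith [hsplit]
  constructor
  · -- lower bound
    have e1 : (N : ℝ) * Q0 = ∑ _i ∈ Finset.range N, Q0 := by
      rw [Finset.sum_const, Finset.card_range, nsmul_eq_mul]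
    have e2 : ∑ _i ∈ Finset.range N, Q0
        ≤ ∑ i ∈ Finset.range N, 2 * (y i ^ 2 + y (i + 1) ^ 2) :=
      Finset.sum_le_sum hpl
    have e3 : ∑ i ∈ Finset.range N, 2 * (y i ^ 2 + y (i + 1) ^ 2)
        = 2 * (∑ i ∈ Finset.range N, y i ^ 2) + 2 * (∑ i ∈ Finset.range N, y (i + 1) ^ 2) := by
      rw [Finset.mul_sum, Finset.mul_sum, ← Finset.sum_add_distrib]
      exact Finset.sum_congr rfl fun i _ => by ring
    have e6 : (N : ℝ) * (δ * M) ≤ (N : ℝ) * Q0 :=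
      mul_le_mul_of_nonneg_left hQlb (Nat.cast_nonneg N)
    linarith [e1, e2, e3, e4, e5, e6]
  · -- upper bound
    have u1 : ∑ i ∈ Finset.range N, δ * (y i ^ 2 + y (i + 1) ^ 2)
        ≤ ∑ _i ∈ Finset.range N, Q0 := Finset.sum_le_sum hpu
    have u1' : δ * ∑ i ∈ Finset.range N, (y i ^ 2 + y (i + 1) ^ 2)
        = ∑ i ∈ Finset.range N, δ * (y i ^ 2 + y (i + 1) ^ 2) := Finset.mul_sum _ _ _
    have u2 : (∑ _i ∈ Finset.range N, Q0) = (N : ℝ) * Q0 := by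
      rw [Finset.sum_const, Finset.card_range, nsmul_eq_mul]
    have u3 : (N : ℝ) * Q0 ≤ (N : ℝ) * (4 * M) :=
      mul_le_mul_of_nonneg_left hQub (Nat.cast_nonneg N)
    have u5 : ∑ i ∈ Finset.range N, y (i + 1) ^ 2
        ≤ ∑ i ∈ Finset.range N, (y i ^ 2 + y (i + 1) ^ 2) :=
      Finset.sum_le_sum fun i _ => le_add_of_nonneg_left (sq_nonneg _)
    have u5' : δ * ∑ i ∈ Finset.range N, y (i + 1) ^ 2
        ≤ δ * ∑ i ∈ Finset.range N, (y i ^ 2 + y (i + 1) ^ 2) :=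
      mul_le_mul_of_nonneg_left u5 hδ0.le
    have u6 : δ * y 0 ^ 2 ≤ Q0 := by
      have h := hpair_lb (y 0) (y 1)
      have : δ * y 0 ^ 2 ≤ δ * (y 0 ^ 2 + y 1 ^ 2) :=
        mul_le_mul_of_nonneg_left (le_add_of_nonneg_right (sq_nonneg _)) hδ0.le
      rw [hQ0_def]; linarith
    have hNM : (4 : ℝ) * M ≤ 4 * (N : ℝ) * M := by
      have h := mul_le_mul_of_nonneg_right hN1 hM0
      linarith
    have u7 : δ * ∑ i ∈ Finset.range (N + 1), y i ^ 2
        = δ * (∑ i ∈ Finset.range N, y (i + 1) ^ 2) + δ * y 0 ^ 2 := by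
      rw [hsplit]; ring
    rw [show (8:ℝ) / δ * (N:ℝ) * M = 8 * (N:ℝ) * M / δ by ring, le_div_iff₀ hδ0]
    linarith [u1, u1', u2, u3, u5', u6, u7, hNM, hQub]
end

section
/- Let α₀ = 0, αᵢ ≥ 0, β_{i-1} > 0, γᵢ > 0 (1 ≤ i ≤ n) be reals with γ₀ = β_n = 0, γ₁ = 1, and αᵢ + βᵢ + γᵢ = β₀ for all 1 ≤ i ≤ n. Define polynomials v₀(x) = 1, v₁(x) = x, and x·vᵢ(x) = β_{i-1} v_{i-1}(x) + αᵢvᵢ(x) + γ_{i+1}v_{i+1}(x) for 1 ≤ i ≤ n-1. Then for each 0 ≤ i ≤ n, the polynomial vᵢ has degree i and has exactly i distinct real roots, all lying in the closed interval [-β₀, β₀]. -/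
open Polynomial

lemma my_pos_cancel {c x : ℝ} (hc : 0 < c) (h : 0 < c * x) : 0 < x := by
  nlinarith

lemma my_chain {f : ℕ → ℝ} {a b : ℕ} (h : ∀ k, a ≤ k → k + 1 ≤ b → f k < f (k + 1)) :
    ∀ k l, a ≤ k → k < l → l ≤ b → f k < f l := by
  intro k l hak
  induction l with
  | zero => omega
  | succ m ih =>
    intro hkl hlb
    rcases Nat.lt_or_ge k m with h1 | h2
    · exact lt_trans (ih h1 (by omega)) (h m (by omega) hlb)
    · have hkm : k = m := by omega
      subst hkm
      exact h k hak hlb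

lemma my_root_between (p : Polynomial ℝ) {a b : ℝ} (hab : a < b)
    (hsign : p.eval a * p.eval b < 0) :
    ∃ c, a < c ∧ c < b ∧ p.eval c = 0 := by
  have hcont : ContinuousOn (fun x => p.eval x) (Set.Icc a b) :=
    (Polynomial.continuous p).continuousOn
  rcases mul_neg_iff.mp hsign with ⟨ha, hb⟩ | ⟨ha, hb⟩
  · obtain ⟨c, hc, hc0⟩ := intermediate_value_Ioo' hab.le hcont ⟨hb, ha⟩
    exact ⟨c, hc.1, hc.2, hc0⟩
  · obtain ⟨c, hc, hc0⟩ := intermediate_value_Ioo hab.le hcont ⟨ha, hb⟩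
    exact ⟨c, hc.1, hc.2, hc0⟩

lemma my_opp_sign {e : ℕ} {X Y : ℝ} (h1 : 0 < (-1 : ℝ) ^ (e + 1) * X)
    (h2 : 0 < (-1 : ℝ) ^ e * Y) : X * Y < 0 := by
  have he : ((-1 : ℝ) ^ e) * ((-1 : ℝ) ^ e) = 1 := by
    rw [← pow_add]
    exact Even.neg_one_pow ⟨e, rfl⟩
  have h := mul_pos h1 h2
  have heq : (-1 : ℝ) ^ (e + 1) * X * ((-1 : ℝ) ^ e * Y) =
      ((-1 : ℝ) ^ e * (-1 : ℝ) ^ e) * (-(X * Y)) := by ring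
  rw [heq, he, one_mul] at h
  linarith

lemma my_sign_neg_prod (s : Finset ℕ) (g : ℕ → ℝ) (h : ∀ j ∈ s, g j < 0) :
    0 < (-1 : ℝ) ^ s.card * ∏ j ∈ s, g j := by
  have h2 : ∏ j ∈ s, (-(g j)) = (-1 : ℝ) ^ s.card * ∏ j ∈ s, g j := by
    rw [Finset.prod_congr rfl (fun j _ => (neg_one_mul (g j)).symm), Finset.prod_mul_distrib,
      Finset.prod_const]
  rw [← h2]
  exact Finset.prod_pos fun j hj => neg_pos.mpr (h j hj)

lemma my_key_sign {c : ℝ} (hc : 0 < c) (i k : ℕ) (hk1 : 1 ≤ k) (hk2 : k ≤ i + 1)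
    (r : ℕ → ℝ) (x : ℝ)
    (hlow : ∀ j, 1 ≤ j → j < k → r j < x)
    (hhigh : ∀ j, k ≤ j → j ≤ i → x < r j) :
    0 < (-1 : ℝ) ^ (i + 1 - k) * (c * ∏ j ∈ Finset.Icc 1 i, (x - r j)) := by
  have hsplit : ∏ j ∈ Finset.Icc 1 i, (x - r j)
      = (∏ j ∈ Finset.Ico 1 k, (x - r j)) * ∏ j ∈ Finset.Ico k (i + 1), (x - r j) := by
    rw [← Finset.Ico_add_one_right_eq_Icc, ← Finset.prod_Ico_consecutive _ hk1 hk2]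
  have hA : 0 < ∏ j ∈ Finset.Ico 1 k, (x - r j) := by
    refine Finset.prod_pos fun j hj => ?_
    rw [Finset.mem_Ico] at hj
    have := hlow j hj.1 hj.2
    linarith
  have hB : 0 < (-1 : ℝ) ^ ((Finset.Ico k (i + 1)).card) *
      ∏ j ∈ Finset.Ico k (i + 1), (x - r j) := by
    refine my_sign_neg_prod _ _ fun j hj => ?_
    rw [Finset.mem_Ico] at hj
    have := hhigh j hj.1 (by omega)
    linarith
  rw [Nat.card_Ico] at hB
  rw [hsplit]
  set A := ∏ j ∈ Finset.Ico 1 k, (x - r j) with hAdef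
  set B := ∏ j ∈ Finset.Ico k (i + 1), (x - r j) with hBdef
  have : (-1 : ℝ) ^ (i + 1 - k) * (c * (A * B)) = (c * A) * ((-1 : ℝ) ^ (i + 1 - k) * B) := by
    ring
  rw [this]
  exact mul_pos (mul_pos hc hA) hB

lemma my_roots_eq (p : Polynomial ℝ) (i : ℕ) (r : ℕ → ℝ) (hp : p ≠ 0)
    (hdeg : p.natDegree = i)
    (hmono : ∀ k l, 1 ≤ k → k < l → l ≤ i → r k < r l)
    (hroot : ∀ k, 1 ≤ k → k ≤ i → p.eval (r k) = 0) :
    p.roots = (Finset.Icc 1 i).val.map r ∧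
    ∀ x, p.eval x = p.leadingCoeff * ∏ j ∈ Finset.Icc 1 i, (x - r j) := by
  set M := (Finset.Icc 1 i).val.map r with hMdef
  have hMnodup : M.Nodup := by
    refine Multiset.Nodup.map_on ?_ (Finset.Icc 1 i).nodup
    intro a ha b hb hab
    rw [Finset.mem_val, Finset.mem_Icc] at ha hb
    by_contra hne
    rcases Nat.lt_or_ge a b with h1 | h2
    · exact absurd hab (ne_of_lt (hmono a b ha.1 h1 hb.2))
    · have h3 : b < a := by omega
      exact absurd hab.symm (ne_of_lt (hmono b a hb.1 h3 ha.2))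
  have hmemM : ∀ x, x ∈ M ↔ ∃ k, 1 ≤ k ∧ k ≤ i ∧ r k = x := by
    intro x
    simp only [hMdef, Multiset.mem_map, Finset.mem_val, Finset.mem_Icc]
    constructor
    · rintro ⟨k, ⟨h1, h2⟩, h3⟩; exact ⟨k, h1, h2, h3⟩
    · rintro ⟨k, h1, h2, h3⟩; exact ⟨k, ⟨h1, h2⟩, h3⟩
  have hle : M ≤ p.roots := by
    rw [Multiset.le_iff_count]
    intro a
    by_cases ha : a ∈ M
    · rw [Multiset.count_eq_one_of_mem hMnodup ha]
      refine Multiset.one_le_count_iff_mem.mpr ?_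
      obtain ⟨k, h1, h2, h3⟩ := (hmemM a).mp ha
      rw [Polynomial.mem_roots hp, Polynomial.IsRoot, ← h3]
      exact hroot k h1 h2
    · rw [Multiset.count_eq_zero_of_notMem ha]
      exact Nat.zero_le _
  have hcardM : Multiset.card M = i := by
    rw [hMdef, Multiset.card_map, Finset.card_val, Nat.card_Icc]
    omega
  have hroots : p.roots = M := by
    refine (Multiset.eq_of_le_of_card_le hle ?_).symm
    rw [hcardM, ← hdeg]
    exact p.card_roots'
  refine ⟨hroots, fun x => ?_⟩
  have hfac := Polynomial.C_leadingCoeff_mul_prod_multiset_X_sub_C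
    (p := p) (by rw [hroots, hcardM, hdeg])
  conv_lhs => rw [← hfac]
  rw [hroots, hMdef]
  rw [Polynomial.eval_mul, Polynomial.eval_C, Polynomial.eval_multiset_prod]
  congr 1
  rw [Multiset.map_map, Multiset.map_map]
  rw [Finset.prod_eq_multiset_prod]
  refine congrArg Multiset.prod (Multiset.map_congr rfl ?_)
  intro j _
  simp

open Polynomial

theorem stmt_11 (n : ℕ) (hn : 1 ≤ n) (α β γ : ℕ → ℝ)
    (hα0 : α 0 = 0) (hγ0 : γ 0 = 0) (hβn : β n = 0) (hγ1 : γ 1 = 1)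
    (hpos : ∀ i, 1 ≤ i → i ≤ n → 0 ≤ α i ∧ 0 < β (i - 1) ∧ 0 < γ i)
    (hsum : ∀ i, 1 ≤ i → i ≤ n → α i + β i + γ i = β 0)
    (v : ℕ → Polynomial ℝ)
    (hv0 : v 0 = 1) (hv1 : v 1 = X)
    (hvrec : ∀ i, 1 ≤ i → i ≤ n - 1 →
      X * v i = C (β (i - 1)) * v (i - 1) + C (α i) * v i + C (γ (i + 1)) * v (i + 1)) :
    ∀ i, i ≤ n → (v i).natDegree = i ∧
      ∃ S : Finset ℝ, S.card = i ∧ (∀ x : ℝ, (v i).eval x = 0 ↔ x ∈ S) ∧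
        ∀ x ∈ S, -β 0 ≤ x ∧ x ≤ β 0 := by
  have hβ0 : 0 < β 0 := by simpa using (hpos 1 le_rfl hn).2.1
  have hrec : ∀ i, 1 ≤ i → i + 1 ≤ n →
      C (γ (i + 1)) * v (i + 1) = (X - C (α i)) * v i - C (β (i - 1)) * v (i - 1) := by
    intro i h1 h2
    have h := hvrec i h1 (by omega)
    linear_combination -h
  have hevalrec : ∀ i, 1 ≤ i → i + 1 ≤ n → ∀ x : ℝ,
      γ (i + 1) * (v (i + 1)).eval x
        = (x - α i) * (v i).eval x - β (i - 1) * (v (i - 1)).eval x := by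
    intro i h1 h2 x
    have h := congrArg (Polynomial.eval x) (hrec i h1 h2)
    simpa using h
  -- degrees and leading coefficients
  have hdegpair : ∀ i, 1 ≤ i → i ≤ n →
      ((v (i - 1)).natDegree = i - 1 ∧ 0 < (v (i - 1)).leadingCoeff) ∧
      ((v i).natDegree = i ∧ 0 < (v i).leadingCoeff) := by
    intro i hi
    induction i, hi using Nat.le_induction with
    | base =>
      intro _
      refine ⟨⟨?_, ?_⟩, ?_, ?_⟩ <;> simp [hv0, hv1]
    | succ m hm ih =>
      intro hmn
      obtain ⟨⟨hd0, hl0⟩, hd1, hl1⟩ := ih (by omega)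
      have hγ : 0 < γ (m + 1) := (hpos (m + 1) (by omega) hmn).2.2
      have hvm0 : v m ≠ 0 := leadingCoeff_ne_zero.mp hl1.ne'
      have hdA : ((X - C (α m)) * v m).natDegree = m + 1 := by
        rw [natDegree_mul (X_sub_C_ne_zero _) hvm0, natDegree_X_sub_C, hd1]
        omega
      have hdB : (C (β (m - 1)) * v (m - 1)).natDegree < m + 1 := by
        calc (C (β (m - 1)) * v (m - 1)).natDegree ≤ (v (m - 1)).natDegree :=
              natDegree_C_mul_le _ _
          _ < m + 1 := by omega
      have hdB' : (C (β (m - 1)) * v (m - 1)).natDegree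
          < ((X - C (α m)) * v m).natDegree := by omega
      have hsub : ((X - C (α m)) * v m - C (β (m - 1)) * v (m - 1)).natDegree = m + 1 := by
        rw [natDegree_sub_eq_left_of_natDegree_lt hdB', hdA]
      have hdeg1 : (v (m + 1)).natDegree = m + 1 := by
        have h1 : (C (γ (m + 1)) * v (m + 1)).natDegree = m + 1 := by
          rw [hrec m hm hmn]; exact hsub
        rwa [natDegree_C_mul hγ.ne'] at h1
      have hlc1 : 0 < (v (m + 1)).leadingCoeff := by
        have hcoeff : ((X - C (α m)) * v m - C (β (m - 1)) * v (m - 1)).coeff (m + 1)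
            = (v m).leadingCoeff := by
          rw [coeff_sub, coeff_eq_zero_of_natDegree_lt hdB, sub_zero]
          have : ((X - C (α m)) * v m).coeff (m + 1)
              = ((X - C (α m)) * v m).leadingCoeff := by
            conv_lhs => rw [← hdA]
            exact coeff_natDegree
          rw [this, leadingCoeff_mul, leadingCoeff_X_sub_C, one_mul]
        have hlcs : ((X - C (α m)) * v m - C (β (m - 1)) * v (m - 1)).leadingCoeff
            = (v m).leadingCoeff := by
          rw [leadingCoeff, hsub, hcoeff]
        have h2 : γ (m + 1) * (v (m + 1)).leadingCoeff = (v m).leadingCoeff := by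
          have h3 := congrArg Polynomial.leadingCoeff (hrec m hm hmn)
          rwa [leadingCoeff_mul, leadingCoeff_C, hlcs] at h3
        exact my_pos_cancel hγ (by rw [h2]; exact hl1)
      exact ⟨⟨by simpa using hd1, by simpa using hl1⟩, hdeg1, hlc1⟩
  have hdeg : ∀ i, i ≤ n → (v i).natDegree = i ∧ 0 < (v i).leadingCoeff := by
    intro i hi
    rcases Nat.eq_zero_or_pos i with h0 | h1
    · subst h0; exact (hdegpair 1 le_rfl hn).1
    · exact (hdegpair i h1 hi).2
  -- positivity at β 0
  have hPB : ∀ i, 1 ≤ i → i ≤ n → 0 < (v i).eval (β 0) ∧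
      β (i - 1) * (v (i - 1)).eval (β 0) ≤ γ i * (v i).eval (β 0) ∧
      0 < (v (i - 1)).eval (β 0) := by
    intro i hi
    induction i, hi using Nat.le_induction with
    | base =>
      intro _
      simp only [hv0, hv1, hγ1, eval_X, eval_one]
      norm_num
      exact hβ0
    | succ m hm ih =>
      intro hmn
      obtain ⟨h1, h2, h3⟩ := ih (by omega)
      have he := hevalrec m hm hmn (β 0)
      have hs := hsum m hm (by omega)
      have hβm : 0 < β m := by simpa using (hpos (m + 1) (by omega) hmn).2.1
      have hγm1 : 0 < γ (m + 1) := (hpos (m + 1) (by omega) hmn).2.2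
      rw [show β 0 - α m = β m + γ m by linarith] at he
      have hkey : β m * (v m).eval (β 0) ≤ γ (m + 1) * (v (m + 1)).eval (β 0) := by
        nlinarith [he, h2]
      have hpos1 : 0 < (v (m + 1)).eval (β 0) := by
        refine my_pos_cancel hγm1 ?_
        nlinarith [mul_pos hβm h1]
      exact ⟨hpos1, by simpa using hkey, by simpa using h1⟩
  -- positivity of (-1)^i * eval at -β 0
  have hQB : ∀ i, 1 ≤ i → i ≤ n → 0 < (-1 : ℝ) ^ i * (v i).eval (-β 0) ∧
      β (i - 1) * ((-1 : ℝ) ^ (i - 1) * (v (i - 1)).eval (-β 0)) ≤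
        γ i * ((-1 : ℝ) ^ i * (v i).eval (-β 0)) ∧
      0 < (-1 : ℝ) ^ (i - 1) * (v (i - 1)).eval (-β 0) := by
    intro i hi
    induction i, hi using Nat.le_induction with
    | base =>
      intro _
      simp only [hv0, hv1, hγ1, eval_X, eval_one, pow_one, pow_zero]
      norm_num
      exact hβ0
    | succ m hm ih =>
      intro hmn
      obtain ⟨h1, h2, h3⟩ := ih (by omega)
      have he := hevalrec m hm hmn (-β 0)
      have hs := hsum m hm (by omega)
      have hαm : 0 ≤ α m := (hpos m hm (by omega)).1
      have hβm : 0 < β m := by simpa using (hpos (m + 1) (by omega) hmn).2.1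
      have hγm1 : 0 < γ (m + 1) := (hpos (m + 1) (by omega) hmn).2.2
      have e1 : γ (m + 1) * ((-1 : ℝ) ^ (m + 1) * (v (m + 1)).eval (-β 0))
          = (β 0 + α m) * ((-1 : ℝ) ^ m * (v m).eval (-β 0))
            - β (m - 1) * ((-1 : ℝ) ^ (m - 1) * (v (m - 1)).eval (-β 0)) := by
        obtain ⟨l, rfl⟩ : ∃ l, m = l + 1 := ⟨m - 1, by omega⟩
        simp only [Nat.add_sub_cancel] at *
        linear_combination ((-1 : ℝ) ^ (l + 2)) * he
      rw [show β 0 + α m = 2 * α m + β m + γ m by linarith] at e1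
      have hkey : β m * ((-1 : ℝ) ^ m * (v m).eval (-β 0)) ≤
          γ (m + 1) * ((-1 : ℝ) ^ (m + 1) * (v (m + 1)).eval (-β 0)) := by
        nlinarith [e1, h2, mul_nonneg hαm h1.le]
      have hpos1 : 0 < (-1 : ℝ) ^ (m + 1) * (v (m + 1)).eval (-β 0) := by
        refine my_pos_cancel hγm1 ?_
        nlinarith [mul_pos hβm h1]
      exact ⟨hpos1, by simpa using hkey, by simpa using h1⟩
  -- main interlacing induction
  have hKey : ∀ i, 1 ≤ i → i ≤ n → ∃ r : ℕ → ℝ,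
      (∀ k, 1 ≤ k → k + 1 ≤ i → r k < r (k + 1)) ∧
      -β 0 < r 1 ∧ r i < β 0 ∧
      (∀ k, 1 ≤ k → k ≤ i → (v i).eval (r k) = 0) ∧
      (∀ k, 1 ≤ k → k ≤ i → 0 < (-1 : ℝ) ^ (i - k) * (v (i - 1)).eval (r k)) := by
    intro i hi
    induction i, hi using Nat.le_induction with
    | base =>
      intro _
      refine ⟨fun _ => 0, ?_, ?_, ?_, ?_, ?_⟩
      · intro k hk hk1; omega
      · show -β 0 < 0; linarith
      · show (0 : ℝ) < β 0; linarith
      · intro k _ _; simp [hv1]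
      · intro k hk hk1
        have hk' : (1 : ℕ) - k = 0 := by omega
        rw [hk']
        simp [hv0]
    | succ m hm ih =>
      intro hmn
      obtain ⟨r, hadj, hlo, hhi, hroot, hsign⟩ := ih (by omega)
      have hmono : ∀ k l, 1 ≤ k → k < l → l ≤ m → r k < r l := my_chain hadj
      set p : ℕ → ℝ := fun k => if k = 0 then -β 0 else if k ≤ m then r k else β 0 with hpdef
      have hp0 : p 0 = -β 0 := by simp [hpdef]
      have hpk : ∀ k, 1 ≤ k → k ≤ m → p k = r k := by
        intro k h1 h2
        simp only [hpdef]
        rw [if_neg (by omega), if_pos h2]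
      have hptop : p (m + 1) = β 0 := by
        simp only [hpdef]
        rw [if_neg (by omega), if_neg (by omega)]
      have hpadj : ∀ k, k + 1 ≤ m + 1 → p k < p (k + 1) := by
        intro k hk
        rcases Nat.eq_zero_or_pos k with rfl | hk1
        · rw [hp0, hpk 1 le_rfl hm]; exact hlo
        · rcases Nat.lt_or_ge (k + 1) (m + 1) with h2 | h2
          · rw [hpk k hk1 (by omega), hpk (k + 1) (by omega) (by omega)]
            exact hadj k hk1 (by omega)
          · have hkm : k = m := by omega
            rw [hkm, hpk m hm le_rfl, hptop]; exact hhi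
      have hpmono : ∀ k l, 0 ≤ k → k < l → l ≤ m + 1 → p k < p l :=
        my_chain (a := 0) (b := m + 1) (fun k _ hk => hpadj k hk)
      obtain ⟨hdm, hlm⟩ := hdeg m (by omega)
      have hvm0 : v m ≠ 0 := leadingCoeff_ne_zero.mp hlm.ne'
      obtain ⟨hrts, heval⟩ := my_roots_eq (v m) m r hvm0 hdm hmono hroot
      have hγm1 : 0 < γ (m + 1) := (hpos (m + 1) (by omega) hmn).2.2
      have hsignp : ∀ k, k ≤ m + 1 →
          0 < (-1 : ℝ) ^ (m + 1 - k) * (v (m + 1)).eval (p k) := by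
        intro k hk
        rcases Nat.eq_zero_or_pos k with rfl | hk1
        · rw [hp0]; simpa using (hQB (m + 1) (by omega) hmn).1
        · rcases Nat.lt_or_ge k (m + 1) with h2 | h2
          · have hkm : k ≤ m := by omega
            rw [hpk k hk1 hkm]
            have he := hevalrec m hm hmn (r k)
            rw [hroot k hk1 hkm, mul_zero, zero_sub] at he
            have hβm1 : 0 < β (m - 1) := (hpos m hm (by omega)).2.1
            have hs := hsign k hk1 hkm
            refine my_pos_cancel hγm1 ?_
            have h2' : 0 < (-1 : ℝ) ^ (m + 1 - k) *
                (γ (m + 1) * (v (m + 1)).eval (r k)) := by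
              rw [he]
              have hexp : m + 1 - k = (m - k) + 1 := by omega
              rw [hexp, pow_succ]
              calc (0 : ℝ) < β (m - 1) * ((-1 : ℝ) ^ (m - k) * (v (m - 1)).eval (r k)) :=
                    mul_pos hβm1 hs
                _ = (-1 : ℝ) ^ (m - k) * (-1) *
                    -(β (m - 1) * (v (m - 1)).eval (r k)) := by ring
            calc (0 : ℝ) < (-1 : ℝ) ^ (m + 1 - k) * (γ (m + 1) * (v (m + 1)).eval (r k)) :=
                  h2'
              _ = γ (m + 1) * ((-1 : ℝ) ^ (m + 1 - k) * (v (m + 1)).eval (r k)) := by ring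
          · have hkm : k = m + 1 := by omega
            subst hkm
            rw [hptop]; simpa using (hPB (m + 1) (by omega) hmn).1
      have hex : ∀ k, 1 ≤ k → k ≤ m + 1 →
          ∃ c, p (k - 1) < c ∧ c < p k ∧ (v (m + 1)).eval c = 0 := by
        intro k h1 h2
        have ha := hsignp (k - 1) (by omega)
        have hb := hsignp k (by omega)
        have hexp : m + 1 - (k - 1) = (m + 1 - k) + 1 := by omega
        rw [hexp] at ha
        exact my_root_between (v (m + 1)) (hpmono (k - 1) k (by omega) (by omega) (by omega))
          (my_opp_sign ha hb)
      have hex' : ∀ k, ∃ c, 1 ≤ k → k ≤ m + 1 →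
          p (k - 1) < c ∧ c < p k ∧ (v (m + 1)).eval c = 0 := by
        intro k
        by_cases h : 1 ≤ k ∧ k ≤ m + 1
        · obtain ⟨c, hc⟩ := hex k h.1 h.2
          exact ⟨c, fun _ _ => hc⟩
        · exact ⟨0, fun h1 h2 => absurd ⟨h1, h2⟩ h⟩
      choose r' hr' using hex'
      refine ⟨r', ?_, ?_, ?_, ?_, ?_⟩
      · intro k hk hk1
        have h1 := hr' k hk (by omega)
        have h2 := hr' (k + 1) (by omega) hk1
        rw [Nat.add_sub_cancel] at h2
        exact lt_trans h1.2.1 h2.1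
      · have h1 := hr' 1 le_rfl (by omega)
        rw [show (1 : ℕ) - 1 = 0 from rfl, hp0] at h1
        exact h1.1
      · have h1 := hr' (m + 1) (by omega) le_rfl
        rw [hptop] at h1
        exact h1.2.1
      · intro k hk1 hk2
        exact (hr' k hk1 hk2).2.2
      · intro k hk1 hk2
        have hc := hr' k hk1 hk2
        rw [show m + 1 - 1 = m from rfl, heval (r' k)]
        refine my_key_sign hlm m k hk1 hk2 r (r' k) ?_ ?_
        · intro j hj1 hj2
          have hpj : p j = r j := hpk j hj1 (by omega)
          rcases Nat.lt_or_ge j (k - 1) with h3 | h4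
          · calc r j = p j := hpj.symm
              _ < p (k - 1) := hpmono j (k - 1) (by omega) h3 (by omega)
              _ < r' k := hc.1
          · have : j = k - 1 := by omega
            subst this
            rw [← hpj]; exact hc.1
        · intro j hj1 hj2
          have hpj : p j = r j := hpk j (by omega) hj2
          rcases Nat.lt_or_ge k j with h3 | h4
          · calc r' k < p k := hc.2.1
              _ < p j := hpmono k j (by omega) h3 (by omega)
              _ = r j := hpj
          · have : j = k := by omega
            subst this
            rw [← hpj]; exact hc.2.1
  -- final assembly
  intro i hi
  rcases Nat.eq_zero_or_pos i with rfl | hi1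
  · refine ⟨by simp [hv0], ∅, by simp, ?_, by simp⟩
    intro x; simp [hv0]
  · obtain ⟨hdi, hli⟩ := hdeg i hi
    obtain ⟨r, hadj, hlo, hhi, hroot, -⟩ := hKey i hi1 hi
    have hmono : ∀ k l, 1 ≤ k → k < l → l ≤ i → r k < r l := my_chain hadj
    have hvi0 : v i ≠ 0 := leadingCoeff_ne_zero.mp hli.ne'
    obtain ⟨hrts, -⟩ := my_roots_eq (v i) i r hvi0 hdi hmono hroot
    have hinj : Set.InjOn r (Finset.Icc 1 i) := by
      intro a ha b hb hab
      rw [Finset.coe_Icc, Set.mem_Icc] at ha hb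
      by_contra hne
      rcases Nat.lt_or_ge a b with h1 | h2
      · exact absurd hab (ne_of_lt (hmono a b ha.1 h1 hb.2))
      · have h3 : b < a := by omega
        exact absurd hab.symm (ne_of_lt (hmono b a hb.1 h3 ha.2))
    refine ⟨hdi, (Finset.Icc 1 i).image r, ?_, ?_, ?_⟩
    · rw [Finset.card_image_of_injOn hinj, Nat.card_Icc]; omega
    · intro x
      constructor
      · intro hx
        have hxr : x ∈ (v i).roots := by
          rw [mem_roots hvi0]; exact hx
        rw [hrts] at hxr
        obtain ⟨k, hk, rfl⟩ := Multiset.mem_map.mp hxr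
        rw [Finset.mem_val] at hk
        exact Finset.mem_image.mpr ⟨k, hk, rfl⟩
      · intro hx
        obtain ⟨k, hk, rfl⟩ := Finset.mem_image.mp hx
        rw [Finset.mem_Icc] at hk
        exact hroot k hk.1 hk.2
    · intro x hx
      obtain ⟨k, hk, rfl⟩ := Finset.mem_image.mp hx
      rw [Finset.mem_Icc] at hk
      have hl : -β 0 < r k := by
        rcases Nat.lt_or_ge 1 k with h1 | h2
        · exact lt_trans hlo (hmono 1 k le_rfl h1 hk.2)
        · have : k = 1 := by omega
          subst this; exact hlo
      have hr : r k < β 0 := by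
        rcases Nat.lt_or_ge k i with h1 | h2
        · exact lt_trans (hmono k i hk.1 h1 le_rfl) hhi
        · have : k = i := by omega
          subst this; exact hhi
      exact ⟨hl.le, hr.le⟩
end

section
/- Let L₁ be an (n+1)×(n+1) tridiagonal matrix with nonnegative integer entries: diagonal (α₀,…,α_n) with α₀ = 0, superdiagonal (β₀,…,β_{n-1}) and subdiagonal (γ₁,…,γ_n), all β_{i-1}, γᵢ > 0, with αᵢ + βᵢ + γᵢ = β₀ for 1 ≤ i ≤ n, β_{i-1} ≥ βᵢ and γᵢ ≥ γ_{i-1} for all 1 ≤ i ≤ n. Fix an index i with 1 ≤ i ≤ n-1 and let ℓ := |{1 ≤ j ≤ n-1 : (γⱼ, αⱼ, βⱼ) = (γᵢ, αᵢ, βᵢ)}|. If ℓ ≥ 2, then L₁ has a real eigenvalue θ with αᵢ + 2√(βᵢγᵢ)cos(2π/(ℓ+1)) ≤ θ < β₀. -/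
/-!
Conjugating by the diagonal matrix `D = diag(∏_{k<i} √(βₖ/γₖ₊₁))` turns `L₁` into a symmetric
tridiagonal matrix `S`, with off-diagonal entries `√(βᵢγᵢ₊₁)` and Perron eigenvector `D𝟙` for
the eigenvalue `β₀`. Since `β` decreases and `γ` increases, the rows with the triple
`(γᵢ, αᵢ, βᵢ)` form a run of `ℓ` consecutive indices, on which `S` acts as the `ℓ × ℓ` Toeplitz
matrix with diagonal `αᵢ` and off-diagonal `√(βᵢγᵢ)`. Its sine eigenvectors for `k = 1, 2`, with
eigenvalues `αᵢ + 2√(βᵢγᵢ) cos(kπ/(ℓ+1))`, span a plane which meets `(D𝟙)ᗮ`, and there the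
Rayleigh quotient of `S` is at least the value for `k = 2`. Maximising the Rayleigh quotient of
`S` on the invariant subspace `(D𝟙)ᗮ` yields an eigenvalue `θ` above the bound. Gershgorin gives
`θ ≤ β₀` (the rows of `L₁` are nonnegative with sum `β₀`), and `θ ≠ β₀` because an eigenvector
of a tridiagonal matrix with nonzero superdiagonal is determined by its first entry.
-/

open Real Matrix Module.End

theorem Fin.sum_ite_val_eq {M : Type*} [AddCommMonoid M] (m k : ℕ) (x : M) :
    ∑ j : Fin m, (if (j : ℕ) = k then x else 0) = if k < m then x else 0 := by
  simp [Fin.sum_univ_eq_sum_range (fun j => if j = k then x else 0)]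

theorem Finset.eq_Icc_min'_max' {α : Type*} [LinearOrder α] [LocallyFiniteOrder α]
    {s : Finset α} (hs : s.Nonempty) (h : (s : Set α).OrdConnected) :
    s = Finset.Icc (s.min' hs) (s.max' hs) := by
  ext x
  rw [Finset.mem_Icc]
  exact ⟨fun hx => ⟨s.min'_le x hx, s.le_max' x hx⟩,
    fun hx => h.out (s.min'_mem hs) (s.max'_mem hs) hx⟩

theorem Finset.Nat.exists_eq_Ico_of_ordConnected {s : Finset ℕ} (h : (s : Set ℕ).OrdConnected) :
    ∃ p, s = Finset.Ico p (p + s.card) := by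
  rcases s.eq_empty_or_nonempty with rfl | hs
  · exact ⟨0, by simp⟩
  have hIcc := Finset.eq_Icc_min'_max' hs h
  have hcard := congrArg Finset.card hIcc
  rw [Nat.card_Icc] at hcard
  have hle := s.min'_le _ (s.max'_mem hs)
  refine ⟨s.min' hs, ?_⟩
  conv_lhs => rw [hIcc]
  rw [← Finset.Ico_add_one_right_eq_Icc]
  congr 1
  omega

theorem sin_mul_add_sin_mul_add_two (θ t : ℝ) :
    sin (θ * t) + sin (θ * (t + 2)) = 2 * cos θ * sin (θ * (t + 1)) := by
  rw [show θ * t = θ * (t + 1) - θ by ring, show θ * (t + 2) = θ * (t + 1) + θ by ring,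
    sin_sub, sin_add]
  ring

theorem sqrt_mul_mul_sqrt_div {x y : ℝ} (hx : 0 ≤ x) (hy : 0 < y) : √(x * y) * √(x / y) = x := by
  rw [← sqrt_mul (by positivity), show x * y * (x / y) = x ^ 2 by field_simp, sqrt_sq hx]

theorem sqrt_div_mul_self {x y : ℝ} (hx : 0 ≤ x) (hy : 0 < y) : √(x / y) * y = √(x * y) := by
  rw [show x * y = x / y * y ^ 2 by field_simp, sqrt_mul (by positivity), sqrt_sq hy.le]

namespace LinearMap.IsSymmetric

variable {E : Type*} [NormedAddCommGroup E] [InnerProductSpace ℝ E] [FiniteDimensional ℝ E]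
  {T : E →ₗ[ℝ] E}

theorem exists_hasEigenvector_mem_of_le_inner (hT : T.IsSymmetric) {K : Submodule ℝ E}
    (hK : ∀ v ∈ K, T v ∈ K) {x : E} (hxK : x ∈ K) (hx : x ≠ 0) {c : ℝ}
    (hc : c * ‖x‖ ^ 2 ≤ inner ℝ (T x) x) :
    ∃ μ y, c ≤ μ ∧ y ∈ K ∧ HasEigenvector T μ y := by
  set T' := T.restrict hK
  have hx' : (⟨x, hxK⟩ : K) ≠ 0 := by simpa using hx
  have : Nontrivial K := ⟨⟨_, 0, hx'⟩⟩
  set μ := ⨆ z : {z : K // z ≠ 0}, RCLike.re (inner ℝ (T' z) (z : K)) / ‖(z : K)‖ ^ 2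
  obtain ⟨y, hy⟩ :=
    ((hT.restrict_invariant hK).hasEigenvalue_iSup_of_finiteDimensional).exists_hasEigenvector
  refine ⟨μ, y, ?_, y.2, ?_, by simpa using hy.2⟩
  · have hbdd : BddAbove (Set.range fun z : {z : K // z ≠ 0} =>
        RCLike.re (inner ℝ (T' z) (z : K)) / ‖(z : K)‖ ^ 2) := by
      obtain ⟨C, hC⟩ := (LinearMap.toContinuousLinearMap T').bddAbove_rayleighQuotient
      refine ⟨C, ?_⟩
      rintro _ ⟨z, rfl⟩
      exact (le_abs_self _).trans (hC ⟨z, rfl⟩)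
    refine le_trans ?_ (le_ciSup hbdd ⟨_, hx'⟩)
    exact (le_div_iff₀ (pow_pos (norm_pos_iff.mpr hx) 2)).mpr hc
  · exact mem_eigenspace_iff.mpr (congrArg Subtype.val hy.apply_eq_smul)

end LinearMap.IsSymmetric

namespace Matrix

variable {ι : Type*} [Fintype ι]

theorem dotProduct_self_pos {v : ι → ℝ} (hv : v ≠ 0) : 0 < v ⬝ᵥ v :=
  lt_of_le_of_ne (by simpa using dotProduct_star_self_nonneg v)
    (Ne.symm (dotProduct_self_eq_zero.not.mpr hv))

theorem exists_orthogonal_le_dotProduct_mulVec {A : Matrix ι ι ℝ} (hA : Aᵀ = A)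
    {u₁ u₂ : ι → ℝ} (hu₁ : u₁ ≠ 0) (hu₂ : u₂ ≠ 0) {μ₁ μ₂ : ℝ} (hμ : μ₂ < μ₁)
    (h₁₁ : u₁ ⬝ᵥ A *ᵥ u₁ = μ₁ * (u₁ ⬝ᵥ u₁)) (h₂₁ : u₂ ⬝ᵥ A *ᵥ u₁ = μ₁ * (u₂ ⬝ᵥ u₁))
    (h₁₂ : u₁ ⬝ᵥ A *ᵥ u₂ = μ₂ * (u₁ ⬝ᵥ u₂)) (h₂₂ : u₂ ⬝ᵥ A *ᵥ u₂ = μ₂ * (u₂ ⬝ᵥ u₂))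
    (w : ι → ℝ) : ∃ x, x ≠ 0 ∧ x ⬝ᵥ w = 0 ∧ μ₂ * (x ⬝ᵥ x) ≤ x ⬝ᵥ A *ᵥ x := by
  have hsymm : u₂ ⬝ᵥ A *ᵥ u₁ = u₁ ⬝ᵥ A *ᵥ u₂ := by
    rw [dotProduct_mulVec, ← mulVec_transpose, hA, dotProduct_comm]
  have horth : u₁ ⬝ᵥ u₂ = 0 := by
    have : (μ₁ - μ₂) * (u₁ ⬝ᵥ u₂) = 0 := by
      rw [h₂₁, h₁₂, dotProduct_comm u₂] at hsymm
      linear_combination hsymm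
    exact (mul_eq_zero.mp this).resolve_left (sub_ne_zero.mpr hμ.ne')
  have hN₁ := dotProduct_self_pos hu₁
  have hN₂ := dotProduct_self_pos hu₂
  by_cases hp₁ : u₁ ⬝ᵥ w = 0
  · exact ⟨u₁, hu₁, hp₁, by rw [h₁₁]; nlinarith⟩
  set p₁ := u₁ ⬝ᵥ w
  set p₂ := u₂ ⬝ᵥ w
  refine ⟨p₂ • u₁ - p₁ • u₂, ?_, ?_, ?_⟩
  · intro h
    have := congrArg (· ⬝ᵥ u₂) h
    simp only [sub_dotProduct, smul_dotProduct, horth, zero_dotProduct, smul_eq_mul] at this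
    exact hp₁ (by nlinarith)
  · simp only [sub_dotProduct, smul_dotProduct, smul_eq_mul]
    ring
  · simp only [sub_dotProduct, dotProduct_sub, smul_dotProduct, dotProduct_smul, mulVec_sub,
      mulVec_smul, smul_eq_mul, h₁₁, h₂₁, h₁₂, h₂₂, horth, dotProduct_comm u₂ u₁]
    nlinarith [mul_pos (mul_self_pos.mpr hp₁) hN₂, mul_nonneg (mul_self_nonneg p₂) hN₁.le]

variable [DecidableEq ι]

theorem IsHermitian.exists_eigenvector_orthogonal_of_le {A : Matrix ι ι ℝ} (hA : A.IsHermitian)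
    {w : ι → ℝ} {s : ℝ} (hw : A *ᵥ w = s • w) {x : ι → ℝ} (hx : x ≠ 0) (hxw : x ⬝ᵥ w = 0)
    {c : ℝ} (hc : c * (x ⬝ᵥ x) ≤ x ⬝ᵥ A *ᵥ x) :
    ∃ μ y, c ≤ μ ∧ y ⬝ᵥ w = 0 ∧ y ≠ 0 ∧ A *ᵥ y = μ • y := by
  set T := toEuclideanLin A
  have hT : T.IsSymmetric := isSymmetric_toEuclideanLin_iff.mpr hA
  have hinner (u v : ι → ℝ) : inner ℝ (WithLp.toLp 2 u) (WithLp.toLp 2 v) = u ⬝ᵥ v := by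
    rw [EuclideanSpace.inner_toLp_toLp, star_trivial, dotProduct_comm]
  set K := (ℝ ∙ WithLp.toLp 2 w)ᗮ
  have hmem (v : ι → ℝ) : WithLp.toLp 2 v ∈ K ↔ v ⬝ᵥ w = 0 := by
    rw [Submodule.mem_orthogonal_singleton_iff_inner_right, hinner, dotProduct_comm]
  have hK : ∀ v ∈ K, T v ∈ K := by
    intro v hv
    rw [Submodule.mem_orthogonal_singleton_iff_inner_right] at hv ⊢
    rw [← hT, toLpLin_toLp, toLin'_apply, hw, WithLp.toLp_smul, inner_smul_left, hv, mul_zero]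
  obtain ⟨μ, y, hcμ, hyK, hy⟩ := hT.exists_hasEigenvector_mem_of_le_inner hK
    ((hmem x).mpr hxw) (by simpa using hx) (c := c) (by
      rw [← real_inner_self_eq_norm_sq, toLpLin_toLp, toLin'_apply, hinner, hinner,
        dotProduct_comm (A *ᵥ x)]
      exact hc)
  exact ⟨μ, y.ofLp, hcμ, (hmem _).mp hyK, by simpa using hy.2,
    congrArg WithLp.ofLp hy.apply_eq_smul⟩

theorem le_of_hasEigenvalue_of_nonneg {A : Matrix ι ι ℝ} (hA : ∀ i j, 0 ≤ A i j) {s : ℝ}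
    (hs : ∀ i, ∑ j, A i j ≤ s) {μ : ℝ} (hμ : HasEigenvalue (toLin' A) μ) : μ ≤ s := by
  obtain ⟨k, hk⟩ := eigenvalue_mem_ball hμ
  rw [Metric.mem_closedBall, Real.dist_eq] at hk
  have hrow : A k k + ∑ j ∈ Finset.univ.erase k, ‖A k j‖ = ∑ j, A k j := by
    simp only [Real.norm_of_nonneg (hA k _)]
    exact Finset.add_sum_erase _ _ (Finset.mem_univ k)
  linarith [le_abs_self (μ - A k k), hs k]

theorem hasEigenvalue_of_diagonal_mul_eq {K : Type*} [Field K] {A B : Matrix ι ι K} {d : ι → K}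
    (hd : ∀ i, d i ≠ 0) (h : diagonal d * A = B * diagonal d) {μ : K}
    (hμ : HasEigenvalue (toLin' B) μ) : HasEigenvalue (toLin' A) μ := by
  obtain ⟨y, hy, hy0⟩ := hμ.exists_hasEigenvector
  rw [mem_eigenspace_iff, toLin'_apply] at hy
  have hinv : diagonal d * diagonal d⁻¹ = 1 := by
    rw [diagonal_mul_diagonal, ← diagonal_one]
    congr 1; ext i; simp [hd i]
  have hinv' : diagonal d⁻¹ * diagonal d = 1 := by
    rw [← hinv, diagonal_mul_diagonal, diagonal_mul_diagonal]
    simp only [mul_comm]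
  have hA : A = diagonal d⁻¹ * B * diagonal d := by
    rw [mul_assoc, ← h, ← mul_assoc, hinv', one_mul]
  refine hasEigenvalue_of_hasEigenvector (x := diagonal d⁻¹ *ᵥ y) ⟨?_, ?_⟩
  · rw [mem_eigenspace_iff, toLin'_apply, hA, ← mulVec_mulVec, mulVec_mulVec _ (diagonal d),
      hinv, one_mulVec, ← mulVec_mulVec, hy, mulVec_smul]
  · intro h0
    apply hy0
    rw [← one_mulVec y, ← hinv, ← mulVec_mulVec, h0, mulVec_zero]

end Matrix

section Tridiag

variable {R : Type*} {n : ℕ} {a b c : ℕ → R}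

def tridiag [Zero R] (n : ℕ) (a b c : ℕ → R) : Matrix (Fin (n + 1)) (Fin (n + 1)) R :=
  Matrix.of fun i j =>
    if (j : ℕ) = i + 1 then b i else if (i : ℕ) = j + 1 then c i else if (i : ℕ) = j then a i else 0

-- `c 0 = 0` and `b n = 0` kill the out-of-range terms, where `f (0 - 1) = f 0` and `f (n + 1)`.
theorem tridiag_mulVec_apply [NonUnitalNonAssocSemiring R] (hc : c 0 = 0) (hb : b n = 0)
    (f : ℕ → R) (i : Fin (n + 1)) :
    (tridiag n a b c *ᵥ fun j => f j) i = c i * f (i - 1) + a i * f i + b i * f (i + 1) := by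
  have hrow (j : Fin (n + 1)) : tridiag n a b c i j * f j =
      (if (j : ℕ) = i - 1 then c i * f (i - 1) else 0) +
      (if (j : ℕ) = i then a i * f i else 0) +
      (if (j : ℕ) = i + 1 then b i * f (i + 1) else 0) := by
    simp only [tridiag, of_apply]
    by_cases hi : (i : ℕ) = 0
    · simp only [hi, hc, zero_mul]
      split_ifs <;> first | (exfalso; omega) | simp only [add_zero, zero_add, zero_mul]
      all_goals congr 2
    split_ifs <;> first | (exfalso; omega) | simp only [add_zero, zero_add, zero_mul]
    all_goals congr 2
  have hi := i.isLt
  simp only [mulVec, dotProduct, hrow, Finset.sum_add_distrib, Fin.sum_ite_val_eq]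
  by_cases hin : (i : ℕ) = n
  · simp [hin, hb]
  · rw [if_pos (by omega), if_pos hi, if_pos (by omega)]

theorem transpose_tridiag [Zero R] (h : ∀ i, c (i + 1) = b i) :
    (tridiag n a b c)ᵀ = tridiag n a b c := by
  ext i j
  simp only [transpose_apply, tridiag, of_apply]
  split_ifs <;> grind

theorem diagonal_mul_tridiag [CommSemiring R] {b' c' : ℕ → R} (d : ℕ → R)
    (hb : ∀ i < n, d i * b i = b' i * d (i + 1))
    (hc : ∀ i < n, d (i + 1) * c (i + 1) = c' (i + 1) * d i) :
    diagonal (fun j : Fin (n + 1) => d j) * tridiag n a b c =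
      tridiag n a b' c' * diagonal (fun j : Fin (n + 1) => d j) := by
  ext i j
  simp only [diagonal_mul, mul_diagonal, tridiag, of_apply]
  split_ifs with h₁ h₂ h₃
  · rw [h₁]; exact hb i (by omega)
  · rw [h₂]; exact hc j (by omega)
  · rw [h₃, mul_comm]
  · simp

theorem tridiag_eigenvector_eq_zero [NonUnitalNonAssocSemiring R] [NoZeroDivisors R]
    (hc : c 0 = 0) (hb : b n = 0) (hb' : ∀ i < n, b i ≠ 0) {μ : R} {v : Fin (n + 1) → R}
    (hv : tridiag n a b c *ᵥ v = μ • v) (h0 : v 0 = 0) : v = 0 := by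
  set f : ℕ → R := fun k => if h : k < n + 1 then v ⟨k, h⟩ else 0
  have hvf : v = fun j : Fin (n + 1) => f j := by
    ext j; simp [f, Nat.lt_succ_iff.mp j.isLt]
  rw [hvf] at hv h0 ⊢
  have hf : ∀ k ≤ n, f (k - 1) = 0 ∧ f k = 0 := by
    intro k hk
    induction k with
    | zero => exact ⟨h0, h0⟩
    | succ k ih =>
      obtain ⟨hprev, hk'⟩ := ih (by omega)
      have hrow := congrFun hv ⟨k, by omega⟩
      simp only [tridiag_mulVec_apply hc hb, Pi.smul_apply, smul_eq_mul, hprev, hk',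
        mul_zero, zero_add] at hrow
      exact ⟨hk', (mul_eq_zero.mp hrow).resolve_left (hb' k (by omega))⟩
  ext j
  exact (hf j (by omega)).2

end Tridiag

theorem tridiag_eigenvector_eq_zero_of_orthogonal {n : ℕ} {a b c : ℕ → ℝ} (hc : c 0 = 0)
    (hb : b n = 0) (hb' : ∀ i < n, b i ≠ 0) {μ : ℝ} {v w : Fin (n + 1) → ℝ}
    (hv : tridiag n a b c *ᵥ v = μ • v) (hw : tridiag n a b c *ᵥ w = μ • w) (hw0 : w 0 ≠ 0)
    (hvw : v ⬝ᵥ w = 0) : v = 0 := by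
  have hz : w 0 • v - v 0 • w = 0 := by
    refine tridiag_eigenvector_eq_zero (a := a) hc hb hb' (μ := μ) ?_ ?_
    · rw [mulVec_sub, mulVec_smul, mulVec_smul, hv, hw, smul_sub, smul_comm μ, smul_comm μ]
    · simp [mul_comm]
  have hww : 0 < w ⬝ᵥ w := dotProduct_self_pos fun h => hw0 (by simp [h])
  have hv0 : v 0 = 0 := by
    have := congrArg (· ⬝ᵥ w) hz
    simp only [sub_dotProduct, smul_dotProduct, hvw, smul_eq_mul, zero_dotProduct] at this
    nlinarith
  rw [hv0, zero_smul, sub_zero] at hz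
  exact (smul_eq_zero.mp hz).resolve_left hw0

noncomputable def symmWeight (b c : ℕ → ℝ) (i : ℕ) : ℝ :=
  ∏ k ∈ Finset.range i, √(b k / c (k + 1))

theorem symmWeight_succ (b c : ℕ → ℝ) (i : ℕ) :
    symmWeight b c (i + 1) = symmWeight b c i * √(b i / c (i + 1)) :=
  Finset.prod_range_succ _ _

theorem symmWeight_pos {b c : ℕ → ℝ} {i : ℕ} (hb : ∀ k < i, 0 < b k)
    (hc : ∀ k < i, 0 < c (k + 1)) : 0 < symmWeight b c i :=
  Finset.prod_pos fun k hk =>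
    sqrt_pos.mpr (div_pos (hb k (Finset.mem_range.mp hk)) (hc k (Finset.mem_range.mp hk)))

noncomputable def symmTridiag (n : ℕ) (a b c : ℕ → ℝ) : Matrix (Fin (n + 1)) (Fin (n + 1)) ℝ :=
  tridiag n a (fun i => √(b i * c (i + 1))) (fun i => √(b (i - 1) * c i))

theorem transpose_symmTridiag (n : ℕ) (a b c : ℕ → ℝ) :
    (symmTridiag n a b c)ᵀ = symmTridiag n a b c :=
  transpose_tridiag fun i => by simp

theorem diagonal_symmWeight_mul_tridiag {n : ℕ} {a b c : ℕ → ℝ} (hb : ∀ i < n, 0 ≤ b i)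
    (hc : ∀ i < n, 0 < c (i + 1)) :
    diagonal (fun j : Fin (n + 1) => symmWeight b c j) * tridiag n a b c =
      symmTridiag n a b c * diagonal (fun j : Fin (n + 1) => symmWeight b c j) := by
  refine diagonal_mul_tridiag _ (fun i hi => ?_) (fun i hi => ?_)
  · rw [symmWeight_succ, mul_left_comm, sqrt_mul_mul_sqrt_div (hb i hi) (hc i hi), mul_comm]
  · rw [symmWeight_succ, mul_assoc, sqrt_div_mul_self (hb i hi) (hc i hi), Nat.add_sub_cancel,
      mul_comm]

-- The `k`-th eigenvector of the `ℓ × ℓ` tridiagonal Toeplitz matrix, placed on `p, …, p + ℓ - 1`.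
noncomputable def blockSine (p ℓ k j : ℕ) : ℝ :=
  if p ≤ j ∧ j < p + ℓ then sin (k * π / (ℓ + 1) * (j + 1 - p : ℕ)) else 0

theorem blockSine_self_pos {p ℓ k : ℕ} (hk : 0 < k) (hkℓ : k ≤ ℓ) : 0 < blockSine p ℓ k p := by
  rw [blockSine, if_pos ⟨le_rfl, by omega⟩, Nat.add_sub_cancel_left, Nat.cast_one, mul_one]
  have hk' : (k : ℝ) < ℓ + 1 := by exact_mod_cast Nat.lt_succ_of_le hkℓ
  apply sin_pos_of_pos_of_lt_pi (by positivity)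
  rw [div_lt_iff₀ (by positivity)]
  nlinarith [pi_pos]

section BlockSine

variable {n p ℓ : ℕ} {a b c : ℕ → ℝ} {a₀ r : ℝ}

theorem tridiag_mulVec_blockSine (hc0 : c 0 = 0) (hbn : b n = 0)
    (ha : ∀ j, p ≤ j → j < p + ℓ → a j = a₀) (hb : ∀ j, p ≤ j → j + 1 < p + ℓ → b j = r)
    (hc : ∀ j, p < j → j < p + ℓ → c j = r) (k : ℕ) (i : Fin (n + 1)) (hpi : p ≤ i)
    (hiℓ : i < p + ℓ) :
    (tridiag n a b c *ᵥ fun j => blockSine p ℓ k j) i =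
      (a₀ + 2 * r * cos (k * π / (ℓ + 1))) * blockSine p ℓ k i := by
  set θ : ℝ := k * π / (ℓ + 1)
  obtain ⟨t, ht⟩ : ∃ t, (i : ℕ) = p + t := ⟨i - p, by omega⟩
  have hmid : blockSine p ℓ k i = sin (θ * (t + 1)) := by
    rw [blockSine, if_pos ⟨hpi, hiℓ⟩, ht]
    push_cast [show p + t + 1 - p = t + 1 by omega]
    rfl
  -- the sine vanishes at both ends of the block, so the boundary rows need no special form
  have hlow : c i * blockSine p ℓ k (i - 1) = r * sin (θ * t) := by
    rcases Nat.eq_zero_or_pos t with rfl | ht0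
    · rw [Nat.cast_zero, mul_zero, sin_zero, mul_zero]
      rcases Nat.eq_zero_or_pos p with hp | hp
      · rw [show (i : ℕ) = 0 by omega, hc0, zero_mul]
      · rw [blockSine, if_neg (by omega), mul_zero]
    · rw [hc i (by omega) hiℓ, blockSine, if_pos ⟨by omega, by omega⟩]
      push_cast [show (i : ℕ) - 1 + 1 - p = t by omega]
      rfl
  have hhigh : b i * blockSine p ℓ k (i + 1) = r * sin (θ * (t + 2)) := by
    by_cases hend : (i : ℕ) + 1 < p + ℓ
    · rw [hb i hpi hend, blockSine, if_pos ⟨by omega, hend⟩]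
      push_cast [show (i : ℕ) + 1 + 1 - p = t + 2 by omega]
      rfl
    · have hℓ : (t : ℝ) + 2 = ℓ + 1 := by exact_mod_cast (show t + 2 = ℓ + 1 by omega)
      rw [blockSine, if_neg (by omega), hℓ, div_mul_cancel₀ _ (by positivity), sin_nat_mul_pi,
        mul_zero, mul_zero]
  rw [tridiag_mulVec_apply hc0 hbn, hlow, hhigh, hmid, ha i hpi hiℓ]
  linear_combination r * sin_mul_add_sin_mul_add_two θ t

theorem dotProduct_tridiag_mulVec_blockSine (hc0 : c 0 = 0) (hbn : b n = 0)
    (ha : ∀ j, p ≤ j → j < p + ℓ → a j = a₀) (hb : ∀ j, p ≤ j → j + 1 < p + ℓ → b j = r)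
    (hc : ∀ j, p < j → j < p + ℓ → c j = r) (k k' : ℕ) :
    (fun j : Fin (n + 1) => blockSine p ℓ k' j) ⬝ᵥ (tridiag n a b c *ᵥ fun j => blockSine p ℓ k j) =
      (a₀ + 2 * r * cos (k * π / (ℓ + 1))) *
        ((fun j : Fin (n + 1) => blockSine p ℓ k' j) ⬝ᵥ fun j => blockSine p ℓ k j) := by
  simp only [dotProduct, Finset.mul_sum]
  refine Finset.sum_congr rfl fun i _ => ?_
  by_cases hi : p ≤ i ∧ (i : ℕ) < p + ℓ
  · rw [tridiag_mulVec_blockSine hc0 hbn ha hb hc k i hi.1 hi.2]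
    ring
  · simp [blockSine, hi]

end BlockSine

theorem symmTridiag_exists_eigenvector_orthogonal_of_block {n p ℓ : ℕ} {a b c : ℕ → ℝ}
    {a₀ b₀ c₀ : ℝ} (hc0 : c 0 = 0) (hbn : b n = 0) (hb : ∀ i < n, 0 < b i)
    (hc : ∀ i < n, 0 < c (i + 1)) (hℓ : 2 ≤ ℓ) (hpℓ : p + ℓ ≤ n + 1)
    (hblock : ∀ j, p ≤ j → j < p + ℓ → a j = a₀ ∧ b j = b₀ ∧ c j = c₀)
    {w : Fin (n + 1) → ℝ} {s : ℝ} (hw : symmTridiag n a b c *ᵥ w = s • w) :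
    ∃ μ y, a₀ + 2 * √(b₀ * c₀) * cos (2 * π / (ℓ + 1)) ≤ μ ∧ y ⬝ᵥ w = 0 ∧ y ≠ 0 ∧
      symmTridiag n a b c *ᵥ y = μ • y := by
  have hb₀ : 0 < b₀ := (hblock p le_rfl (by omega)).2.1 ▸ hb p (by omega)
  have hc₀ : 0 < c₀ := (hblock (p + 1) (by omega) (by omega)).2.2 ▸ hc p (by omega)
  set r := √(b₀ * c₀)
  have hr : 0 < r := sqrt_pos.mpr (mul_pos hb₀ hc₀)
  set u : ℕ → Fin (n + 1) → ℝ := fun k j => blockSine p ℓ k j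
  have hu (k k' : ℕ) : u k' ⬝ᵥ symmTridiag n a b c *ᵥ u k =
      (a₀ + 2 * r * cos (k * π / (ℓ + 1))) * (u k' ⬝ᵥ u k) :=
    dotProduct_tridiag_mulVec_blockSine (by simp [hc0]) (by simp [hbn])
      (fun j h₁ h₂ => (hblock j h₁ h₂).1)
      (fun j h₁ h₂ => by
        rw [(hblock j h₁ (by omega)).2.1, (hblock (j + 1) (by omega) h₂).2.2])
      (fun j h₁ h₂ => by
        rw [(hblock (j - 1) (by omega) (by omega)).2.1, (hblock j (by omega) h₂).2.2]) k k'
  have hne (k : ℕ) (hk : 0 < k) (hkℓ : k ≤ ℓ) : u k ≠ 0 := fun h =>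
    (blockSine_self_pos hk hkℓ).ne' (congrFun h ⟨p, by omega⟩)
  have hlt :
      a₀ + 2 * r * cos ((2 : ℕ) * π / (ℓ + 1)) < a₀ + 2 * r * cos ((1 : ℕ) * π / (ℓ + 1)) := by
    have hℓ' : (3 : ℝ) ≤ ℓ + 1 := by exact_mod_cast Nat.succ_le_succ hℓ
    have hcos : cos (2 * π / (ℓ + 1)) < cos (π / (ℓ + 1)) := by
      apply cos_lt_cos_of_nonneg_of_le_pi (by positivity)
      · rw [div_le_iff₀ (by positivity)]; nlinarith [pi_pos]
      · gcongr; linarith [pi_pos]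
    push_cast
    rw [one_mul]
    nlinarith
  have hS := transpose_symmTridiag n a b c
  obtain ⟨x, hx0, hxw, hx⟩ := exists_orthogonal_le_dotProduct_mulVec hS (hne 1 one_pos (by omega))
    (hne 2 two_pos hℓ) hlt (hu 1 1) (hu 1 2) (hu 2 1) (hu 2 2) w
  obtain ⟨μ, y, hμ, hy⟩ :=
    (isHermitian_iff_isSymm.mpr hS).exists_eigenvector_orthogonal_of_le hw hx0 hxw hx
  exact ⟨μ, y, by simpa using hμ, hy⟩

theorem tridiag_exists_eigenvalue_of_block {n p ℓ : ℕ} {a b c : ℕ → ℝ} {s a₀ b₀ c₀ : ℝ}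
    (hc0 : c 0 = 0) (hbn : b n = 0) (hb : ∀ i < n, 0 < b i) (hc : ∀ i < n, 0 < c (i + 1))
    (ha : ∀ i, 0 ≤ a i) (hrow : ∀ i ≤ n, c i + a i + b i = s) (hℓ : 2 ≤ ℓ)
    (hpℓ : p + ℓ ≤ n + 1) (hblock : ∀ j, p ≤ j → j < p + ℓ → a j = a₀ ∧ b j = b₀ ∧ c j = c₀) :
    ∃ θ, HasEigenvalue (toLin' (tridiag n a b c)) θ ∧
      a₀ + 2 * √(b₀ * c₀) * cos (2 * π / (ℓ + 1)) ≤ θ ∧ θ < s := by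
  set L := tridiag n a b c
  set d : Fin (n + 1) → ℝ := fun j => symmWeight b c j
  have hd (j : Fin (n + 1)) : 0 < d j :=
    symmWeight_pos (fun k hk => hb k (by omega)) (fun k hk => hc k (by omega))
  have hsim : diagonal d * L = symmTridiag n a b c * diagonal d :=
    diagonal_symmWeight_mul_tridiag (fun i hi => (hb i hi).le) hc
  have hL1 : L *ᵥ (fun _ => 1) = s • fun _ => 1 := by
    ext i
    simpa [hrow i (by omega)] using tridiag_mulVec_apply (a := a) hc0 hbn (fun _ => (1 : ℝ)) i
  have hSd : symmTridiag n a b c *ᵥ d = s • d := by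
    have hd1 : diagonal d *ᵥ (fun _ => 1) = d := by ext; simp [mulVec_diagonal]
    have := congrArg (diagonal d *ᵥ ·) hL1
    rwa [mulVec_mulVec, hsim, ← mulVec_mulVec, hd1, mulVec_smul, hd1] at this
  obtain ⟨μ, y, hμ, hyd, hy0, hSy⟩ :=
    symmTridiag_exists_eigenvector_orthogonal_of_block hc0 hbn hb hc hℓ hpℓ hblock hSd
  have hμL : HasEigenvalue (toLin' L) μ := hasEigenvalue_of_diagonal_mul_eq (fun j => (hd j).ne')
    hsim (hasEigenvalue_of_hasEigenvector ⟨mem_eigenspace_iff.mpr (by rwa [toLin'_apply]), hy0⟩)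
  have hnonneg (i j : Fin (n + 1)) : 0 ≤ L i j := by
    simp only [L, tridiag, of_apply]
    split_ifs with h₁ h₂
    · exact (hb _ (by omega)).le
    · rw [h₂]; exact (hc _ (by omega)).le
    · exact ha _
    · rfl
  have hrowsum (i : Fin (n + 1)) : ∑ j, L i j ≤ s := by
    have := congrFun hL1 i
    simp [mulVec, dotProduct] at this
    exact this.le
  refine ⟨μ, hμL, hμ, (le_of_hasEigenvalue_of_nonneg hnonneg hrowsum hμL).lt_of_ne ?_⟩
  rintro rfl
  exact hy0 (tridiag_eigenvector_eq_zero_of_orthogonal (by simp [hc0]) (by simp [hbn])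
    (fun i hi => (sqrt_pos.mpr (mul_pos (hb i hi) (hc i hi))).ne') hSy hSd (hd 0).ne' hyd)

theorem ordConnected_filter_triple {m s : ℕ} {α β γ : ℕ → ℕ} (hβ : AntitoneOn β (Set.Icc 1 m))
    (hγ : MonotoneOn γ (Set.Icc 1 m)) (hsum : ∀ i ∈ Set.Icc 1 m, α i + β i + γ i = s)
    (t : ℕ × ℕ × ℕ) :
    (((Finset.Icc 1 m).filter fun j => (γ j, α j, β j) = t : Finset ℕ) : Set ℕ).OrdConnected := by
  refine ⟨fun x hx y hy j hj => ?_⟩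
  simp only [Finset.coe_filter, Finset.mem_Icc, Set.mem_ofPred_eq] at hx hy ⊢
  obtain ⟨hxm, rfl⟩ := hx
  obtain ⟨hym, hyt⟩ := hy
  simp only [Prod.mk.injEq] at hyt ⊢
  have hjm : j ∈ Set.Icc 1 m := ⟨hxm.1.trans hj.1, hj.2.trans hym.2⟩
  have hβj : β j = β x := le_antisymm (hβ hxm hjm hj.1) (hyt.2.2 ▸ hβ hjm hym hj.2)
  have hγj : γ j = γ x := le_antisymm (hyt.1 ▸ hγ hjm hym hj.2) (hγ hxm hjm hj.1)
  refine ⟨hjm, hγj, ?_, hβj⟩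
  have := hsum j hjm
  have := hsum x hxm
  omega

theorem stmt_12_general (n : ℕ) (α β γ : ℕ → ℕ)
    (hα0 : α 0 = 0) (hγ0 : γ 0 = 0) (hβn : β n = 0)
    (hβpos : ∀ i, i ≤ n - 1 → 0 < β i)
    (hγpos : ∀ i, 1 ≤ i → i ≤ n → 0 < γ i)
    (hsum : ∀ i, 1 ≤ i → i ≤ n → α i + β i + γ i = β 0)
    (hβmono : ∀ i, 1 ≤ i → i ≤ n → β i ≤ β (i - 1))
    (hγmono : ∀ i, 1 ≤ i → i ≤ n → γ (i - 1) ≤ γ i)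
    (L : Matrix (Fin (n + 1)) (Fin (n + 1)) ℝ)
    (hL : ∀ i j : Fin (n + 1), L i j =
      if (j : ℕ) = (i : ℕ) + 1 then (β (i : ℕ) : ℝ)
      else if (i : ℕ) = (j : ℕ) + 1 then (γ (i : ℕ) : ℝ)
      else if (i : ℕ) = (j : ℕ) then (α (i : ℕ) : ℝ) else 0)
    (i₀ : ℕ)
    (ℓ : ℕ)
    (hℓ : ℓ = ((Finset.Icc 1 (n - 1)).filter
        (fun j => (γ j, α j, β j) = (γ i₀, α i₀, β i₀))).card)
    (hℓ2 : 2 ≤ ℓ) :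
    ∃ θ : ℝ, Module.End.HasEigenvalue (Matrix.toLin' L) θ ∧
      (α i₀ : ℝ) + 2 * Real.sqrt ((β i₀ : ℝ) * (γ i₀ : ℝ)) * Real.cos (2 * π / (ℓ + 1)) ≤ θ ∧
      θ < (β 0 : ℝ) := by
  have hβanti : AntitoneOn β (Set.Icc 1 (n - 1)) :=
    antitoneOn_of_succ_le Set.ordConnected_Icc fun k _ _ hk => by
      rw [Order.succ_eq_add_one, Set.mem_Icc] at hk
      simpa using hβmono (k + 1) (by omega) (by omega)
  have hγmono' : MonotoneOn γ (Set.Icc 1 (n - 1)) :=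
    monotoneOn_of_le_succ Set.ordConnected_Icc fun k _ _ hk => by
      rw [Order.succ_eq_add_one, Set.mem_Icc] at hk
      simpa using hγmono (k + 1) (by omega) (by omega)
  obtain ⟨p, hp⟩ := Finset.Nat.exists_eq_Ico_of_ordConnected (ordConnected_filter_triple hβanti
    hγmono' (fun i hi => hsum i hi.1 (by have := hi.2; omega)) (γ i₀, α i₀, β i₀))
  rw [← hℓ] at hp
  have hmem (j : ℕ) (hpj : p ≤ j) (hjℓ : j < p + ℓ) : j ∈ Finset.Icc 1 (n - 1) ∧
      (γ j, α j, β j) = (γ i₀, α i₀, β i₀) :=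
    Finset.mem_filter.mp (hp ▸ Finset.mem_Ico.mpr ⟨hpj, hjℓ⟩)
  have hLeq : L = tridiag n (fun k => (α k : ℝ)) (fun k => β k) (fun k => γ k) := by
    ext i j; rw [hL]; rfl
  rw [hLeq]
  refine tridiag_exists_eigenvalue_of_block (p := p) (by simp [hγ0]) (by simp [hβn])
    (fun i hi => by exact_mod_cast hβpos i (by omega))
    (fun i hi => by exact_mod_cast hγpos (i + 1) (by omega) (by omega)) (fun i => by positivity)
    (fun i hi => ?_) hℓ2 ?_ (fun j hpj hjℓ => ?_)
  · rcases Nat.eq_zero_or_pos i with rfl | hi0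
    · simp [hα0, hγ0]
    · exact_mod_cast (by have := hsum i hi0 hi; omega : γ i + α i + β i = β 0)
  · have := Finset.mem_Icc.mp (hmem (p + ℓ - 1) (by omega) (by omega)).1
    omega
  · simp only [Prod.mk.injEq] at hmem
    obtain ⟨-, hγj, hαj, hβj⟩ := hmem j hpj hjℓ
    exact ⟨by rw [hαj], by rw [hβj], by rw [hγj]⟩

theorem stmt_12 (n : ℕ) (hn : 2 ≤ n) (α β γ : ℕ → ℕ)
    (hα0 : α 0 = 0) (hγ0 : γ 0 = 0) (hβn : β n = 0)
    (hβpos : ∀ i, i ≤ n - 1 → 0 < β i)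
    (hγpos : ∀ i, 1 ≤ i → i ≤ n → 0 < γ i)
    (hsum : ∀ i, 1 ≤ i → i ≤ n → α i + β i + γ i = β 0)
    (hβmono : ∀ i, 1 ≤ i → i ≤ n → β i ≤ β (i - 1))
    (hγmono : ∀ i, 1 ≤ i → i ≤ n → γ (i - 1) ≤ γ i)
    (L : Matrix (Fin (n + 1)) (Fin (n + 1)) ℝ)
    (hL : ∀ i j : Fin (n + 1), L i j =
      if (j : ℕ) = (i : ℕ) + 1 then (β (i : ℕ) : ℝ)
      else if (i : ℕ) = (j : ℕ) + 1 then (γ (i : ℕ) : ℝ)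
      else if (i : ℕ) = (j : ℕ) then (α (i : ℕ) : ℝ) else 0)
    (i₀ : ℕ) (hi₀1 : 1 ≤ i₀) (hi₀n : i₀ ≤ n - 1)
    (ℓ : ℕ)
    (hℓ : ℓ = ((Finset.Icc 1 (n - 1)).filter
        (fun j => (γ j, α j, β j) = (γ i₀, α i₀, β i₀))).card)
    (hℓ2 : 2 ≤ ℓ) :
    ∃ θ : ℝ, Module.End.HasEigenvalue (Matrix.toLin' L) θ ∧
      (α i₀ : ℝ) + 2 * Real.sqrt ((β i₀ : ℝ) * (γ i₀ : ℝ)) * Real.cos (2 * π / (ℓ + 1)) ≤ θ ∧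
      θ < (β 0 : ℝ) :=
  stmt_12_general n α β γ hα0 hγ0 hβn hβpos hγpos hsum hβmono hγmono L hL i₀ ℓ hℓ hℓ2
end

section
/- Define, for real κ ≥ 2 and ζ > 0, Υ_{κ,ζ} := sup over monic irreducible integer polynomials p with all roots in [-κ,κ] and over closed intervals I ⊆ [-κ,κ] of length ζ, of the quantity (|{θ ∈ I : p(θ) = 0}| - 1)/deg(p). Then lim_{ζ → 0⁺} Υ_{κ,ζ} = 0. -/
/-!
The roots of a monic irreducible `p ∈ ℤ[X]` are simple, and `∏_{α ≠ β} (α - β)` is the resultant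
`Res(p, p')`, a nonzero integer, hence of absolute value at least `1`. If the `n` roots are real and
lie in `[-κ, κ]`, and `t` of them lie in an interval of length `ζ < 1`, the `t(t-1)` ordered pairs
of those contribute factors at most `ζ` and the others factors at most `2κ`. So
`1 ≤ ζ^{t(t-1)} (2κ)^{n²}`, that is `((t - 1)/n)² ≤ log(2κ) / log(1/ζ)`: a bound uniform in `p`
and in the interval which tends to `0` with `ζ`.
-/

open Polynomial

/-- The quantity `Υ_{κ,ζ}`: the supremum over monic irreducible integer polynomials `p`
with all roots in `[-κ,κ]` and closed intervals `I ⊆ [-κ,κ]` of length `ζ` of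
`(#{roots of p in I} - 1)/deg p`. -/
noncomputable def Upsilon (κ ζ : ℝ) : ℝ :=
  sSup {r : ℝ | ∃ (p : Polynomial ℤ) (a : ℝ), p.Monic ∧ Irreducible p ∧
    -κ ≤ a ∧ a + ζ ≤ κ ∧
    (∀ z ∈ (p.map (Int.castRingHom ℂ)).roots, z.im = 0 ∧ -κ ≤ z.re ∧ z.re ≤ κ) ∧
    r = ((((p.map (Int.castRingHom ℝ)).roots.filter
          (fun x => a ≤ x ∧ x ≤ a + ζ)).card : ℝ) - 1) / (p.natDegree : ℝ)}

open Finset Real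
open scoped Topology

namespace Polynomial

theorem Splits.resultant_derivative_eq_prod_offDiag {K : Type*} [Field K] [DecidableEq K]
    {f : K[X]} (hsplit : f.Splits) (hm : f.Monic) (hsep : f.Separable) :
    resultant f (derivative f) = ∏ z ∈ f.roots.toFinset.offDiag, (z.1 - z.2) := by
  set F := f.roots.toFinset
  have hval : F.val = f.roots := by rw [Multiset.toFinset_val, (nodup_roots hsep).dedup]
  rw [resultant_eq_prod_eval f _ _ le_rfl hsplit, hm.leadingCoeff, one_pow, one_mul,
    prod_finset_product _ F (fun x => F.erase x) (by simp [and_comm, ne_comm])]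
  calc (f.roots.map fun x => eval x (derivative f)).prod
      = ∏ x ∈ F, eval x (derivative f) := by rw [prod_eq_multiset_prod, hval]
    _ = ∏ x ∈ F, ∏ y ∈ F.erase x, (x - y) := prod_congr rfl fun x hx => by
      rw [hsplit.eval_root_derivative hm (Multiset.mem_toFinset.mp hx), prod_eq_multiset_prod,
        erase_val, hval]

theorem one_le_abs_resultant_map_derivative {p : ℤ[X]}
    (hsep : (p.map (Int.castRingHom ℝ)).Separable) :
    1 ≤ |resultant (p.map (Int.castRingHom ℝ)) (derivative (p.map (Int.castRingHom ℝ)))| := by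
  have hne := resultant_ne_zero _ _ hsep
  rw [derivative_map, resultant_map_map, eq_intCast] at hne ⊢
  exact_mod_cast Int.one_le_abs (by exact_mod_cast hne)

theorem Monic.separable_map_of_irreducible {K : Type*} [Field K] [CharZero K] {p : ℤ[X]}
    (hm : p.Monic) (hirr : Irreducible p) : (p.map (Int.castRingHom K)).Separable := by
  have hq := (IsPrimitive.Int.irreducible_iff_irreducible_map_cast hm.isPrimitive).mp hirr
  rw [← RingHom.ext_int ((algebraMap ℚ K).comp (Int.castRingHom ℚ)) (Int.castRingHom K),
    ← map_map]
  exact hq.separable.map (f := algebraMap ℚ K)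

theorem splits_map_real_of_forall_im_eq_zero {p : ℤ[X]}
    (h : ∀ z ∈ (p.map (Int.castRingHom ℂ)).roots, z.im = 0) :
    (p.map (Int.castRingHom ℝ)).Splits := by
  have hc : (p.map (Int.castRingHom ℝ)).map Complex.ofRealHom = p.map (Int.castRingHom ℂ) := by
    rw [map_map, RingHom.ext_int (Complex.ofRealHom.comp _) (Int.castRingHom ℂ)]
  refine Splits.of_splits_map Complex.ofRealHom (IsAlgClosed.splits _) fun z hz => ?_
  rw [hc] at hz
  exact ⟨z.re, Complex.ext rfl (h z hz).symm⟩

end Polynomial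

theorem prod_offDiag_dist_le {α : Type*} [PseudoMetricSpace α] [DecidableEq α] {F T : Finset α}
    {D ζ : ℝ} (hTF : T ⊆ F) (hD : 1 ≤ D) (hζ : 0 ≤ ζ) (hF : ∀ x ∈ F, ∀ y ∈ F, dist x y ≤ D)
    (hT : ∀ x ∈ T, ∀ y ∈ T, dist x y ≤ ζ) :
    ∏ z ∈ F.offDiag, dist z.1 z.2 ≤ ζ ^ (#T * #T - #T) * D ^ (#F * #F) := by
  rw [← prod_sdiff (offDiag_mono hTF), mul_comm]
  have hinside : ∏ z ∈ T.offDiag, dist z.1 z.2 ≤ ζ ^ (#T * #T - #T) := by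
    rw [← offDiag_card, ← prod_const]
    exact prod_le_prod (fun _ _ => dist_nonneg) fun z hz =>
      hT _ (mem_offDiag.mp hz).1 _ (mem_offDiag.mp hz).2.1
  have hrest : ∏ z ∈ F.offDiag \ T.offDiag, dist z.1 z.2 ≤ D ^ (#F * #F) := calc
    _ ≤ ∏ _z ∈ F.offDiag \ T.offDiag, D := prod_le_prod (fun _ _ => dist_nonneg) fun z hz =>
        have hz := mem_offDiag.mp (mem_sdiff.mp hz).1
        hF _ hz.1 _ hz.2.1
    _ ≤ D ^ (#F * #F) := by
      rw [prod_const]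
      refine pow_le_pow_right₀ hD ((card_le_card sdiff_subset).trans ?_)
      rw [offDiag_card]
      exact Nat.sub_le _ _
  exact mul_le_mul hinside hrest (prod_nonneg fun _ _ => dist_nonneg) (by positivity)

theorem sub_one_div_le_sqrt_log_div_log {ζ D : ℝ} {t n : ℕ} (hζ0 : 0 < ζ) (hζ1 : ζ < 1)
    (hD : 0 < D) (h : 1 ≤ ζ ^ (t * t - t) * D ^ (n * n)) :
    ((t : ℝ) - 1) / n ≤ √(log D / log ζ⁻¹) := by
  rcases n.eq_zero_or_pos with rfl | hn
  · simp
  rcases t.eq_zero_or_pos with rfl | ht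
  · exact (div_nonpos_of_nonpos_of_nonneg (by norm_num) n.cast_nonneg).trans (sqrt_nonneg _)
  have hlogζ : 0 < log ζ⁻¹ := log_pos ((one_lt_inv₀ hζ0).mpr hζ1)
  have hlog : ((t : ℝ) * t - t) * log ζ⁻¹ ≤ (n : ℝ) * n * log D := by
    have := log_le_log one_pos h
    rw [log_one, log_mul (by positivity) (by positivity), log_pow, log_pow,
      Nat.cast_sub (Nat.le_mul_self t)] at this
    rw [log_inv]
    push_cast at this
    linarith
  refine (le_abs_self _).trans (abs_le_sqrt ?_)
  rw [div_pow, div_le_div_iff₀ (by positivity) hlogζ]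
  have ht1 : (1 : ℝ) ≤ t := by exact_mod_cast ht
  nlinarith

theorem sub_one_div_natDegree_le_sqrt {κ ζ a : ℝ} (hκ : 1 ≤ 2 * κ) (hζ0 : 0 < ζ) (hζ1 : ζ < 1)
    {p : ℤ[X]} (hm : p.Monic) (hirr : Irreducible p)
    (hroots : ∀ z ∈ (p.map (Int.castRingHom ℂ)).roots, z.im = 0 ∧ -κ ≤ z.re ∧ z.re ≤ κ) :
    ((((p.map (Int.castRingHom ℝ)).roots.filter (fun x => a ≤ x ∧ x ≤ a + ζ)).card : ℝ) - 1)
      / p.natDegree ≤ √(log (2 * κ) / log ζ⁻¹) := by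
  set f := p.map (Int.castRingHom ℝ)
  have hsplit : f.Splits := splits_map_real_of_forall_im_eq_zero fun z hz => (hroots z hz).1
  have hsep : f.Separable := hm.separable_map_of_irreducible hirr
  set F := f.roots.toFinset
  set T := F.filter fun x => a ≤ x ∧ x ≤ a + ζ
  have hFcard : #F = p.natDegree := by
    rw [Multiset.toFinset_card_of_nodup (nodup_roots hsep), ← hsplit.natDegree_eq_card_roots,
      hm.natDegree_map]
  have hTcard : #T = (f.roots.filter fun x => a ≤ x ∧ x ≤ a + ζ).card := by
    rw [← Multiset.toFinset_card_of_nodup ((nodup_roots hsep).filter _),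
      Multiset.toFinset_filter]
  have hFκ : ∀ x ∈ F, x ∈ Set.Icc (-κ) κ := fun x hx => by
    have hxc : (x : ℂ) ∈ (p.map (Int.castRingHom ℂ)).roots := by
      rw [← RingHom.ext_int (Complex.ofRealHom.comp (Int.castRingHom ℝ)) (Int.castRingHom ℂ),
        ← Polynomial.map_map, hsplit.roots_map]
      exact Multiset.mem_map_of_mem _ (Multiset.mem_toFinset.mp hx)
    simpa using (hroots _ hxc).2
  have hdisc : 1 ≤ ζ ^ (#T * #T - #T) * (2 * κ) ^ (#F * #F) := calc
    1 ≤ |resultant f (derivative f)| := one_le_abs_resultant_map_derivative hsep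
    _ = ∏ z ∈ F.offDiag, dist z.1 z.2 := by
      simp only [hsplit.resultant_derivative_eq_prod_offDiag (hm.map _) hsep, abs_prod,
        Real.dist_eq, F]
    _ ≤ _ := prod_offDiag_dist_le (filter_subset _ _) hκ hζ0.le
      (fun x hx y hy => (Real.dist_le_of_mem_Icc (hFκ x hx) (hFκ y hy)).trans_eq (by ring))
      (fun x hx y hy => (Real.dist_le_of_mem_Icc (mem_filter.mp hx).2 (mem_filter.mp hy).2).trans_eq
        (add_sub_cancel_left a ζ))
  rw [← hTcard, ← hFcard]
  exact sub_one_div_le_sqrt_log_div_log hζ0 hζ1 (by linarith) hdisc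

theorem sSup_mem_Icc_of_mem {S : Set ℝ} {a b : ℝ} (ha : a ∈ S) (hb : ∀ r ∈ S, r ≤ b) :
    sSup S ∈ Set.Icc a b :=
  ⟨le_csSup ⟨b, hb⟩ ha, csSup_le ⟨a, ha⟩ hb⟩

theorem Upsilon_mem_Icc {κ ζ : ℝ} (hκ : 1 ≤ κ) (hζ0 : 0 < ζ) (hζ1 : ζ < 1) :
    Upsilon κ ζ ∈ Set.Icc 0 √(log (2 * κ) / log ζ⁻¹) := by
  refine sSup_mem_Icc_of_mem ⟨X, 0, monic_X, irreducible_X, by linarith, by linarith, ?_, ?_⟩ ?_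
  · simp only [Polynomial.map_X, roots_X, Multiset.mem_singleton]
    rintro z rfl
    simp only [Complex.zero_im, Complex.zero_re, true_and]
    constructor <;> linarith
  · simp [Multiset.filter_singleton, hζ0.le]
  · rintro r ⟨p, a, hm, hirr, -, -, hroots, rfl⟩
    exact sub_one_div_natDegree_le_sqrt (by linarith) hζ0 hζ1 hm hirr hroots

theorem stmt_14 (κ : ℝ) (hκ : 2 ≤ κ) :
    Filter.Tendsto (fun ζ => Upsilon κ ζ) (nhdsWithin 0 (Set.Ioi 0)) (nhds 0) := by
  have hbound : Filter.Tendsto (fun ζ : ℝ => √(log (2 * κ) / log ζ⁻¹)) (𝓝[>] 0) (𝓝 0) := by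
    have hsqrt : Filter.Tendsto (√·) (𝓝 0) (𝓝 0) := by
      simpa using continuous_sqrt.tendsto 0
    exact hsqrt.comp ((tendsto_const_nhds (x := log (2 * κ))).div_atTop
      (tendsto_log_atTop.comp tendsto_inv_nhdsGT_zero))
  have hIcc : ∀ᶠ ζ in 𝓝[>] 0, Upsilon κ ζ ∈ Set.Icc 0 √(log (2 * κ) / log ζ⁻¹) := by
    filter_upwards [Ioo_mem_nhdsGT one_pos] with ζ hζ
    exact Upsilon_mem_Icc (by linarith) hζ.1 hζ.2
  exact tendsto_of_tendsto_of_tendsto_of_le_of_le' tendsto_const_nhds hbound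
    (hIcc.mono fun _ h => h.1) (hIcc.mono fun _ h => h.2)
end

section
/- Let Γ be a distance-regular graph with valency k, diameter D, and intersection numbers aᵢ, bᵢ, cᵢ. Then aᵢ ≥ a₁ + 1 - min{bᵢ, cᵢ} for all 1 ≤ i ≤ D-1. -/
/-! Fix `x` and an edge `yz` with `d(x, z) = d(x, y) ± 1`. The `a₁` common neighbours of `y`
and `z` lie at distance `d(x, y)` or `d(x, z)` from `x`, and `z` itself is a neighbour of `y` at
distance `d(x, z)` that is not a common neighbour. Taking `z` on either side of `y` along a geodesic
from `x` through `y` gives `a₁ < aᵢ + bᵢ` and `a₁ < aᵢ + cᵢ`. -/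

namespace SimpleGraph

variable {V : Type*} {G : SimpleGraph V}

theorem Walk.dist_getVert_of_length_eq_dist {u v : V} (p : G.Walk u v)
    (hp : p.length = G.dist u v) {n : ℕ} (hn : n ≤ p.length) : G.dist u (p.getVert n) = n := by
  rw [← length_eq_dist_of_subwalk hp (p.isSubwalk_take n), Walk.take_length]
  omega

theorem ncard_commonNeighbors_lt [G.LocallyFinite] {x y z : V} (hyz : G.Adj y z)
    (hz : G.dist x z ≠ G.dist x y) :
    (G.commonNeighbors y z).ncard <
      {w | G.Adj y w ∧ G.dist x w = G.dist x y}.ncard +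
        {w | G.Adj y w ∧ G.dist x w = G.dist x z}.ncard := by
  set A := {w | G.Adj y w ∧ G.dist x w = G.dist x y}
  set S := {w | G.Adj y w ∧ G.dist x w = G.dist x z}
  have hfin : ∀ P : V → Prop, {w | G.Adj y w ∧ P w}.Finite := fun P ↦
    (G.neighborSet y).toFinite.subset fun w hw ↦ hw.1
  have hzS : z ∈ S := ⟨hyz, rfl⟩
  have hsub : G.commonNeighbors y z ⊆ A ∪ S \ {z} := by
    intro w hw
    rw [mem_commonNeighbors] at hw
    obtain ⟨hyw, hzw⟩ := hw
    have hdz := hyz.diff_dist_adj (u := x)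
    have hdw := hyw.diff_dist_adj (u := x)
    have hdw' := hzw.diff_dist_adj (u := x)
    by_cases hA : G.dist x w = G.dist x y
    · exact Or.inl ⟨hyw, hA⟩
    · exact Or.inr ⟨⟨hyw, by omega⟩, hzw.ne'⟩
  have hS : (S \ {z}).ncard + 1 = S.ncard := Set.ncard_sdiff_singleton_add_one hzS (hfin _)
  calc (G.commonNeighbors y z).ncard
      ≤ (A ∪ S \ {z}).ncard := Set.ncard_le_ncard hsub ((hfin _).union ((hfin _).sdiff))
    _ ≤ A.ncard + (S \ {z}).ncard := Set.ncard_union_le _ _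
    _ < A.ncard + S.ncard := by omega

end SimpleGraph

open SimpleGraph

namespace IsDRG

variable {V : Type*} [Fintype V] {G : SimpleGraph V} {D : ℕ} {c a b : ℕ → ℕ}

theorem ncard_commonNeighbors (hG : IsDRG G D c a b) (hD : 1 ≤ D) {y z : V} (hyz : G.Adj y z) :
    (G.commonNeighbors y z).ncard = a 1 := by
  rw [← (hG.2.2.2 y z 1 (dist_eq_one_iff_adj.2 hyz) hD).2.1]
  congr 1
  ext w
  simp only [mem_commonNeighbors, Set.mem_ofPred_eq, dist_eq_one_iff_adj, and_comm]

theorem a_one_lt_add_ncard (hG : IsDRG G D c a b) (hD : 1 ≤ D) {x y z : V} {i : ℕ}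
    (hxy : G.dist x y = i) (hiD : i ≤ D) (hyz : G.Adj y z) (hz : G.dist x z ≠ i) :
    a 1 < a i + {w | G.Adj y w ∧ G.dist x w = G.dist x z}.ncard := by
  classical
  have h := ncard_commonNeighbors_lt (x := x) hyz (hxy ▸ hz)
  rwa [hG.ncard_commonNeighbors hD hyz, hxy, (hG.2.2.2 x y i hxy hiD).2.1] at h

end IsDRG

theorem stmt_15_general {V : Type*} [Fintype V] (G : SimpleGraph V) (D : ℕ)
    (c a b : ℕ → ℕ)
    (hdrg : IsDRG G D c a b) :
    ∀ i, 1 ≤ i → i ≤ D - 1 → a 1 + 1 ≤ a i + min (b i) (c i) := by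
  intro i hi hiD
  have hreg := hdrg.2.2.2
  obtain ⟨x, v, hxv⟩ := hdrg.2.2.1
  obtain ⟨p, hp⟩ := hdrg.1.exists_walk_length_eq_dist x v
  have hdist : ∀ j ≤ D, G.dist x (p.getVert j) = j := fun j hj ↦
    p.dist_getVert_of_length_eq_dist hp (by omega)
  have hy := hdist i (by omega)
  have hsucc := hdist (i + 1) (by omega)
  have hpred := hdist (i - 1) (by omega)
  have hb : a 1 < a i + b i := by
    have h := hdrg.a_one_lt_add_ncard (by omega) hy (by omega)
      (p.adj_getVert_succ (by omega)) (by omega)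
    rwa [hsucc, (hreg x _ i hy (by omega)).2.2] at h
  have hc : a 1 < a i + c i := by
    have h := hdrg.a_one_lt_add_ncard (by omega) hy (by omega)
      (Nat.sub_add_cancel hi ▸ p.adj_getVert_succ (i := i - 1) (by omega)).symm (by omega)
    have hpred_iff (w : V) : G.dist x w = i - 1 ↔ G.dist x w + 1 = i := by omega
    simp only [hpred, hpred_iff] at h
    rwa [(hreg x _ i hy (by omega)).1] at h
  omega

/-- `aᵢ ≥ a₁ + 1 - min{bᵢ, cᵢ}` for `1 ≤ i ≤ D-1`
(stated additively, as `a₁ + 1 ≤ aᵢ + min{bᵢ, cᵢ}`). -/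
theorem stmt_15 {V : Type*} [Fintype V] (G : SimpleGraph V) (k D : ℕ)
    (c a b : ℕ → ℕ) (hD : 1 ≤ D) (hk : k = b 0)
    (hdrg : IsDRG G D c a b) :
    ∀ i, 1 ≤ i → i ≤ D - 1 → a 1 + 1 ≤ a i + min (b i) (c i) :=
  stmt_15_general G D c a b hdrg
end

section
/- Let κ ≥ 3, and let (uᵢ)_{i=0}^{D} and (κᵢ)_{i=0}^{D} satisfy: κ₀ = 1, κᵢ₊₁/κᵢ = bᵢ/c_{i+1} where 0 < bᵢ, c_{i+1} < κ are integers, and the uᵢ satisfy the three-term recurrence cᵢu_{i-1} + (aᵢ - θ)uᵢ + bᵢu_{i+1} = 0 with aᵢ + bᵢ + cᵢ = κ and |θ| ≤ κ. Then for each i = 1,…,D-1: (1/(9κ⁴))·max{κ_{i-1}u²_{i-1}, κᵢu²ᵢ} ≤ max{κᵢu²ᵢ, κ_{i+1}u²_{i+1}} ≤ 9κ⁴·max{κ_{i-1}u²_{i-1}, κᵢu²ᵢ}. -/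
lemma aux17 (κ x y z kx ky kz : ℝ) (hκ : 1 ≤ κ)
    (hky : 0 ≤ ky) (hkz : 0 ≤ kz)
    (hk1 : kx ≤ κ * ky) (hk2 : kx ≤ κ ^ 2 * kz)
    (hx : |x| ≤ 3 * κ * max |y| |z|) :
    kx * x ^ 2 ≤ 9 * κ ^ 4 * max (ky * y ^ 2) (kz * z ^ 2) := by
  have hκ0 : (0:ℝ) < κ := by linarith
  rcases le_total |y| |z| with h | h
  · rw [max_eq_right h] at hx
    have hx2 : x ^ 2 ≤ 9 * κ ^ 2 * z ^ 2 := by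
      nlinarith [sq_abs x, sq_abs z, abs_nonneg x, abs_nonneg z]
    have h1 : kx * x ^ 2 ≤ 9 * κ ^ 4 * (kz * z ^ 2) := by
      nlinarith [mul_le_mul_of_nonneg_right hk2 (sq_nonneg x),
        mul_le_mul_of_nonneg_left hx2 (mul_nonneg (sq_nonneg κ) hkz)]
    exact h1.trans (mul_le_mul_of_nonneg_left (le_max_right _ _) (by positivity))
  · rw [max_eq_left h] at hx
    have hx2 : x ^ 2 ≤ 9 * κ ^ 2 * y ^ 2 := by
      nlinarith [sq_abs x, sq_abs y, abs_nonneg x, abs_nonneg y]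
    have h1 : kx * x ^ 2 ≤ 9 * κ ^ 4 * (ky * y ^ 2) := by
      calc kx * x ^ 2 ≤ κ * ky * x ^ 2 := mul_le_mul_of_nonneg_right hk1 (sq_nonneg x)
        _ ≤ κ * ky * (9 * κ ^ 2 * y ^ 2) := mul_le_mul_of_nonneg_left hx2 (mul_nonneg hκ0.le hky)
        _ = 9 * κ ^ 3 * (ky * y ^ 2) := by ring
        _ ≤ 9 * κ ^ 4 * (ky * y ^ 2) := by
            nlinarith [mul_nonneg (mul_nonneg (pow_nonneg hκ0.le 3) (sub_nonneg.mpr hκ))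
              (mul_nonneg hky (sq_nonneg y))]
    exact h1.trans (mul_le_mul_of_nonneg_left (le_max_left _ _) (by positivity))

set_option maxHeartbeats 1000000 in
theorem stmt_17 (κ : ℕ) (hκ : 3 ≤ κ) (D : ℕ) (θ : ℝ) (hθ : |θ| ≤ (κ : ℝ))
    (a b c : ℕ → ℕ) (u : ℕ → ℝ) (k : ℕ → ℝ)
    (hk0 : k 0 = 1)
    (hratio : ∀ i, i + 1 ≤ D →
      0 < b i ∧ b i < κ ∧ 0 < c (i + 1) ∧ c (i + 1) < κ ∧
      k (i + 1) = k i * ((b i : ℝ) / (c (i + 1) : ℝ)))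
    (hcoef : ∀ i, 1 ≤ i → i ≤ D - 1 → a i + b i + c i = κ)
    (hrec : ∀ i, 1 ≤ i → i ≤ D - 1 →
      (c i : ℝ) * u (i - 1) + ((a i : ℝ) - θ) * u i + (b i : ℝ) * u (i + 1) = 0) :
    ∀ i, 1 ≤ i → i ≤ D - 1 →
      (1 / (9 * (κ : ℝ) ^ 4)) * max (k (i - 1) * (u (i - 1)) ^ 2) (k i * (u i) ^ 2) ≤
          max (k i * (u i) ^ 2) (k (i + 1) * (u (i + 1)) ^ 2) ∧
        max (k i * (u i) ^ 2) (k (i + 1) * (u (i + 1)) ^ 2) ≤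
          9 * (κ : ℝ) ^ 4 * max (k (i - 1) * (u (i - 1)) ^ 2) (k i * (u i) ^ 2) := by
  have hκR : (3:ℝ) ≤ (κ:ℝ) := by exact_mod_cast hκ
  have hκ0 : (0:ℝ) < (κ:ℝ) := by linarith
  -- positivity of k
  have hkpos : ∀ j, j ≤ D → 0 < k j := by
    intro j
    induction j with
    | zero => intro _; rw [hk0]; norm_num
    | succ n ih =>
      intro hn
      obtain ⟨hb, _, hc, _, hkeq⟩ := hratio n (by omega)
      rw [hkeq]
      exact mul_pos (ih (by omega)) (div_pos (by exact_mod_cast hb) (by exact_mod_cast hc))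
  -- step bounds for k
  have hstep : ∀ j, j + 1 ≤ D → k (j + 1) ≤ (κ:ℝ) * k j ∧ k j ≤ (κ:ℝ) * k (j + 1) := by
    intro j hj
    obtain ⟨hb, hb', hc, hc', hkeq⟩ := hratio j hj
    have hbR : (1:ℝ) ≤ (b j : ℝ) := by exact_mod_cast hb
    have hbR' : (b j : ℝ) ≤ (κ:ℝ) := by exact_mod_cast hb'.le
    have hcR : (1:ℝ) ≤ (c (j+1) : ℝ) := by exact_mod_cast hc
    have hcR' : (c (j+1) : ℝ) ≤ (κ:ℝ) := by exact_mod_cast hc'.le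
    have hkj := hkpos j (by omega)
    constructor
    · rw [hkeq]
      have hdiv : (b j : ℝ) / (c (j+1) : ℝ) ≤ (κ:ℝ) := by
        rw [div_le_iff₀ (by linarith)]; nlinarith
      calc k j * ((b j : ℝ) / (c (j+1) : ℝ)) ≤ k j * (κ:ℝ) :=
            mul_le_mul_of_nonneg_left hdiv hkj.le
        _ = (κ:ℝ) * k j := mul_comm _ _
    · rw [hkeq, show (κ:ℝ) * (k j * ((b j:ℝ) / (c (j+1):ℝ))) = ((κ:ℝ) * (k j * (b j:ℝ))) / (c (j+1):ℝ) by ring]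
      rw [le_div_iff₀ (by linarith)]
      nlinarith [mul_le_mul_of_nonneg_left hcR' hkj.le,
        mul_le_mul_of_nonneg_left hbR (mul_pos hκ0 hkj).le]
  intro i h1 h2
  have hD : 1 ≤ D := by omega
  have hiD : i + 1 ≤ D := by omega
  have hi1D : (i - 1) + 1 ≤ D := by omega
  have hi1 : (i - 1) + 1 = i := by omega
  have hkim := hkpos (i-1) (by omega)
  have hki := hkpos i (by omega)
  have hkip := hkpos (i+1) (by omega)
  have hs1 := hstep i hiD
  have hs0 := hstep (i-1) hi1D
  rw [hi1] at hs0
  -- coefficient bounds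
  obtain ⟨hbi, hbi', _, _, _⟩ := hratio i hiD
  obtain ⟨_, _, hci, hci', _⟩ := hratio (i-1) hi1D
  rw [hi1] at hci hci'
  have hbR : (1:ℝ) ≤ (b i : ℝ) := by exact_mod_cast hbi
  have hbR' : (b i : ℝ) ≤ (κ:ℝ) := by exact_mod_cast hbi'.le
  have hcR : (1:ℝ) ≤ (c i : ℝ) := by exact_mod_cast hci
  have hcR' : (c i : ℝ) ≤ (κ:ℝ) := by exact_mod_cast hci'.le
  have haR : (a i : ℝ) ≤ (κ:ℝ) := by
    have hsum := hcoef i h1 h2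
    have : a i ≤ κ := by omega
    exact_mod_cast this
  have haθ : |(a i : ℝ) - θ| ≤ 2 * (κ:ℝ) := by
    have ha0 : (0:ℝ) ≤ (a i : ℝ) := Nat.cast_nonneg _
    rw [abs_le] at hθ ⊢
    constructor <;> nlinarith
  have hrec' := hrec i h1 h2
  -- bound on |u (i+1)|
  have hup : |u (i+1)| ≤ 3 * (κ:ℝ) * max |u i| |u (i-1)| := by
    have key : (b i : ℝ) * u (i+1) = -((c i : ℝ) * u (i-1) + ((a i : ℝ) - θ) * u i) := by
      linarith
    have h3 : |u (i+1)| ≤ |(b i : ℝ) * u (i+1)| := by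
      rw [abs_mul, abs_of_nonneg (by linarith : (0:ℝ) ≤ (b i:ℝ))]
      exact le_mul_of_one_le_left (abs_nonneg _) hbR
    have h4 : |(b i : ℝ) * u (i+1)| ≤ (c i : ℝ) * |u (i-1)| + |(a i:ℝ) - θ| * |u i| := by
      rw [key, abs_neg]
      calc |(c i : ℝ) * u (i-1) + ((a i : ℝ) - θ) * u i|
          ≤ |(c i : ℝ) * u (i-1)| + |((a i : ℝ) - θ) * u i| := abs_add_le _ _
        _ = (c i : ℝ) * |u (i-1)| + |(a i:ℝ) - θ| * |u i| := by
            rw [abs_mul, abs_mul, abs_of_nonneg (by linarith : (0:ℝ) ≤ (c i:ℝ))]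
    have hm1 : |u (i-1)| ≤ max |u i| |u (i-1)| := le_max_right _ _
    have hm2 : |u i| ≤ max |u i| |u (i-1)| := le_max_left _ _
    have t1 : (c i : ℝ) * |u (i-1)| ≤ (κ:ℝ) * max |u i| |u (i-1)| :=
      mul_le_mul hcR' hm1 (abs_nonneg _) hκ0.le
    have t2 : |(a i:ℝ) - θ| * |u i| ≤ (2*(κ:ℝ)) * max |u i| |u (i-1)| :=
      mul_le_mul haθ hm2 (abs_nonneg _) (by linarith)
    linarith
  -- bound on |u (i-1)|
  have hdown : |u (i-1)| ≤ 3 * (κ:ℝ) * max |u i| |u (i+1)| := by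
    have key : (c i : ℝ) * u (i-1) = -((b i : ℝ) * u (i+1) + ((a i : ℝ) - θ) * u i) := by
      linarith
    have h3 : |u (i-1)| ≤ |(c i : ℝ) * u (i-1)| := by
      rw [abs_mul, abs_of_nonneg (by linarith : (0:ℝ) ≤ (c i:ℝ))]
      exact le_mul_of_one_le_left (abs_nonneg _) hcR
    have h4 : |(c i : ℝ) * u (i-1)| ≤ (b i : ℝ) * |u (i+1)| + |(a i:ℝ) - θ| * |u i| := by
      rw [key, abs_neg]
      calc |(b i : ℝ) * u (i+1) + ((a i : ℝ) - θ) * u i|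
          ≤ |(b i : ℝ) * u (i+1)| + |((a i : ℝ) - θ) * u i| := abs_add_le _ _
        _ = (b i : ℝ) * |u (i+1)| + |(a i:ℝ) - θ| * |u i| := by
            rw [abs_mul, abs_mul, abs_of_nonneg (by linarith : (0:ℝ) ≤ (b i:ℝ))]
    have hm1 : |u (i+1)| ≤ max |u i| |u (i+1)| := le_max_right _ _
    have hm2 : |u i| ≤ max |u i| |u (i+1)| := le_max_left _ _
    have t1 : (b i : ℝ) * |u (i+1)| ≤ (κ:ℝ) * max |u i| |u (i+1)| :=
      mul_le_mul hbR' hm1 (abs_nonneg _) hκ0.le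
    have t2 : |(a i:ℝ) - θ| * |u i| ≤ (2*(κ:ℝ)) * max |u i| |u (i+1)| :=
      mul_le_mul haθ hm2 (abs_nonneg _) (by linarith)
    linarith
  have hκ1 : (1:ℝ) ≤ (κ:ℝ) := by linarith
  have hbig : (1:ℝ) ≤ 9 * (κ:ℝ)^4 := by
    have h4 : (1:ℝ) ≤ (κ:ℝ)^4 := one_le_pow₀ hκ1
    linarith
  constructor
  · -- lower bound: max(k(i-1)u(i-1)², k i u i²) ≤ 9κ⁴ * max(k i u i², k(i+1)u(i+1)²)
    have hA : k (i-1) * (u (i-1))^2 ≤ 9 * (κ:ℝ)^4 * max (k i * (u i)^2) (k (i+1) * (u (i+1))^2) := by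
      apply aux17 _ _ _ _ _ _ _ hκ1 hki.le hkip.le _ _ hdown
      · linarith [hs0.2]
      · nlinarith [hs0.2, hs1.2, hkip]
    have hB : k i * (u i)^2 ≤ 9 * (κ:ℝ)^4 * max (k i * (u i)^2) (k (i+1) * (u (i+1))^2) := by
      have : k i * (u i)^2 ≤ max (k i * (u i)^2) (k (i+1) * (u (i+1))^2) := le_max_left _ _
      nlinarith [le_max_left (k i * (u i)^2) (k (i+1) * (u (i+1))^2),
        le_trans (mul_nonneg hki.le (sq_nonneg (u i))) (le_max_left (k i * (u i)^2) (k (i+1) * (u (i+1))^2))]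
    have hM := max_le hA hB
    rw [one_div, inv_mul_le_iff₀ (by positivity : (0:ℝ) < 9 * (κ:ℝ)^4)]
    exact hM
  · have hA : k (i+1) * (u (i+1))^2 ≤ 9 * (κ:ℝ)^4 * max (k i * (u i)^2) (k (i-1) * (u (i-1))^2) := by
      apply aux17 _ _ _ _ _ _ _ hκ1 hki.le hkim.le _ _ hup
      · linarith [hs1.1]
      · nlinarith [hs1.1, hs0.1, hkim]
    have hB : k i * (u i)^2 ≤ 9 * (κ:ℝ)^4 * max (k i * (u i)^2) (k (i-1) * (u (i-1))^2) := by
      nlinarith [le_max_left (k i * (u i)^2) (k (i-1) * (u (i-1))^2),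
        le_trans (mul_nonneg hki.le (sq_nonneg (u i))) (le_max_left (k i * (u i)^2) (k (i-1) * (u (i-1))^2))]
    have hM := max_le hB hA
    rw [max_comm (k (i-1) * (u (i-1))^2) (k i * (u i)^2)]
    exact hM
end

section
/- Let Γ be a distance-regular graph with head h_Γ := |{1 ≤ j ≤ D-1 : (cⱼ, aⱼ, bⱼ) = (c₁, a₁, b₁)}| and tail t_Γ := |{h_Γ < j ≤ D-1 : (cⱼ, aⱼ, bⱼ) = (b₁, a₁, c₁)}|. Then t_Γ ≤ h_Γ, and moreover if t_Γ ≥ 1 then (c_j, a_j, b_j) = (b₁, a₁, 1) for all D - t_Γ ≤ j ≤ D-1. -/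
namespace DRGaux

open SimpleGraph

variable {V : Type*} [Fintype V] {G : SimpleGraph V}

lemma exists_walk_to_getVert {u v : V} (p : G.Walk u v) (n : ℕ) :
    ∃ q : G.Walk u (p.getVert n), q.length = min n p.length := by
  induction p generalizing n with
  | nil =>
    refine ⟨Walk.nil.copy rfl ?_, by simp⟩
    exact (Walk.getVert_of_length_le _ (by simp)).symm
  | cons h q ih =>
    cases n with
    | zero =>
      exact ⟨Walk.nil.copy rfl (Walk.getVert_zero _).symm, by simp⟩
    | succ n =>
      obtain ⟨q', hq'⟩ := ih n
      refine ⟨(q'.cons h).copy rfl (Walk.getVert_cons_succ _ _).symm, ?_⟩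
      simp [hq']

lemma exists_walk_from_getVert {u v : V} (p : G.Walk u v) (n : ℕ) :
    ∃ r : G.Walk (p.getVert n) v, r.length = p.length - n := by
  induction p generalizing n with
  | nil =>
    refine ⟨Walk.nil.copy ?_ rfl, by simp⟩
    exact (Walk.getVert_of_length_le _ (by simp)).symm
  | cons h q ih =>
    cases n with
    | zero =>
      exact ⟨(q.cons h).copy (Walk.getVert_zero _).symm rfl, by simp⟩
    | succ n =>
      obtain ⟨r, hr⟩ := ih n
      exact ⟨r.copy (Walk.getVert_cons_succ _ _).symm rfl, by simp [hr]⟩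

lemma dist_getVert (hconn : G.Connected) {x y : V} (p : G.Walk x y)
    (hp : p.length = G.dist x y) {n : ℕ} (hn : n ≤ p.length) :
    G.dist x (p.getVert n) = n ∧ G.dist (p.getVert n) y = p.length - n := by
  obtain ⟨q, hq⟩ := exists_walk_to_getVert p n
  obtain ⟨r, hr⟩ := exists_walk_from_getVert p n
  have h1 : G.dist x (p.getVert n) ≤ n := by
    have := SimpleGraph.dist_le q
    rw [hq] at this
    exact this.trans (min_le_left _ _)
  have h2 : G.dist (p.getVert n) y ≤ p.length - n := hr ▸ SimpleGraph.dist_le r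
  have h3 := hconn.dist_triangle (u := x) (v := p.getVert n) (w := y)
  constructor <;> omega

lemma exists_mid (hconn : G.Connected) {x y : V} {k : ℕ} (hk : k ≤ G.dist x y) :
    ∃ z, G.dist x z = k ∧ G.dist z y = G.dist x y - k := by
  obtain ⟨p, hp⟩ := hconn.exists_walk_length_eq_dist x y
  have := dist_getVert hconn p hp (n := k) (by omega)
  exact ⟨p.getVert k, this.1, by rw [this.2, hp]⟩

section DRG

variable {D : ℕ} {c a b : ℕ → ℕ} (hdrg : IsDRG G D c a b)

include hdrg

lemma exists_pair {i : ℕ} (hi : i ≤ D) : ∃ x y : V, G.dist x y = i := by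
  obtain ⟨x, y, hxy⟩ := hdrg.2.2.1
  obtain ⟨z, hz, -⟩ := exists_mid hdrg.1 (x := x) (y := y) (k := i) (by omega)
  exact ⟨x, z, hz⟩

lemma c_pos {i : ℕ} (h1 : 1 ≤ i) (h2 : i ≤ D) : 1 ≤ c i := by
  obtain ⟨x, y, hxy⟩ := exists_pair hdrg h2
  obtain ⟨p, hp⟩ := hdrg.1.exists_walk_length_eq_dist x y
  have hlen : p.length = i := by rw [hp, hxy]
  have hz := dist_getVert hdrg.1 p hp (n := i - 1) (by omega)
  have hadj : G.Adj (p.getVert (i - 1)) (p.getVert (i - 1 + 1)) :=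
    p.adj_getVert_succ (by omega)
  have hy : p.getVert (i - 1 + 1) = y := by
    have : i - 1 + 1 = p.length := by omega
    rw [this, Walk.getVert_length]
  rw [hy] at hadj
  have hC := (hdrg.2.2.2 x y i hxy h2).1
  have hne : {z : V | G.Adj y z ∧ G.dist x z + 1 = i}.Nonempty :=
    ⟨p.getVert (i - 1), hadj.symm, by omega⟩
  rw [← hC]
  exact (Set.ncard_pos (Set.toFinite _)).mpr hne

lemma b_pos {i : ℕ} (h2 : i + 1 ≤ D) : 1 ≤ b i := by
  obtain ⟨x, y, hxy⟩ := exists_pair hdrg h2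
  obtain ⟨p, hp⟩ := hdrg.1.exists_walk_length_eq_dist x y
  have hlen : p.length = i + 1 := by rw [hp, hxy]
  have hz := dist_getVert hdrg.1 p hp (n := i) (by omega)
  have hadj : G.Adj (p.getVert i) (p.getVert (i + 1)) :=
    p.adj_getVert_succ (by omega)
  have hw := dist_getVert hdrg.1 p hp (n := i + 1) (by omega)
  have hB := (hdrg.2.2.2 x (p.getVert i) i hz.1 (by omega)).2.2
  have hne : {z : V | G.Adj (p.getVert i) z ∧ G.dist x z = i + 1}.Nonempty :=
    ⟨p.getVert (i + 1), hadj, hw.1⟩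
  rw [← hB]
  exact (Set.ncard_pos (Set.toFinite _)).mpr hne

lemma adj_dist_one {u v : V} (huv : G.Adj u v) : G.dist u v = 1 :=
  dist_eq_one_iff_adj.mpr huv

lemma c_mono_step {i : ℕ} (h2 : i + 1 ≤ D) : c i ≤ c (i + 1) := by
  obtain ⟨x, y, hxy⟩ := exists_pair hdrg h2
  obtain ⟨p, hp⟩ := hdrg.1.exists_walk_length_eq_dist x y
  have hlen : p.length = i + 1 := by rw [hp, hxy]
  have hadj : G.Adj x (p.getVert 1) := by
    have := p.adj_getVert_succ (i := 0) (by omega)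
    rwa [Walk.getVert_zero] at this
  have hx'y : G.dist (p.getVert 1) y = i := by
    have := (dist_getVert hdrg.1 p hp (n := 1) (by omega)).2
    omega
  have hC1 := (hdrg.2.2.2 (p.getVert 1) y i hx'y (by omega)).1
  have hC2 := (hdrg.2.2.2 x y (i + 1) hxy h2).1
  rw [← hC1, ← hC2]
  refine Set.ncard_le_ncard ?_ (Set.toFinite _)
  rintro w ⟨hyw, hw⟩
  refine ⟨hyw, ?_⟩
  have t1 : G.dist x w ≤ G.dist x (p.getVert 1) + G.dist (p.getVert 1) w := hdrg.1.dist_triangle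
  have t2 : G.dist x y ≤ G.dist x w + G.dist w y := hdrg.1.dist_triangle
  have e1 : G.dist x (p.getVert 1) = 1 := adj_dist_one hdrg hadj
  have e2 : G.dist w y = 1 := by
    rw [SimpleGraph.dist_comm]; exact adj_dist_one hdrg hyw
  omega

lemma b_anti_step {i : ℕ} (h2 : i + 1 ≤ D) : b (i + 1) ≤ b i := by
  obtain ⟨x, y, hxy⟩ := exists_pair hdrg h2
  obtain ⟨p, hp⟩ := hdrg.1.exists_walk_length_eq_dist x y
  have hlen : p.length = i + 1 := by rw [hp, hxy]
  have hadj : G.Adj x (p.getVert 1) := by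
    have := p.adj_getVert_succ (i := 0) (by omega)
    rwa [Walk.getVert_zero] at this
  have hx'y : G.dist (p.getVert 1) y = i := by
    have := (dist_getVert hdrg.1 p hp (n := 1) (by omega)).2
    omega
  have hB1 := (hdrg.2.2.2 (p.getVert 1) y i hx'y (by omega)).2.2
  have hB2 := (hdrg.2.2.2 x y (i + 1) hxy h2).2.2
  rw [← hB1, ← hB2]
  refine Set.ncard_le_ncard ?_ (Set.toFinite _)
  rintro w ⟨hyw, hw⟩
  refine ⟨hyw, ?_⟩
  have t1 : G.dist (p.getVert 1) w ≤ G.dist (p.getVert 1) y + G.dist y w := hdrg.1.dist_triangle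
  have t2 : G.dist x w ≤ G.dist x (p.getVert 1) + G.dist (p.getVert 1) w := hdrg.1.dist_triangle
  have e1 : G.dist x (p.getVert 1) = 1 := adj_dist_one hdrg hadj
  have e2 : G.dist y w = 1 := adj_dist_one hdrg hyw
  omega

lemma c_mono {i j : ℕ} (hij : i ≤ j) (hj : j ≤ D) : c i ≤ c j := by
  induction j, hij using Nat.le_induction with
  | base => exact le_refl _
  | succ n hn ih => exact le_trans (ih (by omega)) (c_mono_step hdrg hj)

lemma b_anti {i j : ℕ} (hij : i ≤ j) (hj : j ≤ D) : b j ≤ b i := by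
  induction j, hij using Nat.le_induction with
  | base => exact le_refl _
  | succ n hn ih => exact le_trans (b_anti_step hdrg hj) (ih (by omega))

lemma c_le_b {i j : ℕ} (h1 : 1 ≤ i) (h2 : i + j ≤ D) : c i ≤ b j := by
  obtain ⟨x, y, hxy⟩ := exists_pair hdrg h2
  obtain ⟨z, hz1, hz2⟩ := exists_mid hdrg.1 (x := x) (y := y) (k := i) (by omega)
  have hz2' : G.dist z y = j := by omega
  have hyz : G.dist y z = j := by rw [SimpleGraph.dist_comm]; exact hz2'
  have hC := (hdrg.2.2.2 x z i hz1 (by omega)).1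
  have hB := (hdrg.2.2.2 y z j hyz (by omega)).2.2
  rw [← hC, ← hB]
  refine Set.ncard_le_ncard ?_ (Set.toFinite _)
  rintro w ⟨hzw, hw⟩
  refine ⟨hzw, ?_⟩
  have t1 : G.dist y x ≤ G.dist y w + G.dist w x := hdrg.1.dist_triangle
  have t2 : G.dist y w ≤ G.dist y z + G.dist z w := hdrg.1.dist_triangle
  have e1 : G.dist z w = 1 := adj_dist_one hdrg hzw
  have e2 : G.dist y x = i + j := by rw [SimpleGraph.dist_comm]; exact hxy
  have e3 : G.dist w x = G.dist x w := SimpleGraph.dist_comm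
  omega

lemma sum_eq {i : ℕ} (hi : i ≤ D) : c i + a i + b i = b 0 := by
  obtain ⟨x, y, hxy⟩ := exists_pair hdrg hi
  have hyy : G.dist y y = 0 := by simp
  have hb0 := (hdrg.2.2.2 y y 0 hyy (by omega)).2.2
  have htriple := hdrg.2.2.2 x y i hxy hi
  set C : Set V := {z : V | G.Adj y z ∧ G.dist x z + 1 = i} with hCdef
  set A : Set V := {z : V | G.Adj y z ∧ G.dist x z = i} with hAdef
  set B : Set V := {z : V | G.Adj y z ∧ G.dist x z = i + 1} with hBdef
  have hN : {z : V | G.Adj y z ∧ G.dist y z = 0 + 1} = C ∪ (A ∪ B) := by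
    ext z
    simp only [hCdef, hAdef, hBdef, Set.mem_setOf_eq, Set.mem_union]
    constructor
    · rintro ⟨hyz, -⟩
      have t1 : G.dist x z ≤ G.dist x y + G.dist y z := hdrg.1.dist_triangle
      have t2 : G.dist x y ≤ G.dist x z + G.dist z y := hdrg.1.dist_triangle
      have e1 : G.dist y z = 1 := adj_dist_one hdrg hyz
      have e2 : G.dist z y = 1 := by rw [SimpleGraph.dist_comm]; exact e1
      rcases Nat.lt_trichotomy (G.dist x z) i with hlt | heq | hgt
      · exact Or.inl ⟨hyz, by omega⟩
      · exact Or.inr (Or.inl ⟨hyz, heq⟩)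
      · exact Or.inr (Or.inr ⟨hyz, by omega⟩)
    · rintro (⟨hyz, -⟩ | ⟨hyz, -⟩ | ⟨hyz, -⟩) <;>
        exact ⟨hyz, by rw [adj_dist_one hdrg hyz]⟩
  have hd1 : Disjoint A B := by
    rw [Set.disjoint_left]
    rintro z ⟨-, h1⟩ ⟨-, h2⟩
    omega
  have hd2 : Disjoint C (A ∪ B) := by
    rw [Set.disjoint_left]
    rintro z ⟨-, h1⟩ (⟨-, h2⟩ | ⟨-, h2⟩) <;> omega
  have := hb0
  rw [hN] at this
  rw [Set.ncard_union_eq hd2 (Set.toFinite _) (Set.toFinite _),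
    Set.ncard_union_eq hd1 (Set.toFinite _) (Set.toFinite _)] at this
  rw [htriple.1, htriple.2.1, htriple.2.2] at this
  omega

end DRG

end DRGaux

/-- the tail of a distance-regular graph is at most its head, and if the
tail is nonzero then the last `t` triples (before index `D`) equal `(b₁, a₁, 1)`. -/
theorem stmt_18 {V : Type*} [Fintype V] (G : SimpleGraph V) (D : ℕ)
    (c a b : ℕ → ℕ) (hD : 1 ≤ D) (hc1 : c 1 = 1)
    (hdrg : IsDRG G D c a b)
    (h t : ℕ)
    (hh : h = ((Finset.Icc 1 (D - 1)).filter
        (fun j => (c j, a j, b j) = (c 1, a 1, b 1))).card)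
    (ht : t = ((Finset.Icc (h + 1) (D - 1)).filter
        (fun j => (c j, a j, b j) = (b 1, a 1, c 1))).card) :
    t ≤ h ∧ (1 ≤ t → ∀ j, D - t ≤ j → j ≤ D - 1 → (c j, a j, b j) = (b 1, a 1, 1)) := by
  classical
  -- basic facts
  have hsum1 : c 1 + a 1 + b 1 = b 0 := DRGaux.sum_eq hdrg hD
  rcases Nat.eq_or_lt_of_le (Nat.zero_le t) with ht0 | ht1
  · -- t = 0 : everything trivial
    refine ⟨by omega, ?_⟩
    intro h1t
    omega
  -- t ≥ 1
  have hconn := hdrg.1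
  set St := ((Finset.Icc (h + 1) (D - 1)).filter
      (fun j => (c j, a j, b j) = (b 1, a 1, c 1))) with hSt
  have hStne : St.Nonempty := by
    rw [← Finset.card_pos, ← ht]; omega
  set j₀ := St.min' hStne with hj₀
  have hj₀mem : j₀ ∈ St := St.min'_mem hStne
  rw [hSt, Finset.mem_filter, Finset.mem_Icc] at hj₀mem
  obtain ⟨⟨hj₀1, hj₀2⟩, hj₀3⟩ := hj₀mem
  obtain ⟨hc0, ha0, hb0t⟩ : c j₀ = b 1 ∧ a j₀ = a 1 ∧ b j₀ = c 1 := by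
    simpa [Prod.ext_iff] using hj₀3
  -- everything from j₀ on has the tail triple
  have tailup : ∀ i, j₀ ≤ i → i ≤ D - 1 → c i = b 1 ∧ a i = a 1 ∧ b i = 1 := by
    intro i hi1 hi2
    have hiD : i + 1 ≤ D := by omega
    have hbi1 : b i ≤ 1 := by
      have := DRGaux.b_anti hdrg hi1 (show i ≤ D by omega)
      omega
    have hbi2 : 1 ≤ b i := DRGaux.b_pos hdrg hiD
    have hci1 : b 1 ≤ c i := by
      have := DRGaux.c_mono hdrg hi1 (show i ≤ D by omega)
      omega
    have hci2 : c i ≤ b 1 :=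
      DRGaux.c_le_b hdrg (show 1 ≤ i by omega) (show i + 1 ≤ D by omega)
    have hsumi := DRGaux.sum_eq hdrg (show i ≤ D by omega)
    exact ⟨by omega, by omega, by omega⟩
  -- St is exactly the interval [j₀, D-1]
  have hSteq : St = Finset.Icc j₀ (D - 1) := by
    apply Finset.Subset.antisymm
    · intro i hi
      have h1 := Finset.min'_le St i hi
      rw [hSt, Finset.mem_filter, Finset.mem_Icc] at hi
      rw [Finset.mem_Icc]
      exact ⟨h1, hi.1.2⟩
    · intro i hi
      rw [Finset.mem_Icc] at hi
      obtain ⟨hci, hai, hbi⟩ := tailup i hi.1 hi.2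
      rw [hSt, Finset.mem_filter, Finset.mem_Icc]
      refine ⟨⟨by omega, hi.2⟩, ?_⟩
      simp [Prod.ext_iff, hci, hai, hbi, hc1]
  have hcard : t = D - j₀ := by
    rw [ht, hSteq, Nat.card_Icc]
    omega
  have hj₀val : j₀ = D - t := by omega
  have htle : t ≤ D - 1 - h := by
    have h1 : St.card ≤ (Finset.Icc (h + 1) (D - 1)).card := by
      rw [hSt]; exact Finset.card_filter_le _ _
    rw [Nat.card_Icc] at h1
    omega
  -- the head contains [1, t]
  have headup : ∀ i, 1 ≤ i → i ≤ t → c i = 1 ∧ a i = a 1 ∧ b i = b 1 := by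
    intro i hi1 hi2
    have hiD1 : i ≤ D - 1 := by omega
    have htail := tailup (D - i) (by omega) (by omega)
    have hci1 : c i ≤ b (D - i) :=
      DRGaux.c_le_b hdrg hi1 (by omega)
    have hci2 : 1 ≤ c i := DRGaux.c_pos hdrg hi1 (by omega)
    have hbi1 : c (D - i) ≤ b i :=
      DRGaux.c_le_b hdrg (show 1 ≤ D - i by omega) (by omega)
    have hbi2 : b i ≤ b 1 := DRGaux.b_anti hdrg hi1 (by omega)
    have hsumi := DRGaux.sum_eq hdrg (show i ≤ D by omega)
    obtain ⟨e1, e2, e3⟩ := htail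
    exact ⟨by omega, by omega, by omega⟩
  have hhle : t ≤ h := by
    have hsub : Finset.Icc 1 t ⊆ ((Finset.Icc 1 (D - 1)).filter
        (fun j => (c j, a j, b j) = (c 1, a 1, b 1))) := by
      intro i hi
      rw [Finset.mem_Icc] at hi
      obtain ⟨e1, e2, e3⟩ := headup i hi.1 hi.2
      rw [Finset.mem_filter, Finset.mem_Icc]
      refine ⟨⟨hi.1, by omega⟩, ?_⟩
      simp [Prod.ext_iff, e1, e2, e3, hc1]
    have := Finset.card_le_card hsub
    rw [Nat.card_Icc] at this
    omega
  refine ⟨hhle, fun _ j hj1 hj2 => ?_⟩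
  obtain ⟨e1, e2, e3⟩ := tailup j (by omega) hj2
  simp [Prod.ext_iff, e1, e2, e3]
end
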